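/- arXiv:2203.02307 — 16 statements merged into one kernel-verified Lean document; each statement's English description precedes it below -/
import Mathlib

section
/- If G is a group and N is a subgroup of G such that N·G' = G (where G' is the derived subgroup), then for every i ≥ 1 the inclusion N ↪ G induces a surjective homomorphism N/γ_i(N) → G/γ_i(G), where γ_i denotes the i-th term of the lower central series. -/
open scoped Pointwise
open scoped commutatorElement

lemma aux_left {Q : Type*} [Group Q] (a b c : Q)
    (hc : ∀ x : Q, c * x = x * c) : ⁅a * c, b⁆ = ⁅a, b⁆ := by
  have h1 : c * b * c⁻¹ = b := by rw [hc b]; group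
  calc ⁅a * c, b⁆ = a * (c * b * c⁻¹) * a⁻¹ * b⁻¹ := by group
    _ = a * b * a⁻¹ * b⁻¹ := by rw [h1]
    _ = ⁅a, b⁆ := (commutatorElement_def a b).symm

lemma aux_right {Q : Type*} [Group Q] (a b d : Q)
    (hd : ∀ x : Q, d * x = x * d) : ⁅a, b * d⁆ = ⁅a, b⁆ := by
  have h1 : d * a⁻¹ * d⁻¹ = a⁻¹ := by rw [hd a⁻¹]; group
  calc ⁅a, b * d⁆ = a * b * (d * a⁻¹ * d⁻¹) * b⁻¹ := by group
    _ = a * b * a⁻¹ * b⁻¹ := by rw [h1]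
    _ = ⁅a, b⁆ := (commutatorElement_def a b).symm

lemma aux_key {G : Type*} [Group G] (N : Subgroup G)
    (h : N ⊔ commutator G = ⊤) (i : ℕ) :
    (⊤ : Subgroup G).lowerCentralSeries i ≤
        ((⊤ : Subgroup N).lowerCentralSeries i).map N.subtype ⊔ (⊤ : Subgroup G).lowerCentralSeries (i + 1) ∧
      N ⊔ (⊤ : Subgroup G).lowerCentralSeries i = ⊤ := by
  induction i with
  | zero =>
    constructor
    · rw [Subgroup.lowerCentralSeries_zero, Subgroup.lowerCentralSeries_zero, ← MonoidHom.range_eq_map, N.range_subtype,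
        Subgroup.top_lowerCentralSeries_one, h]
    · simp
  | succ i ih =>
    obtain ⟨hk, hs⟩ := ih
    have hMle : ((⊤ : Subgroup N).lowerCentralSeries i).map N.subtype ≤ N :=
      Subgroup.map_subtype_le _
    have hs' : N ⊔ (⊤ : Subgroup G).lowerCentralSeries (i + 1) = ⊤ := by
      rw [eq_top_iff]; refine le_trans hs.ge ?_; rw [sup_le_iff]
      refine ⟨le_sup_left, hk.trans (sup_le (hMle.trans le_sup_left) le_sup_right)⟩
    refine ⟨?_, hs'⟩
    set π := QuotientGroup.mk' ((⊤ : Subgroup G).lowerCentralSeries (i + 2)) with hπ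
    have hker : π.ker = (⊤ : Subgroup G).lowerCentralSeries (i + 2) := QuotientGroup.ker_mk' _
    have hdef : (⊤ : Subgroup G).lowerCentralSeries (i + 1) = ⁅(⊤ : Subgroup G).lowerCentralSeries i, ⊤⁆ := rfl
    rw [hdef, Subgroup.commutator_le]
    intro x hx g _
    suffices hsuf : π ⁅x, g⁆ ∈
        Subgroup.map π (((⊤ : Subgroup N).lowerCentralSeries (i + 1)).map N.subtype) by
      have h2 := Subgroup.mem_comap.mpr hsuf
      rwa [Subgroup.comap_map_eq, hker] at h2
    have hx' : x ∈ (((((⊤ : Subgroup N).lowerCentralSeries i).map N.subtype) : Set G) *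
        ((⊤ : Subgroup G).lowerCentralSeries (i + 1) : Set G)) := by
      rw [← Subgroup.mul_normal]; exact hk hx
    obtain ⟨m, hm, z, hz, rfl⟩ := hx'
    have hg' : g ∈ ((N : Set G) * ((⊤ : Subgroup G).lowerCentralSeries (i + 1) : Set G)) := by
      rw [← Subgroup.mul_normal, hs']; trivial
    obtain ⟨n, hn, w, hw, rfl⟩ := hg'
    have hcent : ∀ u ∈ (⊤ : Subgroup G).lowerCentralSeries (i + 1),
        ∀ q : G ⧸ (⊤ : Subgroup G).lowerCentralSeries (i + 2), π u * q = q * π u := by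
      intro u hu q
      obtain ⟨v, rfl⟩ := QuotientGroup.mk'_surjective _ q
      have hmem : ⁅u, v⁆ ∈ (⊤ : Subgroup G).lowerCentralSeries (i + 2) := by
        show ⁅u, v⁆ ∈ ⁅(⊤ : Subgroup G).lowerCentralSeries (i + 1), ⊤⁆
        exact Subgroup.commutator_mem_commutator hu (Subgroup.mem_top v)
      have h1 : π ⁅u, v⁆ = 1 := by rwa [← MonoidHom.mem_ker, hker]
      rw [map_commutatorElement] at h1
      exact commutatorElement_eq_one_iff_mul_comm.mp h1
    rw [map_commutatorElement, map_mul, map_mul,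
      aux_left (π m) (π n * π w) (π z) (hcent z hz),
      aux_right (π m) (π n) (π w) (hcent w hw)]
    obtain ⟨m', hm', rfl⟩ := hm
    have hmn : (⁅m', (⟨n, hn⟩ : N)⁆ : N) ∈ (⊤ : Subgroup N).lowerCentralSeries (i + 1) := by
      show _ ∈ ⁅(⊤ : Subgroup N).lowerCentralSeries i, ⊤⁆
      exact Subgroup.commutator_mem_commutator hm' (Subgroup.mem_top _)
    refine ⟨N.subtype ⁅m', (⟨n, hn⟩ : N)⁆, ⟨_, hmn, rfl⟩, ?_⟩
    rw [map_commutatorElement, map_commutatorElement]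
    rfl

/-- If `N·G' = G` then for every `i` the inclusion `N ↪ G` induces a surjection
`N/γ_i(N) → G/γ_i(G)`, i.e. every element of `G` is congruent to an element of `N`
modulo `γ_i(G)`.  (Here `(⊤ : Subgroup G).lowerCentralSeries 0 = G` corresponds to the paper's `γ₁`.) -/
theorem stmt0 {G : Type*} [Group G] (N : Subgroup G)
    (h : N ⊔ commutator G = ⊤) :
    ∀ i : ℕ, ∀ g : G, ∃ n ∈ N, n⁻¹ * g ∈ (⊤ : Subgroup G).lowerCentralSeries i := by
  intro i g
  have hs := (aux_key N h i).2
  have hg : g ∈ ((N : Set G) * ((⊤ : Subgroup G).lowerCentralSeries i : Set G)) := by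
    rw [← Subgroup.mul_normal, hs]; trivial
  obtain ⟨n, hn, z, hz, rfl⟩ := hg
  exact ⟨n, hn, by rwa [inv_mul_cancel_left]⟩
end

section
/- Let G be a nilpotent group and N a subgroup such that G^m ≤ N·G' for some positive integer m (G^m denoting the subgroup generated by all m-th powers). Then there exists a positive integer n whose prime divisors all divide m such that G^n ≤ N. -/
/-- The subgroup generated by all `n`-th powers. -/
def subgroupPow (G : Type*) [Group G] (n : ℕ) : Subgroup G :=
  Subgroup.closure {x : G | ∃ g : G, x = g ^ n}

/-!
Induct along the lower central series `γ₁ = G' ≥ γ₂ ≥ ⋯`: if every `g ^ k` lies in `N γᵢ`, then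
every `g ^ (k ^ 3)` lies in `N γᵢ₊₁`. Modulo `γᵢ₊₁` the group `γᵢ` is central and generated by
commutators `⁅a, g⁆` with `a ∈ γᵢ₋₁`, and these are bilinear there; writing `g ^ k = u z` and
`a ^ k = v w` with `u, v ∈ N` and `z, w` central gives
`⁅a, g⁆ ^ (k ^ 2) = ⁅a ^ k, g ^ k⁆ = ⁅v, u⁆ ∈ N`, so `g ^ (k ^ 3) = u ^ (k ^ 2) z ^ (k ^ 2) ∈ N`.
Starting from `k = m`, this gives `G ^ (m ^ 3 ^ c) ≤ N` for a group of class `c`.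
-/

open Subgroup commutatorElement

section

variable {G : Type*} [Group G]

lemma subgroupPow_le_iff {n : ℕ} {H : Subgroup G} :
    subgroupPow G n ≤ H ↔ ∀ g : G, g ^ n ∈ H := by
  rw [subgroupPow, closure_le]
  exact ⟨fun h g => h ⟨g, rfl⟩, by rintro h _ ⟨g, rfl⟩; exact h g⟩

section Commutator

variable {a b x z : G}

lemma commutatorElement_mul_right_of_commute (h : Commute a z) : ⁅a, b * z⁆ = ⁅a, b⁆ := by
  calc ⁅a, b * z⁆ = a * b * (z * a⁻¹) * z⁻¹ * b⁻¹ := by simp only [commutatorElement_def]; group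
    _ = a * b * (a⁻¹ * z) * z⁻¹ * b⁻¹ := by rw [h.inv_left.eq]
    _ = ⁅a, b⁆ := by simp only [commutatorElement_def]; group

lemma commutatorElement_mul_left_of_commute (h : Commute z b) : ⁅a * z, b⁆ = ⁅a, b⁆ := by
  calc ⁅a * z, b⁆ = a * (z * b) * z⁻¹ * a⁻¹ * b⁻¹ := by simp only [commutatorElement_def]; group
    _ = a * (b * z) * z⁻¹ * a⁻¹ * b⁻¹ := by rw [h.eq]
    _ = ⁅a, b⁆ := by simp only [commutatorElement_def]; group

lemma commutatorElement_pow_right (h : ∀ j : ℕ, Commute ⁅a, x ^ j⁆ x) (n : ℕ) :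
    ⁅a, x ^ n⁆ = ⁅a, x⁆ ^ n := by
  induction n with
  | zero => simp
  | succ n ih =>
    calc ⁅a, x ^ (n + 1)⁆ = a * x * a⁻¹ * (⁅a, x ^ n⁆ * x⁻¹) := by
          simp only [commutatorElement_def, pow_succ']; group
      _ = a * x * a⁻¹ * (x⁻¹ * ⁅a, x ^ n⁆) := by rw [(h n).inv_right.eq]
      _ = ⁅a, x⁆ ^ (n + 1) := by rw [pow_succ', ← ih, commutatorElement_def]; group

lemma commutatorElement_pow_left (h : ∀ j : ℕ, Commute ⁅x ^ j, b⁆ x) (n : ℕ) :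
    ⁅x ^ n, b⁆ = ⁅x, b⁆ ^ n := by
  induction n with
  | zero => simp
  | succ n ih =>
    calc ⁅x ^ (n + 1), b⁆ = x * ⁅x ^ n, b⁆ * (b * x⁻¹ * b⁻¹) := by
          simp only [commutatorElement_def, pow_succ']; group
      _ = ⁅x ^ n, b⁆ * x * (b * x⁻¹ * b⁻¹) := by rw [(h n).eq]
      _ = ⁅x, b⁆ ^ (n + 1) := by rw [pow_succ, ih, commutatorElement_def]; group

end Commutator

section CentralStep

variable {K N : Subgroup G} {n : ℕ}

lemma commute_of_mem_commutator_top (hcen : ⁅K, ⊤⁆ ≤ center G) {z : G}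
    (hz : z ∈ ⁅K, (⊤ : Subgroup G)⁆) (y : G) : Commute z y :=
  (mem_center_iff.1 (hcen hz) y).symm

lemma commutatorElement_pow_sq_mem [K.Normal] (hcen : ⁅K, ⊤⁆ ≤ center G)
    (h : ∀ g : G, g ^ n ∈ N ⊔ ⁅K, ⊤⁆) {a : G} (ha : a ∈ K) (g : G) :
    ⁅a, g⁆ ^ (n ^ 2) ∈ N := by
  have central {z : G} (hz : z ∈ ⁅K, (⊤ : Subgroup G)⁆) (y : G) :=
    commute_of_mem_commutator_top hcen hz y
  obtain ⟨u, hu, z, hz, hg⟩ := mem_sup_of_normal_right.1 (h g)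
  obtain ⟨v, hv, w, hw, ha'⟩ := mem_sup_of_normal_right.1 (h a)
  have hgu : ⁅a, g⁆ ^ n = ⁅a, u⁆ := by
    rw [← commutatorElement_pow_right
        (fun j => central (commutator_mem_commutator ha (mem_top (g ^ j))) g),
      ← hg, commutatorElement_mul_right_of_commute (central hz a).symm]
  have hav : ⁅a, u⁆ ^ n = ⁅v, u⁆ := by
    rw [← commutatorElement_pow_left
        (fun j => central (commutator_mem_commutator (K.pow_mem ha j) (mem_top u)) a),
      ← ha', commutatorElement_mul_left_of_commute (central hw u)]
  rw [sq, pow_mul, hgu, hav, commutatorElement_def]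
  exact N.mul_mem (N.mul_mem (N.mul_mem hv hu) (N.inv_mem hv)) (N.inv_mem hu)

lemma pow_sq_mem_of_mem_commutator_top [K.Normal] (hcen : ⁅K, ⊤⁆ ≤ center G)
    (h : ∀ g : G, g ^ n ∈ N ⊔ ⁅K, ⊤⁆) {z : G} (hz : z ∈ ⁅K, (⊤ : Subgroup G)⁆) :
    z ^ (n ^ 2) ∈ N := by
  induction hz using closure_induction with
  | mem _ hx =>
    obtain ⟨a, ha, g, -, rfl⟩ := hx
    exact commutatorElement_pow_sq_mem hcen h ha g
  | one => simp
  | mul x y hx _ ihx ihy =>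
    rw [(commute_of_mem_commutator_top hcen hx y).mul_pow]
    exact N.mul_mem ihx ihy
  | inv x _ ih =>
    rw [inv_pow]
    exact N.inv_mem ih

theorem pow_pow_three_mem_of_pow_mem_sup_commutator [K.Normal] (hcen : ⁅K, ⊤⁆ ≤ center G)
    (h : ∀ g : G, g ^ n ∈ N ⊔ ⁅K, ⊤⁆) (g : G) : g ^ (n ^ 3) ∈ N := by
  obtain ⟨u, hu, z, hz, hg⟩ := mem_sup_of_normal_right.1 (h g)
  rw [pow_succ', pow_mul, ← hg, (commute_of_mem_commutator_top hcen hz u).symm.mul_pow]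
  exact N.mul_mem (N.pow_mem hu _) (pow_sq_mem_of_mem_commutator_top hcen h hz)

end CentralStep

lemma map_top_lowerCentralSeries_of_surjective {H : Type*} [Group H] {f : G →* H}
    (hf : Function.Surjective f) (i : ℕ) :
    ((⊤ : Subgroup G).lowerCentralSeries i).map f = (⊤ : Subgroup H).lowerCentralSeries i := by
  rw [map_lowerCentralSeries, map_top_of_surjective f hf]

theorem pow_pow_three_pow_mem_sup_lowerCentralSeries {N : Subgroup G} {m : ℕ}
    (h : ∀ g : G, g ^ m ∈ N ⊔ commutator G) (i : ℕ) (g : G) :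
    g ^ (m ^ 3 ^ i) ∈ N ⊔ (⊤ : Subgroup G).lowerCentralSeries (i + 1) := by
  induction i generalizing g with
  | zero => rw [pow_zero, pow_one, zero_add, top_lowerCentralSeries_one]; exact h g
  | succ i ih =>
    let M := (⊤ : Subgroup G).lowerCentralSeries (i + 2)
    let f := QuotientGroup.mk' M
    have hf : Function.Surjective f := QuotientGroup.mk'_surjective M
    have hcen : ⁅(⊤ : Subgroup (G ⧸ M)).lowerCentralSeries i, ⊤⁆ ≤ center (G ⧸ M) := by
      rw [← centralizer_univ, ← coe_top, ← commutator_eq_bot_iff_le_centralizer,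
        ← Subgroup.lowerCentralSeries_succ, ← Subgroup.lowerCentralSeries_succ,
        ← map_top_lowerCentralSeries_of_surjective hf]
      exact QuotientGroup.map_mk'_self M
    have hQ (q : G ⧸ M) :
        q ^ (m ^ 3 ^ i) ∈ N.map f ⊔ ⁅(⊤ : Subgroup (G ⧸ M)).lowerCentralSeries i, ⊤⁆ := by
      obtain ⟨g, rfl⟩ := hf q
      rw [← Subgroup.lowerCentralSeries_succ, ← map_top_lowerCentralSeries_of_surjective hf,
        ← Subgroup.map_sup, ← map_pow]
      exact mem_map_of_mem f (ih g)
    have hgN := pow_pow_three_mem_of_pow_mem_sup_commutator hcen hQ (f g)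
    rw [← map_pow, ← mem_comap, QuotientGroup.comap_map_mk', sup_comm] at hgN
    rwa [pow_succ, pow_mul]

end

/-- If `G` is nilpotent, `N ≤ G` and `G^m ≤ N·G'` for some `m > 0`, then there is an
`n > 0` all of whose prime divisors divide `m` with `G^n ≤ N`. -/
theorem stmt1 {G : Type*} [Group G] [Group.IsNilpotent G] (N : Subgroup G)
    (m : ℕ) (hm : 0 < m) (h : subgroupPow G m ≤ N ⊔ commutator G) :
    ∃ n : ℕ, 0 < n ∧ (∀ p : ℕ, p.Prime → p ∣ n → p ∣ m) ∧ subgroupPow G n ≤ N := by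
  let c := Group.nilpotencyClass G
  have hbot : (⊤ : Subgroup G).lowerCentralSeries (c + 1) = ⊥ :=
    Subgroup.lowerCentralSeries_eq_bot_iff_nilpotencyClass_le.2 c.le_succ
  refine ⟨m ^ 3 ^ c, pow_pos hm _, fun p hp hpn => hp.dvd_of_dvd_pow hpn,
    subgroupPow_le_iff.2 fun g => ?_⟩
  have hg := pow_pow_three_pow_mem_sup_lowerCentralSeries (subgroupPow_le_iff.1 h) c g
  rwa [hbot, sup_bot_eq] at hg
end

section
/- Let G be a nilpotent group and N a subgroup such that G^m ≤ N·G' for some positive integer m. Then for every i ≥ 1 there exists a positive integer n_i whose prime divisors all divide m such that γ_i(G)^{n_i} ≤ γ_i(N). -/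
open Subgroup Function Pointwise
open scoped commutatorElement

section helpers

variable {G : Type*} [Group G]

lemma comm_mul_left_expand {b y : G} (hz : ∀ g : G, Commute ⁅b, y⁆ g) (a : G) :
    ⁅a * b, y⁆ = ⁅b, y⁆ * ⁅a, y⁆ := by
  have h1 : ⁅a * b, y⁆ = a * ⁅b, y⁆ * a⁻¹ * ⁅a, y⁆ := by group
  rw [h1, ← (hz a).eq]
  group

lemma comm_mul_right_expand {b y : G} (hz : ∀ g : G, Commute ⁅b, y⁆ g) (x : G) :
    ⁅b, x * y⁆ = ⁅b, x⁆ * ⁅b, y⁆ := by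
  have h1 : ⁅b, x * y⁆ = ⁅b, x⁆ * (x * ⁅b, y⁆ * x⁻¹) := by group
  rw [h1, ← (hz x).eq]
  group

lemma comm_central_mul_left {z x y : G} (hz : ∀ g : G, Commute z g) :
    ⁅x * z, y⁆ = ⁅x, y⁆ := by
  have h1 : ⁅x * z, y⁆ = x * (z * y * z⁻¹) * x⁻¹ * y⁻¹ := by group
  rw [h1, (hz y).eq]
  group

lemma comm_central_mul_right {z x y : G} (hz : ∀ g : G, Commute z g) :
    ⁅x, y * z⁆ = ⁅x, y⁆ := by
  have h1 : ⁅x, y * z⁆ = x * y * (z * x⁻¹ * z⁻¹) * x * (x⁻¹ * y⁻¹ * x⁻¹) * x := by group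
  rw [h1, (hz x⁻¹).eq]
  group

lemma comm_pow_left {Z T : Subgroup G} (hZ : ∀ z ∈ Z, ∀ g : G, Commute z g)
    (hT : ∀ y ∈ T, ∀ g : G, ⁅y, g⁆ ∈ Z) {a : G} (ha : a ∈ T) (y : G) (j : ℕ) :
    ⁅a ^ j, y⁆ = ⁅a, y⁆ ^ j := by
  induction j with
  | zero => simp
  | succ j ih =>
    rw [pow_succ' a j, comm_mul_left_expand (fun g => hZ _ (hT _ (pow_mem ha j) y) g) a, ih,
      ← pow_succ]

lemma comm_pow_right {Z T : Subgroup G} (hZ : ∀ z ∈ Z, ∀ g : G, Commute z g)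
    (hT : ∀ y ∈ T, ∀ g : G, ⁅y, g⁆ ∈ Z) {b : G} (hb : b ∈ T) (g : G) (j : ℕ) :
    ⁅b, g ^ j⁆ = ⁅b, g⁆ ^ j := by
  induction j with
  | zero => simp
  | succ j ih =>
    rw [pow_succ g j, comm_mul_right_expand (fun w => hZ _ (hT _ hb g) w) (g ^ j), ih, ← pow_succ]

lemma comm_pow_pow {Z T : Subgroup G} (hZ : ∀ z ∈ Z, ∀ g : G, Commute z g)
    (hT : ∀ y ∈ T, ∀ g : G, ⁅y, g⁆ ∈ Z) {a : G} (ha : a ∈ T) (g : G) (k₁ k₂ : ℕ) :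
    ⁅a ^ k₁, g ^ k₂⁆ = ⁅a, g⁆ ^ (k₁ * k₂) := by
  rw [comm_pow_left hZ hT ha _ k₁, comm_pow_right hZ hT ha g k₂, ← pow_mul, mul_comm k₂ k₁]

lemma map_subtype_top' (N : Subgroup G) : (⊤ : Subgroup N).map N.subtype = N := by
  rw [← MonoidHom.range_eq_map, N.range_subtype]

lemma lcs_succ_comm (H : Type*) [Group H] (i : ℕ) :
    (⊤ : Subgroup H).lowerCentralSeries (i + 1) = ⁅(⊤ : Subgroup H).lowerCentralSeries i, ⊤⁆ := rfl

lemma lcs_map_subtype_succ (N : Subgroup G) (i : ℕ) :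
    ((⊤ : Subgroup N).lowerCentralSeries (i + 1)).map N.subtype
      = ⁅((⊤ : Subgroup N).lowerCentralSeries i).map N.subtype, N⁆ := by
  rw [lcs_succ_comm, Subgroup.map_commutator, map_subtype_top']

lemma lcs_le_map_of_surjective {H : Type*} [Group H] (f : G →* H) (hf : Surjective f) (n : ℕ) :
    (⊤ : Subgroup H).lowerCentralSeries n ≤ ((⊤ : Subgroup G).lowerCentralSeries n).map f := by
  induction n with
  | zero =>
    rw [Subgroup.lowerCentralSeries_zero, Subgroup.lowerCentralSeries_zero, Subgroup.map_top_of_surjective f hf]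
  | succ n ih =>
    rw [lcs_succ_comm, lcs_succ_comm, Subgroup.map_commutator]
    exact Subgroup.commutator_mono ih (by rw [Subgroup.map_top_of_surjective f hf])

lemma lcsN_map_le {H : Type*} [Group H] (f : G →* H) (N : Subgroup G) (i : ℕ) :
    ((⊤ : Subgroup (N.map f)).lowerCentralSeries i).map (N.map f).subtype
      ≤ (((⊤ : Subgroup N).lowerCentralSeries i).map N.subtype).map f := by
  induction i with
  | zero =>
    rw [Subgroup.lowerCentralSeries_zero, Subgroup.lowerCentralSeries_zero, map_subtype_top', map_subtype_top']
  | succ i ih =>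
    rw [lcs_map_subtype_succ, lcs_map_subtype_succ, Subgroup.map_commutator]
    exact Subgroup.commutator_mono ih le_rfl

end helpers

theorem aux_stmt : ∀ (c : ℕ) {G : Type u_1} [Group G] (N : Subgroup G) (m : ℕ), 0 < m →
    (⊤ : Subgroup G).lowerCentralSeries c = ⊥ →
    Subgroup.closure {x : G | ∃ g : G, x = g ^ m} ≤ N ⊔ commutator G →
    ∀ i : ℕ, ∃ n : ℕ, 0 < n ∧ (∀ p : ℕ, p.Prime → p ∣ n → p ∣ m) ∧
      Subgroup.closure {x : G | ∃ g ∈ (⊤ : Subgroup G).lowerCentralSeries i, x = g ^ n}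
        ≤ ((⊤ : Subgroup N).lowerCentralSeries i).map N.subtype := by
  intro c
  induction c with
  | zero =>
    intro G _ N m hm hc h i
    refine ⟨1, one_pos, fun p hp hd => absurd (Nat.dvd_one.mp hd) hp.ne_one, ?_⟩
    rw [Subgroup.closure_le]
    rintro x ⟨g, hg, rfl⟩
    have hg1 : g = 1 := by
      have h2 : g ∈ (⊤ : Subgroup G).lowerCentralSeries 0 := Subgroup.mem_top g
      rw [hc] at h2
      exact Subgroup.mem_bot.mp h2
    rw [hg1]
    simpa using Subgroup.one_mem _
  | succ e ih =>
    match e with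
    | 0 =>
      -- abelian case
      intro G _ N m hm hc h i
      have hcomm : commutator G = ⊥ := by rw [← Subgroup.lowerCentralSeries_one, hc]
      rw [hcomm, sup_bot_eq] at h
      match i with
      | 0 =>
        refine ⟨m, hm, fun p _ hd => hd, ?_⟩
        rw [Subgroup.closure_le]
        rintro x ⟨g, -, rfl⟩
        have : (g : G) ^ m ∈ Subgroup.closure {x : G | ∃ g : G, x = g ^ m} :=
          Subgroup.subset_closure ⟨g, rfl⟩
        have hx := h this
        rw [Subgroup.lowerCentralSeries_zero, map_subtype_top']
        exact hx
      | (j + 1) =>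
        refine ⟨1, one_pos, fun p hp hd => absurd (Nat.dvd_one.mp hd) hp.ne_one, ?_⟩
        rw [Subgroup.closure_le]
        rintro x ⟨g, hg, rfl⟩
        have hg1 : g = 1 := by
          have h2 : g ∈ (⊤ : Subgroup G).lowerCentralSeries 1 :=
            Subgroup.lowerCentralSeries_antitone _ (by omega) hg
          rw [hc] at h2
          exact Subgroup.mem_bot.mp h2
        rw [hg1]
        simpa using Subgroup.one_mem _
    | (c + 1) =>
      intro G _ N m hm hc h
      -- Z is the last nontrivial term of the lower central series; it is central.
      set Z : Subgroup G := (⊤ : Subgroup G).lowerCentralSeries (c + 1) with hZdef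
      have hZc : ∀ z ∈ Z, ∀ g : G, Commute z g := by
        intro z hz g
        have h2 : ⁅z, g⁆ ∈ (⊤ : Subgroup G).lowerCentralSeries (c + 2) := by
          rw [lcs_succ_comm]
          exact Subgroup.commutator_mem_commutator hz (Subgroup.mem_top g)
        rw [hc] at h2
        exact commutatorElement_eq_one_iff_commute.mp (Subgroup.mem_bot.mp h2)
      have hTZ : ∀ y ∈ (⊤ : Subgroup G).lowerCentralSeries c, ∀ g : G, ⁅y, g⁆ ∈ Z := by
        intro y hy g
        rw [hZdef, lcs_succ_comm]
        exact Subgroup.commutator_mem_commutator hy (Subgroup.mem_top g)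
      haveI hZnorm : Z.Normal := Subgroup.lowerCentralSeries_normal ⊤ (c + 1)
      let π : G →* G ⧸ Z := QuotientGroup.mk' Z
      have hπ : Function.Surjective π := QuotientGroup.mk'_surjective Z
      -- the quotient has smaller class
      have hQc : (⊤ : Subgroup (G ⧸ Z)).lowerCentralSeries (c + 1) = ⊥ := by
        rw [eq_bot_iff]
        refine le_trans (lcs_le_map_of_surjective π hπ (c + 1)) ?_
        rintro x ⟨z, hz, rfl⟩
        rw [Subgroup.mem_bot]
        exact (QuotientGroup.eq_one_iff z).mpr hz
      -- the hypothesis passes to the quotient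
      have hQ : Subgroup.closure {x : G ⧸ Z | ∃ g : G ⧸ Z, x = g ^ m}
          ≤ N.map π ⊔ commutator (G ⧸ Z) := by
        have hset : {x : G ⧸ Z | ∃ g : G ⧸ Z, x = g ^ m}
            = π '' {x : G | ∃ g : G, x = g ^ m} := by
          ext x
          constructor
          · rintro ⟨g, rfl⟩
            obtain ⟨g', rfl⟩ := hπ g
            exact ⟨g' ^ m, ⟨g', rfl⟩, by rw [map_pow]⟩
          · rintro ⟨y, ⟨g, rfl⟩, rfl⟩
            exact ⟨π g, by rw [map_pow]⟩
        rw [hset, ← MonoidHom.map_closure]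
        refine le_trans (Subgroup.map_mono h) ?_
        rw [Subgroup.map_sup]
        apply sup_le_sup_left
        rw [commutator_def, commutator_def, Subgroup.map_commutator,
          Subgroup.map_top_of_surjective π hπ]
      -- apply the inductive hypothesis in the quotient
      have IH := ih (N.map π) m hm hQc hQ
      -- pulling back the conclusion of IH
      have pull : ∀ i n : ℕ,
          Subgroup.closure {x : G ⧸ Z | ∃ g ∈ (⊤ : Subgroup (G ⧸ Z)).lowerCentralSeries i, x = g ^ n}
            ≤ ((⊤ : Subgroup (N.map π)).lowerCentralSeries i).map (N.map π).subtype →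
          ∀ x ∈ (⊤ : Subgroup G).lowerCentralSeries i,
            ∃ a ∈ ((⊤ : Subgroup N).lowerCentralSeries i).map N.subtype, ∃ z ∈ Z, x ^ n = a * z := by
        intro i n hle x hx
        have h1 : π (x ^ n) ∈ ((⊤ : Subgroup (N.map π)).lowerCentralSeries i).map (N.map π).subtype := by
          apply hle
          apply Subgroup.subset_closure
          exact ⟨π x, Subgroup.lowerCentralSeries.map π i ⟨x, hx, rfl⟩, by rw [map_pow]⟩
        have h2 : π (x ^ n) ∈ (((⊤ : Subgroup N).lowerCentralSeries i).map N.subtype).map π :=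
          lcsN_map_le π N i h1
        have h3 : x ^ n ∈ ((⊤ : Subgroup N).lowerCentralSeries i).map N.subtype ⊔ Z := by
          have h4 : x ^ n ∈ Subgroup.comap π ((((⊤ : Subgroup N).lowerCentralSeries i).map N.subtype).map π) :=
            h2
          rwa [Subgroup.comap_map_eq, QuotientGroup.ker_mk'] at h4
        have h5 : x ^ n ∈ (↑(((⊤ : Subgroup N).lowerCentralSeries i).map N.subtype ⊔ Z) : Set G) := h3
        rw [Subgroup.mul_normal] at h5
        obtain ⟨a, ha, z, hz, hmul⟩ := h5
        exact ⟨a, ha, z, hz, hmul.symm⟩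
      obtain ⟨n₁, hn₁, hp₁, hle₁⟩ := IH c
      obtain ⟨n₀, hn₀, hp₀, hle₀⟩ := IH 0
      set k : ℕ := n₁ * n₀ with hkdef
      have hk : 0 < k := Nat.mul_pos hn₁ hn₀
      -- the k-th power of Z lands in γ_{c+1}(N)
      have hZk : ∀ z ∈ Z, z ^ k ∈ ((⊤ : Subgroup N).lowerCentralSeries (c + 1)).map N.subtype := by
        set A : Subgroup G := ((⊤ : Subgroup N).lowerCentralSeries (c + 1)).map N.subtype with hAdef
        let T : Subgroup G :=
          { carrier := {g : G | g ∈ Z ∧ g ^ k ∈ A}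
            one_mem' := ⟨Subgroup.one_mem Z, by simpa using Subgroup.one_mem A⟩
            mul_mem' := by
              rintro x y ⟨hxZ, hxA⟩ ⟨hyZ, hyA⟩
              refine ⟨Subgroup.mul_mem Z hxZ hyZ, ?_⟩
              rw [(hZc x hxZ y).mul_pow]
              exact Subgroup.mul_mem A hxA hyA
            inv_mem' := by
              rintro x ⟨hxZ, hxA⟩
              exact ⟨Subgroup.inv_mem Z hxZ, by rw [inv_pow]; exact Subgroup.inv_mem A hxA⟩ }
        have hZT : Z ≤ T := by
          rw [hZdef, lcs_succ_comm, Subgroup.commutator_le]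
          intro a haT g _
          refine ⟨hTZ a haT g, ?_⟩
          -- ⁅a,g⁆ ^ k = ⁅a ^ n₁, g ^ n₀⁆
          have hbil : ⁅a, g⁆ ^ k = ⁅a ^ n₁, g ^ n₀⁆ :=
            (comm_pow_pow hZc hTZ haT g n₁ n₀).symm
          obtain ⟨a', ha', z₁, hz₁, hae⟩ := pull c n₁ hle₁ a haT
          obtain ⟨u, hu, z₂, hz₂, hge⟩ := pull 0 n₀ hle₀ g (Subgroup.mem_top g)
          rw [hbil, hae, hge, comm_central_mul_left (hZc z₁ hz₁),
            comm_central_mul_right (hZc z₂ hz₂)]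
          rw [hAdef, lcs_map_subtype_succ]
          have hu' : u ∈ N := by
            rw [Subgroup.lowerCentralSeries_zero, map_subtype_top'] at hu
            exact hu
          exact Subgroup.commutator_mem_commutator ha' hu'
        intro z hz
        exact (hZT hz).2
      -- now conclude for each i
      intro i
      rcases le_or_gt i (c + 1) with hi | hi
      · obtain ⟨nᵢ, hnᵢ, hpᵢ, hleᵢ⟩ := IH i
        refine ⟨nᵢ * k, Nat.mul_pos hnᵢ hk, ?_, ?_⟩
        · intro p hp hd
          rcases (Nat.Prime.dvd_mul hp).mp hd with h' | h'
          · exact hpᵢ p hp h'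
          · rcases (Nat.Prime.dvd_mul hp).mp h' with h'' | h''
            · exact hp₁ p hp h''
            · exact hp₀ p hp h''
        · rw [Subgroup.closure_le]
          rintro x ⟨g, hg, rfl⟩
          obtain ⟨a, ha, z, hz, hge⟩ := pull i nᵢ hleᵢ g hg
          have : g ^ (nᵢ * k) = a ^ k * z ^ k := by
            rw [pow_mul, hge, ((hZc z hz a).symm).mul_pow]
          rw [this]
          refine Subgroup.mul_mem _ (Subgroup.pow_mem _ ha k) ?_
          have hzk := hZk z hz
          exact Subgroup.map_mono (Subgroup.lowerCentralSeries_antitone _ hi) hzk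
      · refine ⟨1, one_pos, fun p hp hd => absurd (Nat.dvd_one.mp hd) hp.ne_one, ?_⟩
        rw [Subgroup.closure_le]
        rintro x ⟨g, hg, rfl⟩
        have hg1 : g = 1 := by
          have h2 : g ∈ (⊤ : Subgroup G).lowerCentralSeries (c + 2) :=
            Subgroup.lowerCentralSeries_antitone _ (by omega) hg
          rw [hc] at h2
          exact Subgroup.mem_bot.mp h2
        rw [hg1]
        simpa using Subgroup.one_mem _

/-- If `G` is nilpotent, `N ≤ G` and `G^m ≤ N·G'` for some `m > 0`, then for every `i`
there is a `π(m)`-number `n` with `γ_i(G)^n ≤ γ_i(N)`.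
(`lowerCentralSeries _ i` is the paper's `γ_{i+1}`.) -/
theorem stmt2 {G : Type*} [Group G] [Group.IsNilpotent G] (N : Subgroup G)
    (m : ℕ) (hm : 0 < m)
    (h : Subgroup.closure {x : G | ∃ g : G, x = g ^ m} ≤ N ⊔ commutator G) :
    ∀ i : ℕ, ∃ n : ℕ, 0 < n ∧ (∀ p : ℕ, p.Prime → p ∣ n → p ∣ m) ∧
      Subgroup.closure {x : G | ∃ g ∈ (⊤ : Subgroup G).lowerCentralSeries i, x = g ^ n}
        ≤ ((⊤ : Subgroup N).lowerCentralSeries i).map N.subtype := by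
  obtain ⟨c, hc⟩ := Subgroup.nilpotent_iff_lowerCentralSeries.mp ‹Group.IsNilpotent G›
  exact aux_stmt c N m hm hc h
end

section
/- Let G be a nilpotent group of class c and t an automorphism of G of the form described below generating an abelian subgroup of Aut(G) acting trivially on G/G'. Then the semidirect product G ⋊ ⟨t⟩ is nilpotent of class at most c (for c ≥ 1). -/
open Subgroup
open scoped commutatorElement

section Aux

variable {G : Type*} [Group G]

private lemma quot_eq_of_mem' {N : Subgroup G} [N.Normal] {x y : G} (h : x * y⁻¹ ∈ N) :
    QuotientGroup.mk' N x = QuotientGroup.mk' N y := by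
  have h1 : QuotientGroup.mk' N (x * y⁻¹) = 1 := by
    rwa [← MonoidHom.mem_ker, QuotientGroup.ker_mk']
  rw [map_mul, map_inv] at h1
  exact mul_inv_eq_one.mp h1

private lemma mem_of_quot_eq' {N : Subgroup G} [N.Normal] {x y : G}
    (h : QuotientGroup.mk' N x = QuotientGroup.mk' N y) : x * y⁻¹ ∈ N := by
  have h1 : QuotientGroup.mk' N (x * y⁻¹) = 1 := by
    rw [map_mul, map_inv, h, mul_inv_cancel]
  rw [← QuotientGroup.ker_mk' N]
  exact MonoidHom.mem_ker.mpr h1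

private lemma quot_comm' {N : Subgroup G} [N.Normal] {x y : G} (h : ⁅x, y⁆ ∈ N) :
    QuotientGroup.mk' N x * QuotientGroup.mk' N y
      = QuotientGroup.mk' N y * QuotientGroup.mk' N x := by
  have h1 : QuotientGroup.mk' N ⁅x, y⁆ = 1 := by
    rwa [← MonoidHom.mem_ker, QuotientGroup.ker_mk']
  rw [map_commutatorElement] at h1
  exact commutatorElement_eq_one_iff_mul_comm.mp h1

/-- Three subgroups lemma, relative version. -/
private lemma three_sub_le' (H₁ H₂ H₃ N : Subgroup G) [N.Normal]
    (h1 : ⁅⁅H₂, H₃⁆, H₁⁆ ≤ N) (h2 : ⁅⁅H₃, H₁⁆, H₂⁆ ≤ N) : ⁅⁅H₁, H₂⁆, H₃⁆ ≤ N := by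
  rw [← QuotientGroup.ker_mk' N, ← Subgroup.map_eq_bot_iff, Subgroup.map_commutator,
    Subgroup.map_commutator] at h1 h2 ⊢
  exact Subgroup.commutator_commutator_eq_bot_of_rotate h1 h2

private lemma lcs_comm' (n m : ℕ) :
    ⁅Subgroup.lowerCentralSeries (⊤ : Subgroup G) n, Subgroup.lowerCentralSeries (⊤ : Subgroup G) m⁆ ≤ Subgroup.lowerCentralSeries (⊤ : Subgroup G) (n + m + 1) := by
  induction m generalizing n with
  | zero =>
    rw [Subgroup.lowerCentralSeries_zero]
    exact le_of_eq rfl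
  | succ m ih =>
    have hdef : Subgroup.lowerCentralSeries (⊤ : Subgroup G) (m + 1) = ⁅Subgroup.lowerCentralSeries (⊤ : Subgroup G) m, ⊤⁆ := rfl
    rw [hdef, Subgroup.commutator_comm]
    apply three_sub_le'
    · have e1 : ⁅(⊤ : Subgroup G), Subgroup.lowerCentralSeries (⊤ : Subgroup G) n⁆ = Subgroup.lowerCentralSeries (⊤ : Subgroup G) (n + 1) := by
        rw [Subgroup.commutator_comm]; rfl
      rw [e1]
      have := ih (n + 1)
      have e2 : n + 1 + m + 1 = n + (m + 1) + 1 := by omega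
      rwa [e2] at this
    · refine le_trans (Subgroup.commutator_mono (ih n) le_rfl) ?_
      have e3 : ⁅Subgroup.lowerCentralSeries (⊤ : Subgroup G) (n + m + 1), (⊤ : Subgroup G)⁆
          = Subgroup.lowerCentralSeries (⊤ : Subgroup G) (n + m + 2) := rfl
      rw [e3]
      exact Subgroup.lowerCentralSeries_antitone _ (by omega)

private lemma comm_expand' {Q : Type*} [Group Q] (A B V W : Q)
    (hV : ∀ X, V * X = X * V) (hW : A * W = W * A)
    (hC : ∀ X, A * B * A⁻¹ * B⁻¹ * X = X * (A * B * A⁻¹ * B⁻¹)) :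
    V * A * (W * B) * (V * A)⁻¹ * (W * B)⁻¹ = A * B * A⁻¹ * B⁻¹ := by
  calc V * A * (W * B) * (V * A)⁻¹ * (W * B)⁻¹
      = V * (A * W * B * A⁻¹) * V⁻¹ * (B⁻¹ * W⁻¹) := by group
    _ = (A * W * B * A⁻¹) * V * V⁻¹ * (B⁻¹ * W⁻¹) := by rw [hV (A * W * B * A⁻¹)]
    _ = (A * W) * (B * A⁻¹ * B⁻¹ * W⁻¹) := by group
    _ = (W * A) * (B * A⁻¹ * B⁻¹ * W⁻¹) := by rw [hW]
    _ = W * (A * B * A⁻¹ * B⁻¹) * W⁻¹ := by group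
    _ = (A * B * A⁻¹ * B⁻¹) * W * W⁻¹ := by rw [hC W]
    _ = A * B * A⁻¹ * B⁻¹ := by group

/-- An automorphism acting trivially on the abelianization acts trivially on all
lower central series quotients. -/
private lemma aut_lcs' (s : MulAut G) (hs : ∀ g : G, s g * g⁻¹ ∈ commutator G) :
    ∀ n, ∀ y ∈ Subgroup.lowerCentralSeries (⊤ : Subgroup G) n, s y * y⁻¹ ∈ Subgroup.lowerCentralSeries (⊤ : Subgroup G) (n + 1) := by
  intro n
  induction n with
  | zero => intro y _; exact hs y
  | succ n ih =>
    intro y hy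
    rw [Subgroup.mem_lowerCentralSeries_succ_iff] at hy
    refine closure_induction (fun x hx => ?_) (by simpa using one_mem _) (fun x y _ _ px py => ?_)
      (fun x _ px => ?_) hy
    · -- generator case
      obtain ⟨a, ha, b, -, rfl⟩ := hx
      set N := Subgroup.lowerCentralSeries (⊤ : Subgroup G) (n + 1 + 1) with hNdef
      have hv : s a * a⁻¹ ∈ Subgroup.lowerCentralSeries (⊤ : Subgroup G) (n + 1) := ih a ha
      have hw : s b * b⁻¹ ∈ commutator G := hs b
      set v := s a * a⁻¹ with hvdef
      set w := s b * b⁻¹ with hwdef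
      apply mem_of_quot_eq' (N := N)
      set f := QuotientGroup.mk' N with hfdef
      have hVc : ∀ X : G ⧸ N, f v * X = X * f v := by
        intro X
        refine QuotientGroup.induction_on X (fun x => ?_)
        exact quot_comm' (Subgroup.commutator_mem_commutator hv (mem_top x))
      have hCc : ∀ X : G ⧸ N, f (a * b * a⁻¹ * b⁻¹) * X = X * f (a * b * a⁻¹ * b⁻¹) := by
        intro X
        refine QuotientGroup.induction_on X (fun x => ?_)
        refine quot_comm' (Subgroup.commutator_mem_commutator ?_ (mem_top x))
        show a * b * a⁻¹ * b⁻¹ ∈ Subgroup.lowerCentralSeries (⊤ : Subgroup G) (n + 1)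
        exact Subgroup.commutator_mem_commutator ha (mem_top b)
      have hAW : f a * f w = f w * f a := by
        refine quot_comm' ?_
        have : ⁅a, w⁆ ∈ ⁅Subgroup.lowerCentralSeries (⊤ : Subgroup G) n, Subgroup.lowerCentralSeries (⊤ : Subgroup G) 1⁆ :=
          Subgroup.commutator_mem_commutator ha hw
        exact lcs_comm' n 1 this
      have hsa : s a = v * a := by rw [hvdef]; group
      have hsb : s b = w * b := by rw [hwdef]; group
      have e1 : s (a * b * a⁻¹ * b⁻¹) = v * a * (w * b) * (v * a)⁻¹ * (w * b)⁻¹ := by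
        rw [map_mul, map_mul, map_mul, map_inv, map_inv, hsa, hsb]
      rw [commutatorElement_def, e1]
      simp only [map_mul, map_inv]
      exact comm_expand' (f a) (f b) (f v) (f w) hVc hAW
        (by simpa only [map_mul, map_inv] using hCc)
    · -- multiplication case
      have e : s (x * y) * (x * y)⁻¹ = (s x * x⁻¹) * (x * (s y * y⁻¹) * x⁻¹) := by
        rw [map_mul]; group
      rw [e]
      exact mul_mem px ((Subgroup.lowerCentralSeries_normal ⊤ (n + 1 + 1)).conj_mem _ py x)
    · -- inverse case
      have e : s x⁻¹ * (x⁻¹)⁻¹ = (x⁻¹ * (s x * x⁻¹) * x)⁻¹ := by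
        rw [map_inv]; group
      rw [e]
      have hconj := (Subgroup.lowerCentralSeries_normal ⊤ (n + 1 + 1)).conj_mem _ px x⁻¹
      rw [inv_inv] at hconj
      exact inv_mem hconj

private lemma zpow_comm' (t : MulAut G) (h : ∀ g : G, t g * g⁻¹ ∈ commutator G) (k : ℤ) :
    ∀ g : G, (t ^ k) g * g⁻¹ ∈ commutator G := by
  induction k using Int.induction_on with
  | zero => intro g; simpa using one_mem _
  | succ k ih =>
    intro g
    have e : (t ^ ((k : ℤ) + 1)) g = (t ^ (k : ℤ)) (t g) := by
      rw [zpow_add, zpow_one]; rfl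
    have e2 : (t ^ (k : ℤ)) (t g) * g⁻¹
        = ((t ^ (k : ℤ)) (t g) * (t g)⁻¹) * (t g * g⁻¹) := by group
    rw [e, e2]
    exact mul_mem (ih (t g)) (h g)
  | pred k ih =>
    intro g
    have h2 : t⁻¹ g * g⁻¹ ∈ commutator G := by
      have h3 := h (t⁻¹ g)
      rw [MulAut.apply_inv_self] at h3
      have h4 := inv_mem h3
      simpa using h4
    have e : (t ^ (-(k : ℤ) - 1)) g = (t ^ (-(k : ℤ))) (t⁻¹ g) := by
      rw [sub_eq_add_neg, zpow_add, zpow_neg_one]; rfl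
    have e2 : (t ^ (-(k : ℤ))) (t⁻¹ g) * g⁻¹
        = ((t ^ (-(k : ℤ))) (t⁻¹ g) * (t⁻¹ g)⁻¹) * (t⁻¹ g * g⁻¹) := by group
    rw [e, e2]
    exact mul_mem (ih (t⁻¹ g)) h2

end Aux

/-- If `G` is nilpotent of class `c ≥ 1` and the automorphism `t` induces the identity on
`G/G'`, then the semidirect product `G ⋊ ⟨t⟩` (with `⟨t⟩ ≅ ℤ` acting via powers of `t`)
is nilpotent of class at most `c`. -/
theorem stmt4 {G : Type*} [Group G] [Group.IsNilpotent G] (c : ℕ)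
    (hc : Group.nilpotencyClass G = c) (hc1 : 1 ≤ c) (t : MulAut G)
    (h : ∀ g : G, t g * g⁻¹ ∈ commutator G) :
    ∃ hn : Group.IsNilpotent (G ⋊[zpowersHom (MulAut G) t] Multiplicative ℤ),
      Group.nilpotencyClass (G ⋊[zpowersHom (MulAut G) t] Multiplicative ℤ) ≤ c := by
  set φ := zpowersHom (MulAut G) t with hφdef
  set H := G ⋊[φ] Multiplicative ℤ with hHdef
  have hφ : ∀ (z : Multiplicative ℤ) (g : G), (φ z) g * g⁻¹ ∈ commutator G := by
    intro z g
    exact zpow_comm' t h (Multiplicative.toAdd z) g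
  -- the commutator of `inl y` with any element
  have comm_inl : ∀ (y : G) (q : H),
      ⁅(SemidirectProduct.inl y : H), q⁆
        = SemidirectProduct.inl (y * q.left * (φ q.right) y⁻¹ * q.left⁻¹) := by
    intro y q
    ext
    · simp [commutatorElement_def, mul_assoc]
    · simp [commutatorElement_def]
  -- the homomorphism to the abelianization of G
  have Fmul : ∀ x y : H, Abelianization.of (x * y).left
      = Abelianization.of x.left * Abelianization.of y.left := by
    intro x y
    rw [SemidirectProduct.mul_left, map_mul]
    congr 1
    exact quot_eq_of_mem' (hφ x.right y.left)
  let F : H →* Abelianization G :=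
    { toFun := fun x => Abelianization.of x.left
      map_one' := by simp
      map_mul' := Fmul }
  -- base case
  have base : Subgroup.lowerCentralSeries (⊤ : Subgroup H) 1
      ≤ (Subgroup.lowerCentralSeries (⊤ : Subgroup G) 1).map SemidirectProduct.inl := by
    show ⁅(⊤ : Subgroup H), ⊤⁆ ≤ _
    rw [Subgroup.commutator_le]
    intro p _ q _
    have hr : ⁅p, q⁆.right = 1 := by
      have h1 : SemidirectProduct.rightHom ⁅p, q⁆ = 1 := by
        rw [map_commutatorElement]
        exact commutatorElement_eq_one_iff_mul_comm.mpr (mul_comm _ _)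
      rwa [SemidirectProduct.rightHom_eq_right] at h1
    have hF : Abelianization.of ⁅p, q⁆.left = 1 := by
      have : F ⁅p, q⁆ = ⁅F p, F q⁆ := map_commutatorElement F p q
      have h2 : ⁅F p, F q⁆ = 1 := commutatorElement_eq_one_iff_mul_comm.mpr (mul_comm _ _)
      calc Abelianization.of ⁅p, q⁆.left = F ⁅p, q⁆ := rfl
        _ = 1 := by rw [this, h2]
    have hleft : ⁅p, q⁆.left ∈ commutator G := by
      have := mem_of_quot_eq' (N := commutator G)
        (x := ⁅p, q⁆.left) (y := 1) (by exact hF)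
      simpa using this
    refine ⟨⁅p, q⁆.left, hleft, ?_⟩
    ext
    · simp
    · simp [hr]
  -- inductive step
  have step : ∀ n : ℕ, Subgroup.lowerCentralSeries (⊤ : Subgroup H) (n + 1)
      ≤ (Subgroup.lowerCentralSeries (⊤ : Subgroup G) (n + 1)).map SemidirectProduct.inl := by
    intro n
    induction n with
    | zero => exact base
    | succ n ih =>
      have hdef : Subgroup.lowerCentralSeries (⊤ : Subgroup H) (n + 2) = ⁅Subgroup.lowerCentralSeries (⊤ : Subgroup H) (n + 1), ⊤⁆ := rfl
      rw [hdef]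
      refine le_trans (Subgroup.commutator_mono ih le_rfl) ?_
      rw [Subgroup.commutator_le]
      intro x hx q _
      obtain ⟨y, hy, rfl⟩ := hx
      rw [comm_inl]
      apply Subgroup.mem_map_of_mem
      have hu : (φ q.right) y⁻¹ * y ∈ Subgroup.lowerCentralSeries (⊤ : Subgroup G) (n + 2) := by
        have := aut_lcs' (φ q.right) (hφ q.right) (n + 1) y⁻¹ (inv_mem hy)
        simpa using this
      have key : y * q.left * (φ q.right) y⁻¹ * q.left⁻¹ =
          (y * q.left * ((φ q.right) y⁻¹ * y) * (y * q.left)⁻¹)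
            * (y * q.left * y⁻¹ * q.left⁻¹) := by group
      rw [key]
      refine mul_mem ?_ ?_
      · exact (Subgroup.lowerCentralSeries_normal ⊤ (n + 2)).conj_mem _ hu (y * q.left)
      · exact Subgroup.commutator_mem_commutator hy (mem_top q.left)
  -- conclusion
  obtain ⟨m, rfl⟩ : ∃ m, c = m + 1 := ⟨c - 1, by omega⟩
  have hbot : Subgroup.lowerCentralSeries (⊤ : Subgroup H) (m + 1) = ⊥ := by
    apply le_bot_iff.mp
    refine le_trans (step m) ?_
    have hG : Subgroup.lowerCentralSeries (⊤ : Subgroup G) (m + 1) = ⊥ := by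
      rw [← hc]
      exact Subgroup.lowerCentralSeries_nilpotencyClass
    rw [hG, Subgroup.map_bot]
  have hn : Group.IsNilpotent H := Subgroup.nilpotent_iff_lowerCentralSeries.mpr ⟨m + 1, hbot⟩
  exact ⟨hn, (@Subgroup.lowerCentralSeries_eq_bot_iff_nilpotencyClass_le H _ hn (m + 1)).mp hbot⟩
end

section
/- Let G be a polycyclic group. Then there exists k ≥ 1 such that γ_k(G)/γ_{k+j}(G) is finite for all j ≥ 1. -/
/-!
Along a descending chain of subgroups of a polycyclic group the Hirsch length drops at every
step of infinite index, so only finitely many steps have infinite index; applied to the lower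
central series this gives a `k` beyond which every step `γ_{i+1} ≤ γ_i` has finite index.

Instead of the Hirsch length we use the chain property itself. It holds for finite and cyclic
groups and passes to extensions, because for `B ≤ A` and `N` normal the index `[A : B]` is
`[A ∩ N : B ∩ N]` times the index of the images in `G/N`. Inducting on the number of generators
gives it for finitely generated abelian groups, and inducting along the derived series gives it
for polycyclic groups.
-/

/-- A group is polycyclic iff it is solvable and all its subgroups are finitely generated. -/
def IsPolycyclic (G : Type*) [Group G] : Prop :=
  IsSolvable G ∧ ∀ H : Subgroup G, H.FG

open Subgroup Pointwise

universe u

namespace Subgroup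

variable {G : Type*} [Group G]

theorem relIndex_eq_of_le_of_subset_mul {H K L : Subgroup G} (hKL : K ≤ L)
    (hL : (L : Set G) ⊆ K * H) : H.relIndex L = H.relIndex K := by
  refine Nat.card_congr (Equiv.ofBijective (quotientSubgroupOfEmbeddingOfLE H hKL)
    ⟨(quotientSubgroupOfEmbeddingOfLE H hKL).injective, ?_⟩) |>.symm
  rintro ⟨x⟩
  obtain ⟨k, hk, h, hh, hkh⟩ := hL x.2
  refine ⟨QuotientGroup.mk ⟨k, hk⟩, QuotientGroup.eq.mpr ?_⟩
  simpa [mem_subgroupOf, ← hkh] using hh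

theorem relIndex_eq_relIndex_subgroupOf_mul_relIndex_map (N : Subgroup G) [N.Normal]
    {A B : Subgroup G} (hBA : B ≤ A) :
    B.relIndex A = (B.subgroupOf N).relIndex (A.subgroupOf N) *
      (B.map (QuotientGroup.mk' N)).relIndex (A.map (QuotientGroup.mk' N)) := by
  -- `C = B (A ∩ N)`, so the cosets of `B` in `C` are represented by `A ∩ N`.
  set C := (B ⊔ N) ⊓ A
  have hBC : B ≤ C := le_inf le_sup_left hBA
  rw [← relIndex_mul_relIndex B C A hBC inf_le_right, ← inf_subgroupOf_right A,
    relIndex_subgroupOf inf_le_right, inf_relIndex_right, ← relIndex_comap, comap_map_eq,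
    QuotientGroup.ker_mk']
  congr 1
  refine relIndex_eq_of_le_of_subset_mul
    (le_inf (inf_le_right.trans le_sup_right) inf_le_left) ?_
  rintro g ⟨hg, hgA⟩
  obtain ⟨n, hn, b, hb, rfl⟩ : g ∈ (N : Set G) * B := by
    rwa [← normal_mul, sup_comm]
  exact ⟨n, ⟨(mul_mem_cancel_right (hBA hb)).mp hgA, hn⟩, b, hb, rfl⟩

theorem FG.of_map_of_injective {G' : Type*} [Group G'] {f : G →* G'}
    (hf : Function.Injective f) {K : Subgroup G} (h : (K.map f).FG) : K.FG := by
  have := (Group.fg_iff_subgroup_fg _).mpr h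
  exact (Group.fg_iff_subgroup_fg K).mp <|
    Group.fg_of_surjective (f := (K.equivMapOfInjective f hf).symm.toMonoidHom)
      (MulEquiv.surjective _)

end Subgroup

theorem IsCyclic.index_ne_zero_of_ne_bot {A : Type*} [CommGroup A] [IsCyclic A]
    {H : Subgroup A} (hH : H ≠ ⊥) : H.index ≠ 0 := by
  obtain ⟨g, hg⟩ := IsCyclic.exists_generator (α := A)
  obtain ⟨x, hxH, hx1⟩ := H.bot_or_exists_ne_one.resolve_left hH
  obtain ⟨n, rfl⟩ := mem_zpowers_iff.mp (hg x)
  have hgen : ∀ q : A ⧸ H, q ∈ zpowers (g : A ⧸ H) := by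
    rintro ⟨y⟩
    obtain ⟨k, rfl⟩ := mem_zpowers_iff.mp (hg y)
    exact ⟨k, rfl⟩
  rw [index, ← orderOf_eq_card_of_forall_mem_zpowers hgen]
  refine (isOfFinOrder_iff_zpow_eq_one.mpr ⟨n, ?_, ?_⟩).orderOf_pos.ne'
  · rintro rfl
    exact hx1 (zpow_zero g)
  · rwa [← QuotientGroup.mk_zpow, QuotientGroup.eq_one_iff]

theorem map_subtype_derivedSeries_commutator (G : Type*) [Group G] (n : ℕ) :
    (derivedSeries (commutator G) n).map (commutator G).subtype = derivedSeries G (n + 1) := by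
  induction n with
  | zero => rw [derivedSeries_zero, ← MonoidHom.range_eq_map, range_subtype, derivedSeries_one]
  | succ n ih => rw [derivedSeries_succ, map_commutator, ih, derivedSeries_succ G (n + 1)]

def infiniteIndexSteps {G : Type*} [Group G] (H : ℕ → Subgroup G) : Set ℕ :=
  {i | (H (i + 1)).relIndex (H i) = 0}

-- In a group of Hirsch length `h`, a descending chain has at most `h` steps of infinite index.
def HirschChainCondition (G : Type*) [Group G] : Prop :=
  ∀ H : ℕ → Subgroup G, Antitone H → (infiniteIndexSteps H).Finite

theorem exists_forall_relIndex_ne_zero_of_finite {G : Type*} [Group G] {H : ℕ → Subgroup G}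
    (hfin : (infiniteIndexSteps H).Finite) : ∃ k, ∀ j, (H (k + j)).relIndex (H k) ≠ 0 := by
  obtain ⟨k, hk⟩ := hfin.bddAbove
  refine ⟨k + 1, fun j => ?_⟩
  induction j with
  | zero => simp
  | succ j ih =>
    have hstep : (H (k + 1 + j + 1)).relIndex (H (k + 1 + j)) ≠ 0 := fun h => by
      have := hk h
      omega
    exact relIndex_ne_zero_trans hstep ih

namespace HirschChainCondition

theorem of_finite {G : Type*} [Group G] [Finite G] : HirschChainCondition G :=
  fun _ _ => Set.finite_empty.subset fun _ hi => index_ne_zero_of_finite hi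

theorem of_isCyclic {A : Type*} [CommGroup A] [IsCyclic A] : HirschChainCondition A := by
  intro H hH
  -- a step of infinite index must go from a nontrivial subgroup down to `⊥`
  have hstep : ∀ i ∈ infiniteIndexSteps H, H (i + 1) = ⊥ ∧ H i ≠ ⊥ := by
    intro i hi
    have hbot : H (i + 1) = ⊥ := by
      by_contra hne
      exact IsCyclic.index_ne_zero_of_ne_bot hne
        (Nat.eq_zero_of_zero_dvd (hi ▸ relIndex_dvd_index_of_normal _ _))
    refine ⟨hbot, fun hi' => ?_⟩
    have : (H (i + 1)).relIndex (H i) = 1 := by rw [hbot, hi', relIndex_self]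
    exact one_ne_zero (this.symm.trans hi)
  refine Set.Subsingleton.finite fun i hi j hj => ?_
  by_contra hij
  wlog hlt : i < j generalizing i j
  · exact this j hj i hi (Ne.symm hij) (by omega)
  exact (hstep j hj).2 (le_bot_iff.mp ((hstep i hi).1 ▸ hH hlt))

theorem of_normal {G : Type*} [Group G] (N : Subgroup G) [N.Normal]
    (hN : HirschChainCondition N) (hQ : HirschChainCondition (G ⧸ N)) :
    HirschChainCondition G := by
  intro H hH
  refine ((hN (fun i => (H i).subgroupOf N) fun i j hij => subgroupOf_mono N (hH hij)).union
    (hQ (fun i => (H i).map (QuotientGroup.mk' N)) fun i j hij => map_mono (hH hij))).subset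
    fun i hi => ?_
  simpa only [infiniteIndexSteps, Set.mem_union, Set.mem_ofPred_eq, ← mul_eq_zero,
    ← relIndex_eq_relIndex_subgroupOf_mul_relIndex_map N (hH i.le_succ)] using hi

theorem of_fg_commGroup {A : Type u} [CommGroup A] [Group.FG A] : HirschChainCondition A := by
  suffices ∀ (n : ℕ) (A : Type u) [CommGroup A] (S : Finset A),
      S.card ≤ n → closure (S : Set A) = ⊤ → HirschChainCondition A by
    obtain ⟨S, hS⟩ := Group.fg_def.mp ‹_›
    exact this _ A S le_rfl hS
  intro n
  induction n with
  | zero =>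
    intro A _ S hS hgen
    rw [Finset.card_eq_zero.mp (Nat.le_zero.mp hS), Finset.coe_empty,
      Subgroup.closure_empty] at hgen
    have := Subgroup.subsingleton_iff.mp (subsingleton_of_bot_eq_top hgen)
    exact of_finite
  | succ n ih =>
    intro A _ S hS hgen
    classical
    rcases S.eq_empty_or_nonempty with rfl | ⟨g, hg⟩
    · exact ih A ∅ (Nat.zero_le n) hgen
    set π := QuotientGroup.mk' (zpowers g)
    have hπg : π g = 1 := (QuotientGroup.eq_one_iff g).mpr (mem_zpowers g)
    refine of_normal (zpowers g) of_isCyclic (ih _ ((S.erase g).image π) ?_ ?_)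
    · exact Finset.card_image_le.trans (by rw [Finset.card_erase_of_mem hg]; omega)
    · rw [← closure_insert_one, ← hπg,
        ← Finset.coe_insert, ← Finset.image_insert, Finset.insert_erase hg, Finset.coe_image,
        ← MonoidHom.map_closure, hgen, map_top_of_surjective π (QuotientGroup.mk'_surjective _)]

end HirschChainCondition

theorem IsPolycyclic.hirschChainCondition {G : Type u} [Group G] (hG : IsPolycyclic G) :
    HirschChainCondition G := by
  suffices ∀ (n : ℕ) (G : Type u) [Group G], (∀ H : Subgroup G, H.FG) →
      derivedSeries G n = ⊥ → HirschChainCondition G from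
    this _ G hG.2 hG.1.solvable.choose_spec
  intro n
  induction n with
  | zero =>
    intro G _ _ hG
    have := Subgroup.subsingleton_iff.mp
      (subsingleton_of_bot_eq_top (hG.symm.trans (derivedSeries_zero G)))
    exact .of_finite
  | succ n ih =>
    intro G _ hfg hG
    have : Group.FG G := Group.fg_def.mpr (hfg ⊤)
    have : Group.FG (Abelianization G) := QuotientGroup.fg _
    have hfgN (K : Subgroup (commutator G)) : K.FG :=
      .of_map_of_injective (commutator G).subtype_injective (hfg _)
    refine .of_normal (commutator G) (ih _ hfgN ?_) (.of_fg_commGroup (A := Abelianization G))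
    rw [← map_eq_bot_iff_of_injective _ (commutator G).subtype_injective,
      map_subtype_derivedSeries_commutator, hG]

/-- In a polycyclic group there is a `k` such that `γ_k(G)/γ_{k+j}(G)` is finite for all
`j ≥ 1`. -/
theorem stmt5 {G : Type*} [Group G] (hG : IsPolycyclic G) :
    ∃ k : ℕ, ∀ j : ℕ, 1 ≤ j →
      Finite (((⊤ : Subgroup G).lowerCentralSeries k) ⧸
        (((⊤ : Subgroup G).lowerCentralSeries (k + j)).subgroupOf ((⊤ : Subgroup G).lowerCentralSeries k))) := by
  obtain ⟨k, hk⟩ := exists_forall_relIndex_ne_zero_of_finite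
    (hG.hirschChainCondition _ (⊤ : Subgroup G).lowerCentralSeries_antitone)
  exact ⟨k, fun j _ => index_ne_zero_iff_finite.mp (hk j)⟩
end

section
/- Let G be a polycyclic group. Then the set τ(G) = ⋃_{i≥1} π(|Tor(γ_i(G)/γ_{i+1}(G))|) of primes dividing the order of the torsion subgroup of some lower central quotient is finite. -/
open Subgroup
open scoped commutatorElement

universe u

/-- Chains with all steps of infinite index are bounded in length by `c`. -/
def BddChn (G : Type u) [Group G] (c : ℕ) : Prop :=
  ∀ H : ℕ → Subgroup G, Monotone H → ∀ n : ℕ,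
    (∀ j < n, (H j).relIndex (H (j+1)) = 0) → n ≤ c

lemma relindex_ne_zero_of_finite {G : Type u} [Group G] [Finite G] (A B : Subgroup G) :
    A.relIndex B ≠ 0 := by
  rw [Subgroup.relIndex, Subgroup.index_eq_card]
  exact Nat.card_ne_zero.mpr ⟨⟨(1 : ↥B)⟩, inferInstance⟩

lemma bddChn_of_finite {G : Type u} [Group G] [Finite G] : BddChn G 0 := by
  intro H _ n hn
  by_contra h
  exact relindex_ne_zero_of_finite (H 0) (H 1) (hn 0 (Nat.pos_of_ne_zero (fun h0 => h (h0 ▸ Nat.zero_le 0))))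

lemma bddChn_of_subsingleton {G : Type u} [Group G] (h : Subsingleton G) : BddChn G 0 :=
  bddChn_of_finite

lemma relindex_map_equiv {G : Type u} {G' : Type*} [Group G] [Group G'] (e : G ≃* G')
    (A B : Subgroup G) :
    (A.map e.toMonoidHom).relIndex (B.map e.toMonoidHom) = A.relIndex B := by
  have h1 : A.map e.toMonoidHom = Subgroup.comap e.symm.toMonoidHom A :=
    A.map_equiv_eq_comap_symm e
  rw [h1, Subgroup.relIndex_comap]
  congr 1
  rw [Subgroup.map_map]
  convert Subgroup.map_id B
  ext x; simp

lemma BddChn.of_mulEquiv {G : Type u} {G' : Type*} [Group G] [Group G'] (e : G ≃* G')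
    {c : ℕ} (h : BddChn G' c) : BddChn G c := by
  intro H hm n hn
  refine h (fun j => (H j).map e.toMonoidHom) (fun i j hij => Subgroup.map_mono (hm hij)) n ?_
  intro j hj
  rw [relindex_map_equiv]
  exact hn j hj

lemma card_le_of_infsteps {G' : Type*} [Group G'] {c : ℕ} (hb : BddChn G' c)
    (K : ℕ → Subgroup G') (hK : Monotone K) (n : ℕ)
    (S : Finset ℕ) (hSn : S ⊆ Finset.range n)
    (hS : ∀ j ∈ S, (K j).relIndex (K (j+1)) = 0) : S.card ≤ c := by
  set m := S.card with hm
  have hf : ∀ t : Fin m, S.orderEmbOfFin hm.symm t ∈ S := fun t => S.orderEmbOfFin_mem hm.symm t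
  set e : ℕ → ℕ := fun t => if h : t < m then S.orderEmbOfFin hm.symm ⟨t, h⟩ else n with he
  have hlt : ∀ t (h : t < m), (S.orderEmbOfFin hm.symm ⟨t, h⟩) < n := by
    intro t h
    exact Finset.mem_range.mp (hSn (hf ⟨t, h⟩))
  have hemono : Monotone e := by
    intro s t hst
    simp only [he]
    by_cases hs : s < m
    · by_cases ht : t < m
      · simp only [hs, ht, dif_pos]
        exact (S.orderEmbOfFin hm.symm).monotone (by exact hst)
      · simp only [hs, ht, dif_pos, dif_neg]
        exact le_of_lt (hlt s hs)
    · have ht : ¬ t < m := fun h => hs (lt_of_le_of_lt hst h)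
      simp [hs, ht]
  refine hb (fun t => K (e t)) (fun s t hst => hK (hemono hst)) m ?_
  intro t ht
  have h1 : (K (e t)).relIndex (K (S.orderEmbOfFin hm.symm ⟨t, ht⟩ + 1)) = 0 := by
    simp only [he, dif_pos ht]
    exact hS _ (hf ⟨t, ht⟩)
  refine Subgroup.relIndex_eq_zero_of_le_right (hK ?_) h1
  -- S.orderEmbOfFin ⟨t⟩ + 1 ≤ e (t+1)
  simp only [he]
  by_cases h2 : t + 1 < m
  · simp only [dif_pos h2]
    have := (S.orderEmbOfFin hm.symm).strictMono (show (⟨t, ht⟩ : Fin m) < ⟨t+1, h2⟩ by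
      exact Fin.mk_lt_mk.mpr (Nat.lt_succ_self t))
    omega
  · simp only [dif_neg h2]
    exact hlt t ht

section Split
open scoped Pointwise
variable {G : Type u} [Group G]

lemma relindex_sup_ne_zero (A C : Subgroup G)
    (hc : ∀ a ∈ A, ∀ c ∈ C, a * c * a⁻¹ ∈ C)
    (h : A.relIndex C ≠ 0) : A.relIndex (A ⊔ C) ≠ 0 := by
  -- every element of A ⊔ C is c * a
  have hD : ∀ x ∈ A ⊔ C, ∃ c ∈ C, ∃ a ∈ A, x = c * a := by
    set D : Subgroup G :=
      { carrier := (C : Set G) * (A : Set G)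
        one_mem' := ⟨1, C.one_mem, 1, A.one_mem, by simp⟩
        mul_mem' := by
          rintro x y ⟨c₁, hc₁, a₁, ha₁, rfl⟩ ⟨c₂, hc₂, a₂, ha₂, rfl⟩
          refine ⟨c₁ * (a₁ * c₂ * a₁⁻¹), C.mul_mem hc₁ (hc a₁ ha₁ c₂ hc₂),
            a₁ * a₂, A.mul_mem ha₁ ha₂, ?_⟩
          group
        inv_mem' := by
          rintro x ⟨c₁, hc₁, a₁, ha₁, rfl⟩
          refine ⟨a₁⁻¹ * c₁⁻¹ * a₁, by simpa using hc a₁⁻¹ (A.inv_mem ha₁) c₁⁻¹ (C.inv_mem hc₁),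
            a₁⁻¹, A.inv_mem ha₁, ?_⟩
          group } with hDdef
    intro x hx
    have hle : A ⊔ C ≤ D := by
      refine sup_le ?_ ?_
      · intro a ha; exact ⟨1, C.one_mem, a, ha, by simp⟩
      · intro c hcm; exact ⟨c, hcm, 1, A.one_mem, by simp⟩
    obtain ⟨c, hcm, a, ha, rfl⟩ := hle hx
    exact ⟨c, hcm, a, ha, rfl⟩
  rw [Subgroup.relIndex, Subgroup.index_eq_card] at h ⊢
  have hfin : Finite (↥C ⧸ A.subgroupOf C) := Nat.finite_of_card_ne_zero h
  set φ : (↥C ⧸ A.subgroupOf C) → (↥(A ⊔ C) ⧸ A.subgroupOf (A ⊔ C)) :=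
    Quotient.map' (fun c => (⟨(c : G), (show C ≤ A ⊔ C from le_sup_right) c.2⟩ : ↥(A ⊔ C)))
      (by
        intro c₁ c₂ hrel
        rw [QuotientGroup.leftRel_apply] at hrel ⊢
        exact hrel) with hφ
  have hsurj : Function.Surjective φ := by
    refine Quotient.ind' ?_
    intro x
    obtain ⟨c, hcm, a, ha, hx⟩ := hD (x : G) x.2
    refine ⟨Quotient.mk'' ⟨c, hcm⟩, ?_⟩
    rw [hφ]
    rw [Quotient.map'_mk'']
    apply Quotient.sound'
    rw [QuotientGroup.leftRel_apply]
    rw [Subgroup.mem_subgroupOf]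
    simp only [Subgroup.coe_mul, InvMemClass.coe_inv]
    rw [hx]
    simpa using ha
  have : Finite (↥(A ⊔ C) ⧸ A.subgroupOf (A ⊔ C)) := Finite.of_surjective φ hsurj
  exact Nat.card_ne_zero.mpr ⟨⟨(1 : ↥(A ⊔ C))⟩, this⟩

lemma split_relindex_ne_zero (N : Subgroup G) [N.Normal] {A B : Subgroup G} (hAB : A ≤ B)
    (h1 : (A.subgroupOf N).relIndex (B.subgroupOf N) ≠ 0)
    (h2 : (A.map (QuotientGroup.mk' N)).relIndex (B.map (QuotientGroup.mk' N)) ≠ 0) :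
    A.relIndex B ≠ 0 := by
  have h1' : A.relIndex (B ⊓ N) ≠ 0 := by
    rwa [Subgroup.subgroupOf, Subgroup.relIndex_comap, Subgroup.subgroupOf_map_subtype] at h1
  set M := A ⊔ (B ⊓ N) with hM
  have hMB : M ≤ B := sup_le hAB inf_le_left
  have step1 : A.relIndex M ≠ 0 := by
    refine relindex_sup_ne_zero A (B ⊓ N) ?_ h1'
    intro a ha c hcm
    exact ⟨B.mul_mem (B.mul_mem (hAB ha) hcm.1) (B.inv_mem (hAB ha)),
      Subgroup.Normal.conj_mem ‹N.Normal› c hcm.2 a⟩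
  have step2 : M.relIndex B ≠ 0 := by
    have hMeq : M = (A ⊔ N) ⊓ B := by
      apply le_antisymm
      · exact le_inf (sup_le le_sup_left (inf_le_right.trans le_sup_right)) hMB
      · rintro x ⟨hxAN, hxB⟩
        have : x ∈ (A : Set G) * (N : Set G) := by
          rw [← Subgroup.mul_normal A N]
          exact hxAN
        obtain ⟨a, ha, w, hw, rfl⟩ := this
        exact M.mul_mem ((show A ≤ M from le_sup_left) (show a ∈ A from ha))
          ((show B ⊓ N ≤ M from le_sup_right)
            (show w ∈ B ⊓ N from ⟨(mul_mem_cancel_left (hAB ha)).mp hxB, hw⟩))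
    have hcm : Subgroup.comap (QuotientGroup.mk' N) (A.map (QuotientGroup.mk' N)) = A ⊔ N := by
      rw [Subgroup.comap_map_eq, QuotientGroup.ker_mk']
    rw [hMeq, Subgroup.inf_relIndex_right, ← hcm, Subgroup.relIndex_comap]
    exact h2
  intro h0
  rw [← Subgroup.relIndex_mul_relIndex A M B le_sup_left hMB] at h0
  exact (mul_ne_zero step1 step2) h0

lemma BddChn.split (N : Subgroup G) [N.Normal] {a b : ℕ}
    (ha : BddChn ↥N a) (hb : BddChn (G ⧸ N) b) : BddChn G (a + b) := by
  intro H hm n hn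
  classical
  set π := QuotientGroup.mk' N with hπ
  set S₂ : Finset ℕ := (Finset.range n).filter
    (fun j => ((H j).map π).relIndex ((H (j+1)).map π) = 0) with hS₂
  set S₁ : Finset ℕ := (Finset.range n).filter
    (fun j => ¬ ((H j).map π).relIndex ((H (j+1)).map π) = 0) with hS₁
  have hcard : S₂.card + S₁.card = n := by
    rw [hS₂, hS₁, Finset.card_filter_add_card_filter_not]
    exact Finset.card_range n
  have c1 : S₁.card ≤ a := by
    refine card_le_of_infsteps ha (fun j => (H j).subgroupOf N)
      (fun i j hij => Subgroup.comap_mono (hm hij)) n S₁ (Finset.filter_subset _ _) ?_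
    intro j hj
    rw [hS₁, Finset.mem_filter, Finset.mem_range] at hj
    by_contra hcon
    exact (split_relindex_ne_zero N (hm (Nat.le_succ j)) hcon hj.2) (hn j hj.1)
  have c2 : S₂.card ≤ b := by
    refine card_le_of_infsteps hb (fun j => (H j).map π)
      (fun i j hij => Subgroup.map_mono (hm hij)) n S₂ (Finset.filter_subset _ _) ?_
    intro j hj
    rw [hS₂, Finset.mem_filter] at hj
    exact hj.2
  omega

end Split

section Cyclic
variable {G : Type u} [Group G]

lemma bddChn_one_of_index (hZ : ∀ K : Subgroup G, K ≠ ⊥ → K.index ≠ 0) : BddChn G 1 := by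
  intro H hm n hn
  by_contra hcon
  push_neg at hcon
  have h0 : (H 0).relIndex (H 1) = 0 := hn 0 (by omega)
  have h1 : (H 1).relIndex (H 2) = 0 := hn 1 (by omega)
  have hne : H 1 ≠ ⊥ := by
    intro hb
    have h0' : H 0 = ⊥ := le_bot_iff.mp (hb ▸ hm (Nat.zero_le 1))
    rw [hb, h0', Subgroup.relIndex_self] at h0
    exact one_ne_zero h0
  exact hZ (H 1) hne (Subgroup.index_eq_zero_of_relIndex_eq_zero h1)

lemma index_ne_zero_zpowers_le {g : G} {K : Subgroup ↥(Subgroup.zpowers g)}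
    (hne : K ≠ ⊥) : K.index ≠ 0 := by
  set Z := ↥(Subgroup.zpowers g) with hZ
  by_cases hfin : IsOfFinOrder g
  · have hfs : (Subgroup.zpowers g : Set G).Finite := finite_zpowers.mpr hfin
    have hfz : Finite Z := hfs.to_subtype
    rw [Subgroup.index_eq_card]
    exact Nat.card_ne_zero.mpr ⟨⟨QuotientGroup.mk (1 : Z)⟩, Quotient.finite _⟩
  · -- infinite order
    obtain ⟨x, hxK, hx1⟩ : ∃ x ∈ K, x ≠ 1 := by
      by_contra hcon
      push_neg at hcon
      exact hne (eq_bot_iff.mpr (fun y hy => by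
        simpa [Subgroup.mem_bot] using hcon y hy))
    obtain ⟨m, hme⟩ := Subgroup.mem_zpowers_iff.mp x.2
    have hm0 : m ≠ 0 := by
      intro h
      apply hx1
      apply Subtype.ext
      simp [← hme, h]
    have hinj : Function.Injective (fun k : ℤ => g ^ k) :=
      injective_zpow_iff_not_isOfFinOrder.mpr hfin
    have key : (Subgroup.zpowers x).index ≠ 0 := by
      haveI : NeZero m.natAbs := ⟨Int.natAbs_ne_zero.mpr hm0⟩
      obtain ⟨expo, hexpo⟩ : ∃ expo : Z → ℤ, ∀ z : Z, g ^ (expo z) = (z : G) := by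
        choose expo hexpo using fun z : Z => Subgroup.mem_zpowers_iff.mp z.2
        exact ⟨expo, hexpo⟩
      set F : Z → ZMod m.natAbs := fun z => ((expo z : ℤ) : ZMod m.natAbs) with hF
      have hrespect : ∀ z₁ z₂ : Z, z₁⁻¹ * z₂ ∈ Subgroup.zpowers x → F z₁ = F z₂ := by
        intro z₁ z₂ hmem
        obtain ⟨t, ht⟩ := Subgroup.mem_zpowers_iff.mp hmem
        have hcoe : (g ^ m) ^ t = ((z₁⁻¹ * z₂ : Z) : G) := by
          rw [hme, ← SubgroupClass.coe_zpow, ht]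
        have hexp : g ^ (expo z₂) = g ^ (expo z₁ + m * t) := by
          calc g ^ (expo z₂) = (z₂ : G) := hexpo z₂
            _ = (z₁ : G) * ((z₁⁻¹ * z₂ : Z) : G) := by
                rw [Subgroup.coe_mul, InvMemClass.coe_inv, mul_inv_cancel_left]
            _ = g ^ (expo z₁) * (g ^ m) ^ t := by rw [hexpo z₁, hcoe]
            _ = g ^ (expo z₁ + m * t) := by rw [← zpow_mul, ← zpow_add]
        have heq : expo z₂ = expo z₁ + m * t := hinj hexp
        show ((expo z₁ : ℤ) : ZMod m.natAbs) = ((expo z₂ : ℤ) : ZMod m.natAbs)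
        rw [heq]
        push_cast
        have hz : ((m * t : ℤ) : ZMod m.natAbs) = 0 := by
          rw [ZMod.intCast_zmod_eq_zero_iff_dvd]
          exact Dvd.dvd.mul_right (Int.natAbs_dvd.mpr dvd_rfl) t
        push_cast at hz
        rw [hz]
        ring
      set q : (Z ⧸ Subgroup.zpowers x) → ZMod m.natAbs :=
        fun w => Quotient.liftOn' w F (by
          intro z₁ z₂ hrel
          rw [QuotientGroup.leftRel_apply] at hrel
          exact hrespect z₁ z₂ hrel) with hq
      have hinjq : Function.Injective q := by
        intro a b
        refine Quotient.inductionOn₂' a b ?_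
        intro z₁ z₂ heq
        have hFF : F z₁ = F z₂ := heq
        have hdvd : m ∣ expo z₂ - expo z₁ := by
          have h1 : ((expo z₁ : ℤ) : ZMod m.natAbs) = ((expo z₂ : ℤ) : ZMod m.natAbs) := hFF
          have h2 := (ZMod.intCast_eq_intCast_iff' _ _ _).mp h1
          have h3 : (m.natAbs : ℤ) ∣ expo z₂ - expo z₁ := Int.ModEq.dvd h2
          exact Int.natAbs_dvd.mp h3
        obtain ⟨t, ht⟩ := hdvd
        apply Quotient.sound'
        rw [QuotientGroup.leftRel_apply]
        rw [Subgroup.mem_zpowers_iff]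
        refine ⟨t, Subtype.ext ?_⟩
        have h1 : ((x ^ t : Z) : G) = g ^ (expo z₂ - expo z₁) := by
          push_cast [← hme]
          rw [← zpow_mul, ← ht]
        have h2 : ((z₁⁻¹ * z₂ : Z) : G) = g ^ (expo z₂ - expo z₁) := by
          push_cast [← hexpo z₁, ← hexpo z₂]
          rw [← zpow_neg, ← zpow_add]
          congr 1
          ring
        rw [h1, h2]
      have hfq : Finite (Z ⧸ Subgroup.zpowers x) := Finite.of_injective q hinjq
      rw [Subgroup.index_eq_card]
      exact Nat.card_ne_zero.mpr ⟨⟨QuotientGroup.mk (1 : Z)⟩, hfq⟩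
    intro h0
    have hd := Subgroup.index_dvd_of_le (Subgroup.zpowers_le.mpr hxK)
    rw [h0] at hd
    exact key (zero_dvd_iff.mp hd)

end Cyclic

section CommBound
open Subgroup

lemma bddChn_of_comm : ∀ (n : ℕ) (A : Type u) [Group A]
    (_ : ∀ a b : A, a * b = b * a) (f : Fin n → A),
    Subgroup.closure (Set.range f) = ⊤ → ∃ c, BddChn A c := by
  intro n
  induction n with
  | zero =>
    intro A _ hcomm f hf
    rw [Set.range_eq_empty, Subgroup.closure_empty] at hf
    have hsub : Subsingleton A := ⟨fun a b => by
      have ha : ∀ x : A, x = 1 := fun x => by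
        have : x ∈ (⊥ : Subgroup A) := hf ▸ Subgroup.mem_top x
        simpa [Subgroup.mem_bot] using this
      rw [ha a, ha b]⟩
    exact ⟨0, bddChn_of_subsingleton hsub⟩
  | succ n ih =>
    intro A _ hcomm f hf
    set N := Subgroup.zpowers (f 0) with hN
    haveI : N.Normal := ⟨by
      intro x hx a
      have : a * x * a⁻¹ = x := by rw [hcomm a x, mul_inv_cancel_right]
      rwa [this]⟩
    have hcyc : BddChn ↥N 1 :=
      bddChn_one_of_index (fun K hK => index_ne_zero_zpowers_le hK)
    have hqcomm : ∀ a b : A ⧸ N, a * b = b * a := by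
      intro a b
      obtain ⟨x, rfl⟩ := QuotientGroup.mk_surjective a
      obtain ⟨y, rfl⟩ := QuotientGroup.mk_surjective b
      rw [← QuotientGroup.mk_mul, ← QuotientGroup.mk_mul, hcomm]
    set f' : Fin n → A ⧸ N := fun i => QuotientGroup.mk (f i.succ) with hf'
    have hf'cl : Subgroup.closure (Set.range f') = ⊤ := by
      have h1 : Subgroup.map (QuotientGroup.mk' N) (Subgroup.closure (Set.range f)) = ⊤ := by
        rw [hf, Subgroup.map_top_of_surjective _ (QuotientGroup.mk'_surjective N)]
      rw [MonoidHom.map_closure] at h1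
      rw [eq_top_iff, ← h1]
      refine Subgroup.closure_le _ |>.mpr ?_
      rintro _ ⟨_, ⟨i, rfl⟩, rfl⟩
      induction i using Fin.cases with
      | zero =>
        have : (QuotientGroup.mk' N) (f 0) = 1 :=
          (QuotientGroup.eq_one_iff _).mpr (Subgroup.mem_zpowers (f 0))
        rw [this]
        exact Subgroup.one_mem _
      | succ j =>
        exact Subgroup.subset_closure ⟨j, rfl⟩
    obtain ⟨b, hb⟩ := ih (A ⧸ N) hqcomm f' hf'cl
    exact ⟨1 + b, BddChn.split N hcyc hb⟩

lemma subgroup_fg_of_fg {G : Type u} [Group G] (hfg : ∀ H : Subgroup G, H.FG)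
    (N : Subgroup G) (K : Subgroup ↥N) : K.FG := by
  haveI h1 : Group.FG ↥(K.map N.subtype) :=
    (Group.fg_iff_subgroup_fg _).mpr (hfg _)
  set e : ↥K ≃* ↥(K.map N.subtype) :=
    Subgroup.equivMapOfInjective K N.subtype (Subgroup.subtype_injective N) with he
  haveI h2 : Group.FG ↥K := Group.fg_of_surjective (f := e.symm.toMonoidHom) e.symm.surjective
  exact (Group.fg_iff_subgroup_fg K).mp h2

lemma derived_le_map {G : Type u} [Group G] :
    ∀ k, Subgroup.map ((commutator G).subtype) (derivedSeries ↥(commutator G) k)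
      ≤ derivedSeries G (k+1) := by
  intro k
  induction k with
  | zero =>
    rw [derivedSeries_zero, derivedSeries_one]
    rintro x ⟨y, -, rfl⟩
    exact y.2
  | succ k ih =>
    rw [derivedSeries_succ, derivedSeries_succ (G := G)]
    rw [Subgroup.map_commutator]
    exact commutator_mono ih ih

lemma bddChn_of_solvable : ∀ (k : ℕ) (G : Type u) [Group G],
    (∀ H : Subgroup G, H.FG) → derivedSeries G k = ⊥ → ∃ c, BddChn G c := by
  intro k
  induction k with
  | zero =>
    intro G _ hfg h
    rw [derivedSeries_zero] at h
    have hsub : Subsingleton G := ⟨fun a b => by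
      have ha : ∀ x : G, x = 1 := fun x => by
        have : x ∈ (⊥ : Subgroup G) := h ▸ Subgroup.mem_top x
        simpa [Subgroup.mem_bot] using this
      rw [ha a, ha b]⟩
    exact ⟨0, bddChn_of_subsingleton hsub⟩
  | succ k ih =>
    intro G _ hfg h
    set N := commutator G with hNdef
    have hder : derivedSeries ↥N k = ⊥ := by
      have h1 := derived_le_map (G := G) k
      rw [h] at h1
      rw [eq_bot_iff]
      intro x hx
      have := h1 (Subgroup.mem_map_of_mem _ hx)
      rw [Subgroup.mem_bot] at this ⊢
      exact Subtype.ext this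
    obtain ⟨a, ha⟩ := ih ↥N (subgroup_fg_of_fg hfg N) hder
    -- quotient is abelian and finitely generated
    have hqcomm : ∀ x y : G ⧸ N, x * y = y * x := by
      intro x y
      obtain ⟨u, rfl⟩ := QuotientGroup.mk_surjective x
      obtain ⟨v, rfl⟩ := QuotientGroup.mk_surjective y
      rw [← QuotientGroup.mk_mul, ← QuotientGroup.mk_mul]
      apply QuotientGroup.eq.mpr
      have : (u * v)⁻¹ * (v * u) = ⁅v⁻¹, u⁻¹⁆ := by
        rw [commutatorElement_def]
        group
      rw [this]
      exact commutator_mem_commutator (Subgroup.mem_top _) (Subgroup.mem_top _)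
    obtain ⟨S, hScl, hSfin⟩ := (Subgroup.fg_iff ⊤).mp (hfg ⊤)
    have hTfin : ((QuotientGroup.mk' N) '' S).Finite := hSfin.image _
    obtain ⟨n, femb, hrange⟩ := hTfin.fin_embedding
    have hfcl : Subgroup.closure (Set.range (femb : Fin n → G ⧸ N)) = ⊤ := by
      rw [hrange]
      rw [← MonoidHom.map_closure, hScl, Subgroup.map_top_of_surjective _
        (QuotientGroup.mk'_surjective N)]
    obtain ⟨b, hb⟩ := bddChn_of_comm n (G ⧸ N) hqcomm femb hfcl
    exact ⟨a + b, BddChn.split N ha hb⟩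

lemma exists_bddChn {G : Type u} [Group G] (hsolv : IsSolvable G)
    (hfg : ∀ H : Subgroup G, H.FG) : ∃ c, BddChn G c := by
  obtain ⟨k, hk⟩ := (isSolvable_def G).mp hsolv
  exact bddChn_of_solvable k G hfg hk

end CommBound

section LCS
variable {G : Type u} [Group G]

lemma fg_map_of_fg {G' : Type*} [Group G'] {H : Subgroup G} (h : H.FG) (f : G →* G') :
    (H.map f).FG := by
  obtain ⟨S, hS, hfin⟩ := (Subgroup.fg_iff H).mp h
  exact (Subgroup.fg_iff _).mpr ⟨f '' S, by rw [← MonoidHom.map_closure, hS], hfin.image f⟩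

/-- Uniform exponent on the torsion part of `A` mod `B`. -/
lemma exists_exponent (hfg : ∀ H : Subgroup G, H.FG)
    (A B : Subgroup G) [hBn : B.Normal]
    (hcomm : ∀ a ∈ A, ∀ b ∈ A, ⁅a, b⁆ ∈ B) :
    ∃ e ≠ 0, ∀ g, g ∈ A → (∃ k, k ≠ 0 ∧ g ^ k ∈ B) → g ^ e ∈ B := by
  haveI : (B.subgroupOf A).Normal := hBn.comap A.subtype
  set Q := ↥A ⧸ B.subgroupOf A with hQ
  have hQcomm : ∀ x y : Q, x * y = y * x := by
    intro x y
    obtain ⟨a, rfl⟩ := QuotientGroup.mk_surjective x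
    obtain ⟨b, rfl⟩ := QuotientGroup.mk_surjective y
    rw [← QuotientGroup.mk_mul, ← QuotientGroup.mk_mul]
    apply QuotientGroup.eq.mpr
    rw [Subgroup.mem_subgroupOf]
    have hcoe : (((a * b)⁻¹ * (b * a) : ↥A) : G) = ⁅(b : G)⁻¹, (a : G)⁻¹⁆ := by
      push_cast
      rw [commutatorElement_def]
      group
    rw [hcoe]
    exact hcomm _ (A.inv_mem b.2) _ (A.inv_mem a.2)
  set T : Subgroup Q :=
    { carrier := {q | ∃ k, k ≠ 0 ∧ q ^ k = 1}
      one_mem' := ⟨1, one_ne_zero, one_pow 1⟩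
      mul_mem' := by
        rintro q r ⟨k, hk, hqk⟩ ⟨l, hl, hrl⟩
        refine ⟨k * l, Nat.mul_ne_zero hk hl, ?_⟩
        have hcq : Commute q r := hQcomm q r
        rw [hcq.mul_pow, pow_mul, hqk, one_pow, one_mul, mul_comm k l, pow_mul, hrl, one_pow]
      inv_mem' := by
        rintro q ⟨k, hk, hqk⟩
        exact ⟨k, hk, by rw [inv_pow, hqk, inv_one]⟩ } with hT
  have hTfg : T.FG := by
    have hX : (Subgroup.comap (QuotientGroup.mk' (B.subgroupOf A)) T).FG :=
      subgroup_fg_of_fg hfg A _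
    have : (Subgroup.comap (QuotientGroup.mk' (B.subgroupOf A)) T).map
        (QuotientGroup.mk' (B.subgroupOf A)) = T :=
      Subgroup.map_comap_eq_self_of_surjective (QuotientGroup.mk'_surjective _) T
    rw [← this]
    exact fg_map_of_fg hX _
  letI : CommGroup ↥T :=
    { (inferInstance : Group ↥T) with
      mul_comm := fun x y => Subtype.ext (hQcomm ↑x ↑y) }
  haveI : Group.FG ↥T := (Group.fg_iff_subgroup_fg T).mpr hTfg
  have htor : Monoid.IsTorsion ↥T := by
    rintro ⟨q, k, hk, hqk⟩
    refine isOfFinOrder_iff_pow_eq_one.mpr ⟨k, Nat.pos_of_ne_zero hk, ?_⟩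
    exact Subtype.ext (by simpa using hqk)
  haveI hfinT : Finite ↥T := CommGroup.finite_of_fg_torsion ↥T htor
  refine ⟨Nat.card ↥T, Nat.card_ne_zero.mpr ⟨⟨1⟩, hfinT⟩, ?_⟩
  rintro g hg ⟨k, hk, hgk⟩
  set q : Q := QuotientGroup.mk (⟨g, hg⟩ : ↥A) with hq
  have hqT : q ∈ T := by
    refine ⟨k, hk, ?_⟩
    rw [hq, ← QuotientGroup.mk_pow, QuotientGroup.eq_one_iff, Subgroup.mem_subgroupOf]
    simpa using hgk
  have hpow : (⟨q, hqT⟩ : ↥T) ^ (Nat.card ↥T) = 1 := pow_card_eq_one'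
  have hq1 : q ^ (Nat.card ↥T) = 1 := by
    have h := congrArg (Subtype.val : ↥T → Q) hpow
    rwa [SubmonoidClass.coe_pow, OneMemClass.coe_one] at h
  rw [hq, ← QuotientGroup.mk_pow, QuotientGroup.eq_one_iff, Subgroup.mem_subgroupOf] at hq1
  simpa using hq1

lemma prime_dvd_exp (B : Subgroup G) [B.Normal] {p e : ℕ} (hp : p.Prime) (_ : e ≠ 0)
    {g : G} (hgnot : g ∉ B) (hgp : g ^ p ∈ B) (hge : g ^ e ∈ B) : p ∣ e := by
  set x : G ⧸ B := QuotientGroup.mk g with hx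
  have hx1 : x ≠ 1 := fun h => hgnot ((QuotientGroup.eq_one_iff g).mp h)
  have hxp : x ^ p = 1 := by
    rw [hx, ← QuotientGroup.mk_pow, QuotientGroup.eq_one_iff]
    exact hgp
  have hxe : x ^ e = 1 := by
    rw [hx, ← QuotientGroup.mk_pow, QuotientGroup.eq_one_iff]
    exact hge
  haveI := Fact.mk hp
  have horder := orderOf_eq_prime hxp hx1
  exact horder ▸ orderOf_dvd_of_pow_eq_one hxe

end LCS

section LCS2
variable {G : Type u} [Group G]

lemma lcs_succ_comm_s6 (n : ℕ) :
    (⊤ : Subgroup G).lowerCentralSeries (n+1) = ⁅(⊤ : Subgroup G).lowerCentralSeries n, (⊤ : Subgroup G)⁆ := rfl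

/-- In a polycyclic group some lower central quotient is torsion. -/
lemma exists_torsion_level (hsolv : IsSolvable G) (hfg : ∀ H : Subgroup G, H.FG) :
    ∃ n : ℕ, ∀ g ∈ (⊤ : Subgroup G).lowerCentralSeries n, ∃ k, k ≠ 0 ∧
      g ^ k ∈ (⊤ : Subgroup G).lowerCentralSeries (n + 1) := by
  obtain ⟨c, hc⟩ := exists_bddChn hsolv hfg
  by_contra hcon
  push_neg at hcon
  set H : ℕ → Subgroup G := fun j => (⊤ : Subgroup G).lowerCentralSeries (c + 1 - j) with hH
  have hmono : Monotone H := fun i j hij => (⊤ : Subgroup G).lowerCentralSeries_antitone (by omega)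
  have hsteps : ∀ j < c + 1, (H j).relIndex (H (j+1)) = 0 := by
    intro j hj
    set k := c - j with hk
    have e1 : c + 1 - j = k + 1 := by omega
    have e2 : c + 1 - (j + 1) = k := by omega
    show ((⊤ : Subgroup G).lowerCentralSeries (c + 1 - j)).relIndex ((⊤ : Subgroup G).lowerCentralSeries (c + 1 - (j+1))) = 0
    rw [e1, e2]
    obtain ⟨g, hg, hgk⟩ := hcon k
    set F : ℕ → (↥((⊤ : Subgroup G).lowerCentralSeries k) ⧸
        ((⊤ : Subgroup G).lowerCentralSeries (k+1)).subgroupOf ((⊤ : Subgroup G).lowerCentralSeries k)) :=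
      fun m => QuotientGroup.mk ((⟨g, hg⟩ : ↥((⊤ : Subgroup G).lowerCentralSeries k)) ^ m) with hF
    have key : ∀ m₁ m₂, m₁ ≤ m₂ → F m₁ = F m₂ → m₁ = m₂ := by
      intro m₁ m₂ hle h
      have hmem := QuotientGroup.eq.mp h
      rw [Subgroup.mem_subgroupOf] at hmem
      have hcoe : ((((⟨g, hg⟩ : ↥((⊤ : Subgroup G).lowerCentralSeries k)) ^ m₁)⁻¹ *
          (⟨g, hg⟩ : ↥((⊤ : Subgroup G).lowerCentralSeries k)) ^ m₂ : ↥((⊤ : Subgroup G).lowerCentralSeries k)) : G)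
          = g ^ (m₂ - m₁) := by
        push_cast
        have h2 : g ^ m₂ = g ^ m₁ * g ^ (m₂ - m₁) := by
          rw [← pow_add]
          congr 1
          omega
        rw [h2, inv_mul_cancel_left]
      rw [hcoe] at hmem
      by_contra hne
      exact hgk (m₂ - m₁) (by omega) hmem
    have hinj : Function.Injective F := by
      intro m₁ m₂ h
      rcases le_total m₁ m₂ with hle | hle
      · exact key m₁ m₂ hle h
      · exact (key m₂ m₁ hle h.symm).symm
    have hinf : Infinite (↥((⊤ : Subgroup G).lowerCentralSeries k) ⧸
        ((⊤ : Subgroup G).lowerCentralSeries (k+1)).subgroupOf ((⊤ : Subgroup G).lowerCentralSeries k)) :=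
      Infinite.of_injective F hinj
    rw [Subgroup.relIndex, Subgroup.index_eq_card]
    exact Nat.card_eq_zero_of_infinite
  have := hc H hmono (c + 1) hsteps
  omega

/-- Propagation of the exponent down the lower central series. -/
lemma exp_propagate {e : ℕ} {i : ℕ}
    (hi : ∀ g ∈ (⊤ : Subgroup G).lowerCentralSeries i, g ^ e ∈ (⊤ : Subgroup G).lowerCentralSeries (i+1)) :
    ∀ h ∈ (⊤ : Subgroup G).lowerCentralSeries (i+1), h ^ e ∈ (⊤ : Subgroup G).lowerCentralSeries (i+2) := by
  set π := QuotientGroup.mk' ((⊤ : Subgroup G).lowerCentralSeries (i+2)) with hπ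
  -- the image of γ_{i+1} is central in the quotient
  have hcent : ∀ w ∈ (⊤ : Subgroup G).lowerCentralSeries (i+1), ∀ q : G ⧸ (⊤ : Subgroup G).lowerCentralSeries (i+2),
      π w * q = q * π w := by
    intro w hw q
    obtain ⟨x, rfl⟩ := QuotientGroup.mk_surjective q
    have h1 : (QuotientGroup.mk (x * w) : G ⧸ (⊤ : Subgroup G).lowerCentralSeries (i+2))
        = QuotientGroup.mk (w * x) := by
      apply QuotientGroup.eq.mpr
      have hco : (x * w)⁻¹ * (w * x) = ⁅w⁻¹, x⁻¹⁆ := by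
        rw [commutatorElement_def]
        group
      rw [hco, lcs_succ_comm_s6 (i+1)]
      exact commutator_mem_commutator (((⊤ : Subgroup G).lowerCentralSeries (i+1)).inv_mem hw)
        (Subgroup.mem_top _)
    show QuotientGroup.mk (w) * QuotientGroup.mk x = QuotientGroup.mk x * QuotientGroup.mk w
    rw [← QuotientGroup.mk_mul, ← QuotientGroup.mk_mul]
    exact h1.symm
  -- commutator power identity
  have hpow : ∀ g ∈ (⊤ : Subgroup G).lowerCentralSeries i, ∀ x : G, ∀ k : ℕ,
      (π ⁅g, x⁆) ^ k = π ⁅g ^ k, x⁆ := by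
    intro g hg x k
    induction k with
    | zero => rw [pow_zero, commutatorElement_def, pow_zero, one_mul, inv_one, mul_one, mul_inv_cancel, map_one]
    | succ k ihk =>
      have hsplit : ⁅g ^ (k+1), x⁆ = g * ⁅g ^ k, x⁆ * g⁻¹ * ⁅g, x⁆ := by
        simp only [commutatorElement_def]
        rw [pow_succ']
        group
      have hmemk : ⁅g ^ k, x⁆ ∈ (⊤ : Subgroup G).lowerCentralSeries (i+1) := by
        rw [lcs_succ_comm_s6 i]
        exact commutator_mem_commutator (((⊤ : Subgroup G).lowerCentralSeries i).pow_mem hg k)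
          (Subgroup.mem_top _)
      have hcentk := hcent _ hmemk (π g)
      calc (π ⁅g, x⁆) ^ (k+1) = (π ⁅g, x⁆) ^ k * π ⁅g, x⁆ := by rw [pow_succ]
        _ = π ⁅g ^ k, x⁆ * π ⁅g, x⁆ := by rw [ihk]
        _ = π g * π ⁅g ^ k, x⁆ * (π g)⁻¹ * π ⁅g, x⁆ := by
            rw [← hcentk, mul_inv_cancel_right]
        _ = π ⁅g ^ (k+1), x⁆ := by
            rw [hsplit]
            rw [map_mul, map_mul, map_mul, map_inv]
  -- the subgroup of the quotient where the exponent kills things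
  set T : Subgroup (G ⧸ (⊤ : Subgroup G).lowerCentralSeries (i+2)) :=
    { carrier := {q | q ∈ Subgroup.map π ((⊤ : Subgroup G).lowerCentralSeries (i+1)) ∧ q ^ e = 1}
      one_mem' := ⟨Subgroup.one_mem _, one_pow e⟩
      mul_mem' := by
        rintro q r ⟨hq, hqe⟩ ⟨hr, hre⟩
        refine ⟨Subgroup.mul_mem _ hq hr, ?_⟩
        obtain ⟨w, hw, rfl⟩ := hq
        have hcq : Commute (π w) r := hcent w hw r
        rw [hcq.mul_pow, hqe, hre, one_mul]
      inv_mem' := by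
        rintro q ⟨hq, hqe⟩
        exact ⟨Subgroup.inv_mem _ hq, by rw [inv_pow, hqe, inv_one]⟩ } with hT
  have hle : (⊤ : Subgroup G).lowerCentralSeries (i+1) ≤ Subgroup.comap π T := by
    rw [lcs_succ_comm_s6 i, commutator_le]
    intro g hg x _
    refine ⟨Subgroup.mem_map_of_mem π ?_, ?_⟩
    · rw [lcs_succ_comm_s6 i]
      exact commutator_mem_commutator hg (Subgroup.mem_top _)
    · rw [hpow g hg x e]
      have hge : ⁅g ^ e, x⁆ ∈ (⊤ : Subgroup G).lowerCentralSeries (i+2) := by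
        rw [lcs_succ_comm_s6 (i+1)]
        exact commutator_mem_commutator (hi g hg) (Subgroup.mem_top _)
      rw [hπ]
      exact (QuotientGroup.eq_one_iff _).mpr hge
  intro h hh
  have hmem := hle hh
  have hpe : (π h) ^ e = 1 := hmem.2
  rw [← map_pow] at hpe
  exact (QuotientGroup.eq_one_iff _).mp hpe

end LCS2



/-- `τ(G)`: the set of primes dividing the order of the torsion subgroup of some lower
central quotient `γ_i(G)/γ_{i+1}(G)`; equivalently (by Cauchy's theorem) the set of primes
`p` for which some lower central quotient has an element of order `p`. -/
def tauSet (G : Type*) [Group G] : Set ℕ :=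
  {p | p.Prime ∧ ∃ i : ℕ, ∃ g ∈ (⊤ : Subgroup G).lowerCentralSeries i,
    g ∉ (⊤ : Subgroup G).lowerCentralSeries (i + 1) ∧ g ^ p ∈ (⊤ : Subgroup G).lowerCentralSeries (i + 1)}

/-- For a polycyclic group `G`, the set `τ(G)` is finite. -/
theorem stmt6 {G : Type*} [Group G] (hG : IsPolycyclic G) : (tauSet G).Finite := by
  obtain ⟨hsolv, hfg⟩ := hG
  obtain ⟨n, hn⟩ := exists_torsion_level hsolv hfg
  have hcommi : ∀ i : ℕ, ∀ a ∈ (⊤ : Subgroup G).lowerCentralSeries i, ∀ b ∈ (⊤ : Subgroup G).lowerCentralSeries i,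
      ⁅a, b⁆ ∈ (⊤ : Subgroup G).lowerCentralSeries (i+1) := by
    intro i a ha b hb
    rw [lcs_succ_comm_s6 i]
    exact commutator_mem_commutator ha (Subgroup.mem_top _)
  choose E hE0 hE using fun i : ℕ =>
    exists_exponent hfg ((⊤ : Subgroup G).lowerCentralSeries i) ((⊤ : Subgroup G).lowerCentralSeries (i+1)) (hcommi i)
  set e := E n with he_def
  have he0 : e ≠ 0 := hE0 n
  have hbase : ∀ g ∈ (⊤ : Subgroup G).lowerCentralSeries n, g ^ e ∈ (⊤ : Subgroup G).lowerCentralSeries (n+1) :=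
    fun g hg => hE n g hg (hn g hg)
  have hprop : ∀ m : ℕ, ∀ g ∈ (⊤ : Subgroup G).lowerCentralSeries (n + m),
      g ^ e ∈ (⊤ : Subgroup G).lowerCentralSeries (n + m + 1) := by
    intro m
    induction m with
    | zero => exact hbase
    | succ m ihm => exact exp_propagate ihm
  set S : Set ℕ := (⋃ i ∈ Set.Iio n, {p : ℕ | p ∣ E i}) ∪ {p : ℕ | p ∣ e} with hS
  have hSfin : S.Finite := by
    refine Set.Finite.union ?_ ?_
    · refine Set.Finite.biUnion (Set.finite_Iio n) ?_
      intro i _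
      refine (Set.finite_Iic (E i)).subset ?_
      intro p hpd
      exact Set.mem_Iic.mpr (Nat.le_of_dvd (Nat.pos_of_ne_zero (hE0 i)) hpd)
    · refine (Set.finite_Iic e).subset ?_
      intro p hpd
      exact Set.mem_Iic.mpr (Nat.le_of_dvd (Nat.pos_of_ne_zero he0) hpd)
  refine hSfin.subset ?_
  rintro p ⟨hp, i, g, hgi, hgnot, hgp⟩
  by_cases hin : i < n
  · left
    refine Set.mem_biUnion hin ?_
    have hgE : g ^ E i ∈ (⊤ : Subgroup G).lowerCentralSeries (i+1) :=
      hE i g hgi ⟨p, hp.ne_zero, hgp⟩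
    exact prime_dvd_exp ((⊤ : Subgroup G).lowerCentralSeries (i+1)) hp (hE0 i) hgnot hgp hgE
  · right
    push_neg at hin
    have hgE : g ^ e ∈ (⊤ : Subgroup G).lowerCentralSeries (i+1) := by
      have := hprop (i - n) g (by rwa [show n + (i - n) = i by omega])
      rwa [show n + (i - n) + 1 = i + 1 by omega] at this
    exact prime_dvd_exp ((⊤ : Subgroup G).lowerCentralSeries (i+1)) hp he0 hgnot hgp hgE
end

section
/- Let G and H be finitely generated residually nilpotent groups and let τ = τ(G) be the set of primes dividing orders of torsion in lower central quotients of G. Suppose φ: G → H is an injective homomorphism inducing an isomorphism G/G'G ≅ H/H' on abelianizations, and for each i ≥ 2 there is a positive integer n_i coprime to every prime in τ with γ_i(H)^{n_i} ≤ φ(γ_i(G)). Then φ induces isomorphisms G/γ_i(G) ≅ H/γ_i(H) for all i. -/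
/-- If `g ∈ γ_i(G)` and `g ^ n ∈ γ_{i+1}(G)` for a `τ(G)'`-number `n`, then
`g ∈ γ_{i+1}(G)`. -/
lemma tau_pow_lemma {G : Type*} [Group G] {i : ℕ} :
    ∀ n : ℕ, 0 < n → (∀ p ∈ tauSet G, ¬ p ∣ n) → ∀ g : G,
      g ∈ (⊤ : Subgroup G).lowerCentralSeries i → g ^ n ∈ (⊤ : Subgroup G).lowerCentralSeries (i + 1) →
      g ∈ (⊤ : Subgroup G).lowerCentralSeries (i + 1) := by
  intro n
  induction n using Nat.strong_induction_on with
  | _ n ih =>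
    intro hn hcop g hgi hgn
    rcases eq_or_lt_of_le (Nat.succ_le_of_lt hn) with h1 | h2
    · simpa [← h1] using hgn
    have hpp : n.minFac.Prime := Nat.minFac_prime (by omega)
    have hpd : n.minFac ∣ n := Nat.minFac_dvd n
    have hmn : n / n.minFac * n.minFac = n := Nat.div_mul_cancel hpd
    have hm0 : 0 < n / n.minFac := Nat.div_pos (Nat.minFac_le hn) hpp.pos
    have hmlt : n / n.minFac < n := Nat.div_lt_self hn hpp.one_lt
    by_cases hgm : g ^ (n / n.minFac) ∈ (⊤ : Subgroup G).lowerCentralSeries (i + 1)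
    · exact ih _ hmlt hm0 (fun q hq hqm => hcop q hq (hqm.trans (Nat.div_dvd_of_dvd hpd)))
        g hgi hgm
    · exact absurd (hcop n.minFac ⟨hpp, i, g ^ (n / n.minFac), Subgroup.pow_mem _ hgi _, hgm,
        by rw [← pow_mul, hmn]; exact hgn⟩ hpd) (fun h => h)

open scoped commutatorElement

/-- Key lemma: `γ_i(H) ≤ φ(γ_i(G)) ⊔ γ_{i+1}(H)` when `φ` is surjective on
abelianizations. -/
lemma lcs_le_map_sup {G H : Type*} [Group G] [Group H] (φ : G →* H)
    (hab : Function.Surjective (Abelianization.map φ)) :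
    ∀ i : ℕ, (⊤ : Subgroup H).lowerCentralSeries i ≤
      ((⊤ : Subgroup G).lowerCentralSeries i).map φ ⊔ (⊤ : Subgroup H).lowerCentralSeries (i + 1) := by
  have base : ∀ h : H, ∃ g : G, (φ g)⁻¹ * h ∈ (⊤ : Subgroup H).lowerCentralSeries 1 := by
    intro h
    obtain ⟨x, hx⟩ := hab (Abelianization.of h)
    obtain ⟨g, rfl⟩ := Quotient.exists_rep x
    refine ⟨g, ?_⟩
    rw [Subgroup.top_lowerCentralSeries_one]
    have : Abelianization.of (φ g) = Abelianization.of h := by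
      rw [← hx]; rfl
    exact (QuotientGroup.eq (s := commutator H)).mp this
  -- decomposition of an arbitrary element of H at every level
  have Ssur : ∀ i : ℕ, (∀ j ≤ i, (⊤ : Subgroup H).lowerCentralSeries j ≤
      ((⊤ : Subgroup G).lowerCentralSeries j).map φ ⊔ (⊤ : Subgroup H).lowerCentralSeries (j + 1)) →
      ∀ h : H, ∃ g : G, (φ g)⁻¹ * h ∈ (⊤ : Subgroup H).lowerCentralSeries (i + 1) := by
    intro i
    induction i with
    | zero =>
      intro _ h
      exact base h
    | succ i ih =>
      intro hL h
      obtain ⟨g, hg⟩ := ih (fun j hj => hL j (hj.trans (Nat.le_succ i))) h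
      have := hL (i + 1) le_rfl hg
      rw [← SetLike.mem_coe, Subgroup.mul_normal] at this
      obtain ⟨_, ⟨a, ha, rfl⟩, d, hd, heq⟩ := this
      refine ⟨g * a, ?_⟩
      have : (φ (g * a))⁻¹ * h = (φ a)⁻¹ * ((φ g)⁻¹ * h) := by
        rw [map_mul]; group
      rw [this, ← heq]
      simpa using hd
  intro i
  induction i using Nat.strong_induction_on with
  | _ i ih =>
    match i with
    | 0 =>
      intro h _
      obtain ⟨g, hg⟩ := base h
      have h1 : φ g ∈ ((⊤ : Subgroup G).lowerCentralSeries 0).map φ ⊔ (⊤ : Subgroup H).lowerCentralSeries 1 :=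
        Subgroup.mem_sup_left ⟨g, Subgroup.mem_top g, rfl⟩
      have h2 : (φ g)⁻¹ * h ∈ ((⊤ : Subgroup G).lowerCentralSeries 0).map φ ⊔ (⊤ : Subgroup H).lowerCentralSeries 1 :=
        Subgroup.mem_sup_right hg
      simpa using Subgroup.mul_mem _ h1 h2
    | (i + 1) =>
      show ⁅(⊤ : Subgroup H).lowerCentralSeries i, (⊤ : Subgroup H)⁆ ≤ _
      rw [Subgroup.commutator_le]
      intro x hx y _
      set M := ((⊤ : Subgroup G).lowerCentralSeries (i + 1)).map φ ⊔ (⊤ : Subgroup H).lowerCentralSeries (i + 2) with hM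
      -- decompose x = φ a * c with a ∈ γ_i(G), c ∈ γ_{i+1}(H)
      have hx' := ih i (Nat.lt_succ_self i) hx
      rw [← SetLike.mem_coe, Subgroup.mul_normal] at hx'
      obtain ⟨_, ⟨a, ha, rfl⟩, c, hc, hxe⟩ := hx'
      -- decompose y = φ b * d with d ∈ γ_{i+1}(H)
      obtain ⟨b, hb⟩ := Ssur i (fun j hj => ih j (Nat.lt_succ_of_le hj)) y
      set d := (φ b)⁻¹ * y with hd
      have hyd : y = φ b * d := by rw [hd]; group
      have hγ2 : (⊤ : Subgroup H).lowerCentralSeries (i + 2) ≤ M := le_sup_right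
      -- ⁅φa * c, y⁆ = (φa * ⁅c,y⁆ * (φa)⁻¹) * ⁅φa, y⁆
      have key1 : ⁅φ a * c, y⁆ = (φ a * ⁅c, y⁆ * (φ a)⁻¹) * ⁅φ a, y⁆ := by group
      have key2 : ⁅φ a, y⁆ = ⁅φ a, φ b⁆ * (φ b * ⁅φ a, d⁆ * (φ b)⁻¹) := by
        rw [hyd]; group
      rw [← hxe, key1, key2]
      have hφa : φ a ∈ (⊤ : Subgroup H).lowerCentralSeries i :=
        Subgroup.lowerCentralSeries.map φ i ⟨a, ha, rfl⟩
      have m1 : φ a * ⁅c, y⁆ * (φ a)⁻¹ ∈ M := by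
        apply hγ2
        have : ⁅c, y⁆ ∈ (⊤ : Subgroup H).lowerCentralSeries (i + 2) :=
          Subgroup.commutator_mem_commutator hc (Subgroup.mem_top y)
        exact (Subgroup.lowerCentralSeries_normal _ (i + 2)).conj_mem _ this _
      have m2 : ⁅φ a, φ b⁆ ∈ M := by
        apply le_sup_left (α := Subgroup H)
        exact ⟨⁅a, b⁆, Subgroup.commutator_mem_commutator ha (Subgroup.mem_top b),
          by rw [map_commutatorElement]⟩
      have m3 : φ b * ⁅φ a, d⁆ * (φ b)⁻¹ ∈ M := by
        apply hγ2
        have : ⁅φ a, d⁆ ∈ (⊤ : Subgroup H).lowerCentralSeries (i + 2) := by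
          have hle : ⁅(⊤ : Subgroup H).lowerCentralSeries i, (⊤ : Subgroup H).lowerCentralSeries (i + 1)⁆ ≤
              (⊤ : Subgroup H).lowerCentralSeries (i + 2) := by
            rw [Subgroup.commutator_comm]
            exact Subgroup.commutator_mono le_rfl le_top
          exact hle (Subgroup.commutator_mem_commutator hφa hb)
        exact (Subgroup.lowerCentralSeries_normal _ (i + 2)).conj_mem _ this _
      exact Subgroup.mul_mem _ m1 (Subgroup.mul_mem _ m2 m3)

/-- Theorem 2.2: if `G, H` are f.g. residually nilpotent, `φ : G → H` is injective,
induces an isomorphism on abelianizations, and for each `i ≥ 2` there is a `τ(G)'`-number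
`n_i` with `γ_i(H)^{n_i} ≤ φ(γ_i(G))`, then `φ` induces isomorphisms
`G/γ_i(G) ≅ H/γ_i(H)` for all `i` (surjective and injective on each quotient).
(`lowerCentralSeries _ (i-1)` is the paper's `γ_i`.) -/
theorem stmt7 {G H : Type*} [Group G] [Group H]
    (hGfg : Group.FG G) (hHfg : Group.FG H)
    (hGres : (⨅ i : ℕ, (⊤ : Subgroup G).lowerCentralSeries i) = ⊥)
    (hHres : (⨅ i : ℕ, (⊤ : Subgroup H).lowerCentralSeries i) = ⊥)
    (φ : G →* H) (hinj : Function.Injective φ)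
    (hab : Function.Bijective (Abelianization.map φ))
    (hpow : ∀ i : ℕ, 2 ≤ i → ∃ n : ℕ, 0 < n ∧ (∀ p ∈ tauSet G, ¬ p ∣ n) ∧
      ∀ h ∈ (⊤ : Subgroup H).lowerCentralSeries (i - 1), h ^ n ∈ ((⊤ : Subgroup G).lowerCentralSeries (i - 1)).map φ) :
    ∀ i : ℕ, (∀ h : H, ∃ g : G, φ g * h⁻¹ ∈ (⊤ : Subgroup H).lowerCentralSeries i) ∧
      (∀ g : G, φ g ∈ (⊤ : Subgroup H).lowerCentralSeries i → g ∈ (⊤ : Subgroup G).lowerCentralSeries i) := by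
  have hL := lcs_le_map_sup φ hab.2
  intro i
  constructor
  · -- surjectivity mod γ_i(H), by induction on i
    induction i with
    | zero => exact fun h => ⟨1, Subgroup.mem_top _⟩
    | succ i ih =>
      intro h
      obtain ⟨g, hg⟩ := ih h
      have := hL i hg
      rw [← SetLike.mem_coe, Subgroup.mul_normal] at this
      obtain ⟨_, ⟨a, _, rfl⟩, d, hd, heq⟩ := this
      refine ⟨a⁻¹ * g, ?_⟩
      have : φ (a⁻¹ * g) * h⁻¹ = (φ a)⁻¹ * (φ g * h⁻¹) := by
        rw [map_mul, map_inv]; group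
      rw [this, ← heq]
      simpa using hd
  · -- injectivity mod γ_i(G), by induction on i
    induction i with
    | zero => exact fun g _ => Subgroup.mem_top g
    | succ i ih =>
      intro g hg
      have hgi : g ∈ (⊤ : Subgroup G).lowerCentralSeries i :=
        ih g (Subgroup.lowerCentralSeries_antitone _ (Nat.le_succ i) hg)
      obtain ⟨n, hn, hcop, hpw⟩ := hpow (i + 2) (by omega)
      have : φ g ^ n ∈ ((⊤ : Subgroup G).lowerCentralSeries (i + 2 - 1)).map φ := hpw (φ g) (by
        simpa using hg)
      obtain ⟨g', hg', hgeq⟩ := this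
      have : φ (g ^ n) = φ g' := by rw [map_pow, hgeq]
      have hgn : g ^ n ∈ (⊤ : Subgroup G).lowerCentralSeries (i + 1) := by
        rw [hinj this]; simpa using hg'
      exact tau_pow_lemma n hn hcop g hgi hgn
end

section
/- Let G be a residually nilpotent group and M a normal subgroup of G with G/M nilpotent. Then G/Z(M) is residually nilpotent, where Z(M) is the center of M. -/
open Pointwise
open scoped commutatorElement


/-- If `G` is residually nilpotent, `M ⊲ G` and `G/M` is nilpotent, then `G/Z(M)` is
residually nilpotent.  Here `Z(M) = M ⊓ centralizer M` is the center of `M` viewed as a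
subgroup of `G`, and residual nilpotence of the quotient `G/Z(M)` is expressed as
`⋂_i γ_i(G/Z(M)) = 1`, i.e. `⋂_i (Z(M)·γ_i(G)) = Z(M)`. -/
theorem stmt8 {G : Type*} [Group G]
    (hres : (⨅ i : ℕ, (⊤ : Subgroup G).lowerCentralSeries i) = ⊥)
    (M : Subgroup G) [M.Normal] (hnil : Group.IsNilpotent (G ⧸ M)) :
    (⨅ i : ℕ, ((M ⊓ Subgroup.centralizer (M : Set G)) ⊔ (⊤ : Subgroup G).lowerCentralSeries i))
      = M ⊓ Subgroup.centralizer (M : Set G) := by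
  set Z := M ⊓ Subgroup.centralizer (M : Set G) with hZdef
  apply le_antisymm
  · intro x hx
    rw [Subgroup.mem_iInf] at hx
    -- γ_n(G) ≤ M for some n
    obtain ⟨n, hn⟩ := Subgroup.nilpotent_iff_lowerCentralSeries.mp hnil
    have hγM : (⊤ : Subgroup G).lowerCentralSeries n ≤ M := by
      intro g hg
      have h1 : (QuotientGroup.mk' M) g ∈ ((⊤ : Subgroup G).lowerCentralSeries n).map (QuotientGroup.mk' M) :=
        Subgroup.mem_map_of_mem _ hg
      have h2 : (QuotientGroup.mk' M) g ∈ (⊤ : Subgroup (G ⧸ M)).lowerCentralSeries n := by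
        rw [Subgroup.map_lowerCentralSeries, Subgroup.map_top_of_surjective _ (QuotientGroup.mk'_surjective M)] at h1
        exact h1
      rw [hn, Subgroup.mem_bot] at h2
      rwa [← QuotientGroup.ker_mk' M, MonoidHom.mem_ker]
    -- x ∈ M
    have hxM : x ∈ M := by
      have := hx n
      have hle : Z ⊔ (⊤ : Subgroup G).lowerCentralSeries n ≤ M := sup_le inf_le_left hγM
      exact hle this
    refine ⟨hxM, Subgroup.mem_centralizer_iff.mpr fun m hm => ?_⟩
    -- show ⁅x, m⁆ = 1
    have hcomm : ⁅x, m⁆ = 1 := by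
      have hmem : ⁅x, m⁆ ∈ (⨅ i : ℕ, (⊤ : Subgroup G).lowerCentralSeries i) := by
        rw [Subgroup.mem_iInf]
        intro i
        cases i with
        | zero => exact Subgroup.mem_top _
        | succ j =>
          -- decompose x = z * g with z ∈ Z, g ∈ γ_j
          have hxj := hx j
          have : x ∈ ((Z : Set G) * ((⊤ : Subgroup G).lowerCentralSeries j : Set G)) := by
            rw [← Subgroup.mul_normal]
            exact hxj
          obtain ⟨z, hz, g, hg, rfl⟩ := this
          have hzC : z ∈ Subgroup.centralizer (M : Set G) := hz.2
          have hm' : g * m * g⁻¹ ∈ M := Subgroup.Normal.conj_mem ‹M.Normal› m hm g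
          have hzm : z * (g * m * g⁻¹) * z⁻¹ = g * m * g⁻¹ := by
            have := (Subgroup.mem_centralizer_iff.mp hzC) _ hm'
            rw [← this]
            group
          have heq : ⁅z * g, m⁆ = ⁅g, m⁆ := by
            have : ⁅z * g, m⁆ = z * (g * m * g⁻¹) * z⁻¹ * m⁻¹ := by
              simp [commutatorElement_def, mul_assoc]
            rw [this, hzm]
            simp [commutatorElement_def, mul_assoc]
          rw [heq, Subgroup.lowerCentralSeries_succ]
          exact Subgroup.commutator_mem_commutator hg (Subgroup.mem_top m)
      rw [hres, Subgroup.mem_bot] at hmem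
      exact hmem
    have := commutatorElement_eq_one_iff_commute.mp hcomm
    exact this.symm.eq
  · exact le_iInf fun i => le_sup_left
end

section
/- Let G be a residually nilpotent group and M a normal subgroup with G/M nilpotent. Then for every j ≥ 1, the quotient G/Z_j(M) is residually nilpotent, where Z_j(M) is the j-th term of the upper central series of M. -/
/-- The `j`-th term of the upper central series of a subgroup `M ≤ G`, viewed as a
subgroup of `G`. -/
def zUp {G : Type*} [Group G] (M : Subgroup G) (j : ℕ) : Subgroup G :=
  (upperCentralSeries M j).map M.subtype

lemma zUp_zero {G : Type*} [Group G] (M : Subgroup G) : zUp M 0 = ⊥ := by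
  simp [zUp, upperCentralSeries, Subgroup.upperCentralSeries_zero]

lemma zUp_le {G : Type*} [Group G] (M : Subgroup G) (j : ℕ) : zUp M j ≤ M := by
  rintro x ⟨y, _, rfl⟩; exact y.2

lemma mem_sup_normal {G : Type*} [Group G] {H N : Subgroup G} [N.Normal] {x : G}
    (hx : x ∈ H ⊔ N) : ∃ a ∈ H, ∃ b ∈ N, x = a * b := by
  have : x ∈ (↑(H ⊔ N) : Set G) := hx
  rw [Subgroup.mul_normal] at this
  obtain ⟨a, ha, b, hb, rfl⟩ := this
  exact ⟨a, ha, b, hb, rfl⟩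

lemma zUp_key {G : Type*} [Group G]
    (hres : (⨅ i : ℕ, (⊤ : Subgroup G).lowerCentralSeries i) = ⊥)
    (M : Subgroup G) [M.Normal] (c : ℕ) (hc : (⊤ : Subgroup G).lowerCentralSeries c ≤ M) :
    ∀ j : ℕ, ∀ x : G, (∀ i : ℕ, x ∈ zUp M j ⊔ (⊤ : Subgroup G).lowerCentralSeries i) → x ∈ zUp M j := by
  intro j
  induction j with
  | zero =>
    intro x hx
    rw [zUp_zero]
    rw [← hres]
    refine Subgroup.mem_iInf.mpr fun i => ?_
    have := hx i
    rwa [zUp_zero, bot_sup_eq] at this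
  | succ j ih =>
    intro x hx
    -- x ∈ M
    have hxM : x ∈ M := by
      obtain ⟨a, ha, b, hb, rfl⟩ := mem_sup_normal (hx c)
      exact M.mul_mem (zUp_le M (j + 1) ha) (hc hb)
    -- the commutator condition
    have hcomm : ∀ m ∈ M, x * m * x⁻¹ * m⁻¹ ∈ zUp M j := by
      intro m hm
      refine ih _ fun i => ?_
      obtain ⟨a, ha, b, hb, rfl⟩ := mem_sup_normal (hx i)
      -- [ab, m] = a [b,m] a⁻¹ * [a,m]
      have key : (a * b) * m * (a * b)⁻¹ * m⁻¹
          = (a * (b * m * b⁻¹ * m⁻¹) * a⁻¹) * (a * m * a⁻¹ * m⁻¹) := by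
        group
      rw [key]
      refine Subgroup.mul_mem _ ?_ ?_
      · -- conjugate of [b,m] ∈ γ_{i+1} ≤ γ_i
        apply Subgroup.mem_sup_right
        have hbm : b * m * b⁻¹ * m⁻¹ ∈ (⊤ : Subgroup G).lowerCentralSeries (i + 1) := by
          rw [Subgroup.mem_lowerCentralSeries_succ_iff]
          exact Subgroup.subset_closure ⟨b, hb, m, Subgroup.mem_top m, rfl⟩
        have : b * m * b⁻¹ * m⁻¹ ∈ (⊤ : Subgroup G).lowerCentralSeries i :=
          Subgroup.lowerCentralSeries_antitone ⊤ (Nat.le_succ i) hbm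
        exact Subgroup.Normal.conj_mem inferInstance _ this a
      · -- [a, m] ∈ zUp M j
        apply Subgroup.mem_sup_left
        obtain ⟨a', ha', rfl⟩ := ha
        have := mem_upperCentralSeries_succ_iff.mp ha' ⟨m, hm⟩
        exact ⟨a' * ⟨m, hm⟩ * a'⁻¹ * (⟨m, hm⟩ : M)⁻¹, this, rfl⟩
    -- conclude x ∈ zUp M (j+1)
    refine ⟨⟨x, hxM⟩, ?_, rfl⟩
    show _ ∈ Subgroup.upperCentralSeries M (j + 1)
    rw [mem_upperCentralSeries_succ_iff]
    intro y
    have := hcomm y y.2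
    obtain ⟨u, hu, hu'⟩ := this
    have : u = ⟨x, hxM⟩ * y * ⟨x, hxM⟩⁻¹ * y⁻¹ := by
      apply Subtype.ext
      simpa using hu'
    rwa [this] at hu

/-- If `G` is residually nilpotent, `M ⊲ G` and `G/M` is nilpotent, then for every `j`
the quotient `G/Z_j(M)` is residually nilpotent; residual nilpotence of the quotient is
expressed as `⋂_i (Z_j(M)·γ_i(G)) = Z_j(M)`. -/
theorem stmt9 {G : Type*} [Group G]
    (hres : (⨅ i : ℕ, (⊤ : Subgroup G).lowerCentralSeries i) = ⊥)
    (M : Subgroup G) [M.Normal] (hnil : Group.IsNilpotent (G ⧸ M)) :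
    ∀ j : ℕ, 1 ≤ j →
      (⨅ i : ℕ, (zUp M j ⊔ (⊤ : Subgroup G).lowerCentralSeries i)) = zUp M j := by
  obtain ⟨c, hc⟩ := Subgroup.nilpotent_iff_lowerCentralSeries.mp hnil
  have hcM : (⊤ : Subgroup G).lowerCentralSeries c ≤ M := by
    intro g hg
    have : (QuotientGroup.mk' M) g ∈ (⊤ : Subgroup (G ⧸ M)).lowerCentralSeries c := by
      have h := Subgroup.map_lowerCentralSeries (⊤ : Subgroup G) (QuotientGroup.mk' M) c
      rw [← MonoidHom.range_eq_map, MonoidHom.range_eq_top.mpr (QuotientGroup.mk'_surjective M)] at h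
      exact h ▸ ⟨g, hg, rfl⟩
    rw [hc, Subgroup.mem_bot] at this
    simpa [QuotientGroup.eq_one_iff] using this
  intro j _
  refine le_antisymm ?_ (le_iInf fun i => le_sup_left)
  intro x hx
  exact zUp_key hres M c hcM j x fun i => Subgroup.mem_iInf.mp hx i
end

section
/- Let G, H be residually nilpotent groups and φ: G → H a monomorphism inducing isomorphisms G/γ_i(G) ≅ H/γ_i(H) for all i. If N ⊲ H with H/N nilpotent and M = φ^{-1}(N), then φ^{-1}(Z_j(N)) = Z_j(M) for all j ≥ 0, where Z_j denotes the j-th term of the upper central series. -/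
open scoped commutatorElement

def commList {K : Type*} [Group K] (x : K) (l : List K) : K :=
  l.foldl (fun a y => ⁅a, y⁆) x

@[simp] lemma commList_nil {K : Type*} [Group K] (x : K) : commList x [] = x := rfl

@[simp] lemma commList_cons {K : Type*} [Group K] (x y : K) (l : List K) :
    commList x (y :: l) = commList ⁅x, y⁆ l := rfl

lemma map_commList {K L : Type*} [Group K] [Group L] (f : K →* L) (x : K) (l : List K) :
    f (commList x l) = commList (f x) (l.map f) := by
  induction l generalizing x with
  | nil => rfl
  | cons y t ih => simp [ih, map_commutatorElement]

lemma mem_ucs_iff {K : Type*} [Group K] : ∀ (j : ℕ) (x : K),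
    x ∈ upperCentralSeries K j ↔ ∀ l : List K, l.length = j → commList x l = 1
  | 0, x => by
    rw [show upperCentralSeries K 0 = ⊥ from rfl, Subgroup.mem_bot]
    constructor
    · rintro rfl l hl
      cases l with
      | nil => rfl
      | cons y t => simp at hl
    · intro h; exact h [] rfl
  | (j+1), x => by
    rw [show x ∈ upperCentralSeries K (j+1) ↔ ∀ y : K, ⁅x, y⁆ ∈ upperCentralSeries K j from Iff.rfl]
    constructor
    · intro h l hl
      cases l with
      | nil => simp at hl
      | cons y t =>
        simp only [List.length_cons, Nat.add_right_cancel_iff] at hl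
        have := (mem_ucs_iff j ⁅x, y⁆).1 (h y) t hl
        simpa using this
    · intro h y
      rw [mem_ucs_iff j]
      intro t ht
      have := h (y :: t) (by simp [ht])
      simpa using this

lemma mem_zUp_iff {G : Type*} [Group G] (M : Subgroup G) (j : ℕ) (x : G) :
    x ∈ zUp M j ↔ x ∈ M ∧
      ∀ l : List G, (∀ y ∈ l, y ∈ M) → l.length = j → commList x l = 1 := by
  constructor
  · rintro ⟨z, hz, rfl⟩
    refine ⟨z.2, fun l hmem hlen => ?_⟩
    have hz' := (mem_ucs_iff j z).1 hz
    set lm : List M := l.pmap (fun y h => (⟨y, h⟩ : M)) hmem with hlm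
    have h1 : commList z lm = 1 := hz' lm (by simp [hlm, hlen])
    have h2 := congrArg M.subtype h1
    simp only [map_commList, map_one] at h2
    have h3 : List.map (⇑M.subtype) lm = l := by
      simp [hlm, List.map_pmap, List.pmap_eq_map]
    rw [h3] at h2
    exact h2
  · rintro ⟨hx, h⟩
    refine ⟨⟨x, hx⟩, (mem_ucs_iff j _).2 fun l hl => ?_, rfl⟩
    apply Subtype.ext
    show M.subtype (commList (⟨x, hx⟩ : M) l) = 1
    rw [map_commList]
    exact h (l.map M.subtype)
      (fun y hy => by obtain ⟨a, -, rfl⟩ := List.mem_map.1 hy; exact a.2)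
      (by simp [hl])

/-- Lemma 2.5: if `G, H` are residually nilpotent, `φ : G → H` is a monomorphism
inducing isomorphisms on all lower central quotients (`H` is para-`G` via `φ`),
`N ⊲ H` with `H/N` nilpotent and `M = φ⁻¹(N)`, then `φ⁻¹(Z_j(N)) = Z_j(M)` for all `j`. -/
theorem stmt10 {G H : Type*} [Group G] [Group H]
    (hGres : (⨅ i : ℕ, (⊤ : Subgroup G).lowerCentralSeries i) = ⊥)
    (hHres : (⨅ i : ℕ, (⊤ : Subgroup H).lowerCentralSeries i) = ⊥)
    (φ : G →* H) (hinj : Function.Injective φ)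
    (hpara : ∀ i : ℕ, (∀ h : H, ∃ g : G, φ g * h⁻¹ ∈ (⊤ : Subgroup H).lowerCentralSeries i) ∧
      (∀ g : G, φ g ∈ (⊤ : Subgroup H).lowerCentralSeries i → g ∈ (⊤ : Subgroup G).lowerCentralSeries i))
    (N : Subgroup H) [N.Normal] (hnil : Group.IsNilpotent (H ⧸ N)) :
    ∀ j : ℕ, (zUp N j).comap φ = zUp (N.comap φ) j := by
  intro j
  -- choose `c` with `γ_c(H) ≤ N`
  obtain ⟨c, hc⟩ := nilpotent_iff_lowerCentralSeries.1 hnil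
  have hcN : (⊤ : Subgroup H).lowerCentralSeries c ≤ N := by
    intro x hx
    have : (QuotientGroup.mk' N) x ∈ (⊤ : Subgroup (H ⧸ N)).lowerCentralSeries c :=
      lowerCentralSeries.map (QuotientGroup.mk' N) c ⟨x, hx, rfl⟩
    rw [hc, Subgroup.mem_bot] at this
    simpa [QuotientGroup.eq_one_iff] using this
  ext g
  rw [Subgroup.mem_comap, mem_zUp_iff, mem_zUp_iff]
  constructor
  · rintro ⟨h1, h2⟩
    refine ⟨Subgroup.mem_comap.2 h1, fun l hmem hlen => ?_⟩
    apply hinj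
    rw [map_one, map_commList]
    exact h2 (l.map φ) (by simpa [Subgroup.mem_comap] using fun y hy => hmem y hy)
      (by simp [hlen])
  · rintro ⟨h1, h2⟩
    refine ⟨Subgroup.mem_comap.1 h1, fun l hmem hlen => ?_⟩
    -- show the iterated commutator lies in every `γ_i(H)`
    have key : ∀ i : ℕ, commList (φ g) l ∈ (⊤ : Subgroup H).lowerCentralSeries i := by
      intro i
      set k := max i c with hk
      have hkN : (⊤ : Subgroup H).lowerCentralSeries k ≤ N :=
        le_trans (lowerCentralSeries_antitone _ (le_max_right i c)) hcN
      set K := (⊤ : Subgroup H).lowerCentralSeries k with hK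
      have hKn : K.Normal := inferInstance
      set f : H → G := fun n => Classical.choose ((hpara k).1 n) with hf
      have hfK : ∀ n : H, φ (f n) * n⁻¹ ∈ K := fun n =>
        Classical.choose_spec ((hpara k).1 n)
      set ms : List G := l.map f with hms
      have hmsM : ∀ m ∈ ms, m ∈ N.comap φ := by
        rintro m hm
        rw [hms, List.mem_map] at hm
        obtain ⟨n, hn, rfl⟩ := hm
        have : φ (f n) = (φ (f n) * n⁻¹) * n := by group
        rw [Subgroup.mem_comap, this]
        exact N.mul_mem (hkN (hfK n)) (hmem n hn)
      have hcm : commList g ms = 1 := h2 ms hmsM (by simp [hms, hlen])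
      -- pass to the quotient H / K
      set ρ := QuotientGroup.mk' K with hρ
      have hmapeq : l.map ρ = ms.map (fun m => ρ (φ m)) := by
        rw [hms, List.map_map]
        refine List.map_congr_left fun n _ => ?_
        have : ρ (φ (f n) * n⁻¹) = 1 := by
          rw [hρ, QuotientGroup.mk'_apply, QuotientGroup.eq_one_iff]
          exact hfK n
        have h' : ρ (φ (f n)) * (ρ n)⁻¹ = 1 := by
          simpa [map_mul, map_inv] using this
        symm
        exact mul_inv_eq_one.1 h'
      have : ρ (commList (φ g) l) = 1 := by
        rw [map_commList, hmapeq]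
        have : ms.map (fun m => ρ (φ m)) = ms.map (ρ.comp φ) := rfl
        rw [this, show ρ (φ g) = (ρ.comp φ) g from rfl, ← map_commList, hcm, map_one]
      have hmemK : commList (φ g) l ∈ K := by
        rwa [hρ, QuotientGroup.mk'_apply, QuotientGroup.eq_one_iff] at this
      exact lowerCentralSeries_antitone _ (le_max_left i c) hmemK
    have : commList (φ g) l ∈ ⨅ i : ℕ, (⊤ : Subgroup H).lowerCentralSeries i := by
      rw [Subgroup.mem_iInf]; exact key
    rw [hHres, Subgroup.mem_bot] at this
    exact this
end

section
/- Let G, H be residually nilpotent polycyclic groups and φ: G → H a monomorphism inducing isomorphisms G/γ_i(G) ≅ H/γ_i(H) for all i. If the derived subgroup G' is nilpotent of class at most c, then H' is nilpotent of class at most c. -/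
open scoped commutatorElement

private lemma mk_eq_iff' {H : Type*} [Group H] (N : Subgroup H) [N.Normal] (a b : H) :
    a * b⁻¹ ∈ N ↔ (a : H ⧸ N) = b := by
  rw [QuotientGroup.eq]
  constructor
  · intro h
    have := (Subgroup.Normal.mem_comm_iff ‹N.Normal›).mp h
    simpa using N.inv_mem this
  · intro h
    have := N.inv_mem h
    simp only [mul_inv_rev, inv_inv] at this
    exact (Subgroup.Normal.mem_comm_iff ‹N.Normal›).mp this

private lemma mk_commutator {H : Type*} [Group H] (N : Subgroup H) [N.Normal] (a b : H) :
    ((⁅a, b⁆ : H) : H ⧸ N) = ⁅(a : H ⧸ N), (b : H ⧸ N)⁆ :=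
  map_commutatorElement (QuotientGroup.mk' N) a b

private lemma lcs_comm_zero {H : Type*} [Group H] :
    ((⊤ : Subgroup (commutator H)).lowerCentralSeries 0).map (commutator H).subtype = commutator H := by
  rw [Subgroup.lowerCentralSeries_zero, ← MonoidHom.range_eq_map, Subgroup.range_subtype]

private lemma lcs_comm_succ {H : Type*} [Group H] (n : ℕ) :
    ((⊤ : Subgroup (commutator H)).lowerCentralSeries (n + 1)).map (commutator H).subtype =
      ⁅((⊤ : Subgroup (commutator H)).lowerCentralSeries n).map (commutator H).subtype, commutator H⁆ := by
  have h1 : (⊤ : Subgroup (commutator H)).lowerCentralSeries (n + 1) =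
      ⁅(⊤ : Subgroup (commutator H)).lowerCentralSeries n, (⊤ : Subgroup (commutator H))⁆ := rfl
  rw [h1, Subgroup.map_commutator]
  congr 1
  rw [← MonoidHom.range_eq_map, Subgroup.range_subtype]

private theorem stmt11' {G H : Type*} [Group G] [Group H]
    (hHres : (⨅ i : ℕ, (⊤ : Subgroup H).lowerCentralSeries i) = ⊥)
    (φ : G →* H)
    (hpara : ∀ i : ℕ, (∀ h : H, ∃ g : G, φ g * h⁻¹ ∈ (⊤ : Subgroup H).lowerCentralSeries i))
    (c : ℕ) (hG' : (⊤ : Subgroup (commutator G)).lowerCentralSeries c = ⊥) :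
    (⊤ : Subgroup (commutator H)).lowerCentralSeries c = ⊥ := by
  -- base approximation: elements of H' approximated by φ of elements of G'
  have base : ∀ j : ℕ, ∀ h ∈ ((⊤ : Subgroup (commutator H)).lowerCentralSeries 0).map (commutator H).subtype,
      ∃ g ∈ ((⊤ : Subgroup (commutator G)).lowerCentralSeries 0).map (commutator G).subtype,
      ((φ g : H) : H ⧸ (⊤ : Subgroup H).lowerCentralSeries j) = (h : H ⧸ (⊤ : Subgroup H).lowerCentralSeries j) := by
    intro j h hh
    rw [lcs_comm_zero] at hh
    induction hh using Subgroup.closure_induction with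
    | mem x hx =>
        obtain ⟨a, -, b, -, rfl⟩ := hx
        obtain ⟨ga, hga⟩ := hpara j a
        obtain ⟨gb, hgb⟩ := hpara j b
        rw [mk_eq_iff'] at hga hgb
        refine ⟨⁅ga, gb⁆, ?_, ?_⟩
        · rw [lcs_comm_zero]
          exact Subgroup.commutator_mem_commutator (Subgroup.mem_top _) (Subgroup.mem_top _)
        · rw [map_commutatorElement, mk_commutator, mk_commutator, hga, hgb]
    | one => exact ⟨1, Subgroup.one_mem _, by simp⟩
    | mul x y _ _ hx hy =>
        obtain ⟨gx, hgx, hgx'⟩ := hx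
        obtain ⟨gy, hgy, hgy'⟩ := hy
        refine ⟨gx * gy, Subgroup.mul_mem _ hgx hgy, ?_⟩
        rw [map_mul, QuotientGroup.mk_mul, QuotientGroup.mk_mul, hgx', hgy']
    | inv x _ hx =>
        obtain ⟨gx, hgx, hgx'⟩ := hx
        refine ⟨gx⁻¹, Subgroup.inv_mem _ hgx, ?_⟩
        rw [map_inv, QuotientGroup.mk_inv, QuotientGroup.mk_inv, hgx']
  -- key approximation claim, by induction on n
  have key : ∀ n j : ℕ, ∀ h ∈ ((⊤ : Subgroup (commutator H)).lowerCentralSeries n).map (commutator H).subtype,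
      ∃ g ∈ ((⊤ : Subgroup (commutator G)).lowerCentralSeries n).map (commutator G).subtype,
      ((φ g : H) : H ⧸ (⊤ : Subgroup H).lowerCentralSeries j) = (h : H ⧸ (⊤ : Subgroup H).lowerCentralSeries j) := by
    intro n
    induction n with
    | zero => exact base
    | succ n ih =>
        intro j h hh
        rw [lcs_comm_succ, Subgroup.commutator_def] at hh
        induction hh using Subgroup.closure_induction with
        | mem x hx =>
            obtain ⟨a, ha, b, hb, rfl⟩ := hx
            have hb' : b ∈ ((⊤ : Subgroup (commutator H)).lowerCentralSeries 0).map (commutator H).subtype := by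
              rw [lcs_comm_zero]; exact hb
            obtain ⟨ga, hga, hga'⟩ := ih j a ha
            obtain ⟨gb, hgb, hgb'⟩ := base j b hb'
            refine ⟨⁅ga, gb⁆, ?_, ?_⟩
            · rw [lcs_comm_succ]
              rw [lcs_comm_zero] at hgb
              exact Subgroup.commutator_mem_commutator hga hgb
            · rw [map_commutatorElement, mk_commutator, mk_commutator, hga', hgb']
        | one => exact ⟨1, Subgroup.one_mem _, by simp⟩
        | mul x y _ _ hx hy =>
            obtain ⟨gx, hgx, hgx'⟩ := hx
            obtain ⟨gy, hgy, hgy'⟩ := hy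
            refine ⟨gx * gy, Subgroup.mul_mem _ hgx hgy, ?_⟩
            rw [map_mul, QuotientGroup.mk_mul, QuotientGroup.mk_mul, hgx', hgy']
        | inv x _ hx =>
            obtain ⟨gx, hgx, hgx'⟩ := hx
            refine ⟨gx⁻¹, Subgroup.inv_mem _ hgx, ?_⟩
            rw [map_inv, QuotientGroup.mk_inv, QuotientGroup.mk_inv, hgx']
  -- conclude using residual nilpotence of H
  rw [eq_bot_iff]
  intro x hx
  have hx' : (x : H) ∈ ((⊤ : Subgroup (commutator H)).lowerCentralSeries c).map (commutator H).subtype :=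
    ⟨x, hx, rfl⟩
  have hmem : ∀ j : ℕ, (x : H) ∈ (⊤ : Subgroup H).lowerCentralSeries j := by
    intro j
    obtain ⟨g, hg, hg'⟩ := key c j (x : H) hx'
    rw [hG', Subgroup.map_bot, Subgroup.mem_bot] at hg
    subst hg
    rw [map_one] at hg'
    have h1 : ((1 : H) : H ⧸ (⊤ : Subgroup H).lowerCentralSeries j) = ((x : H) : H ⧸ (⊤ : Subgroup H).lowerCentralSeries j) := by
      simpa using hg'
    have := (mk_eq_iff' ((⊤ : Subgroup H).lowerCentralSeries j) 1 (x : H)).mpr h1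
    simpa using ((⊤ : Subgroup H).lowerCentralSeries j).inv_mem this
  have hbot : (x : H) ∈ (⨅ i : ℕ, (⊤ : Subgroup H).lowerCentralSeries i) := Subgroup.mem_iInf.mpr hmem
  rw [hHres, Subgroup.mem_bot] at hbot
  exact Subgroup.mem_bot.mpr (Subtype.ext hbot)

/-- Lemma 3.1 (one direction): if `G, H` are residually nilpotent polycyclic groups,
`H` is para-`G` via `φ`, and `G'` is nilpotent of class at most `c`, then `H'` is
nilpotent of class at most `c`. -/
theorem stmt11 {G H : Type*} [Group G] [Group H]
    (hGpc : IsPolycyclic G) (hHpc : IsPolycyclic H)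
    (hGres : (⨅ i : ℕ, (⊤ : Subgroup G).lowerCentralSeries i) = ⊥)
    (hHres : (⨅ i : ℕ, (⊤ : Subgroup H).lowerCentralSeries i) = ⊥)
    (φ : G →* H) (hinj : Function.Injective φ)
    (hpara : ∀ i : ℕ, (∀ h : H, ∃ g : G, φ g * h⁻¹ ∈ (⊤ : Subgroup H).lowerCentralSeries i) ∧
      (∀ g : G, φ g ∈ (⊤ : Subgroup H).lowerCentralSeries i → g ∈ (⊤ : Subgroup G).lowerCentralSeries i))
    (c : ℕ) (hG' : (⊤ : Subgroup (commutator G)).lowerCentralSeries c = ⊥) :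
    (⊤ : Subgroup (commutator H)).lowerCentralSeries c = ⊥ :=
  stmt11' hHres φ (fun i => (hpara i).1) c hG'
end

section
/- Let H be a group whose derived subgroup H' is abelian, and let G ≤ H. If γ_i(H)^n ≤ γ_i(G) for some i ≥ 2 and H = G·H', then γ_{i+1}(H)^n ≤ γ_{i+1}(G). -/
/-- The lower central series of a subgroup `G ≤ H`, viewed inside `H`. -/
def lcsSub {H : Type*} [Group H] (G : Subgroup H) (i : ℕ) : Subgroup H :=
  ((⊤ : Subgroup G).lowerCentralSeries i).map G.subtype

open scoped Pointwise commutatorElement in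
/-- If `H' ` is abelian, `G ≤ H` with `G·H' = H`, and `γ_i(H)^n ≤ γ_i(G)` for some
`i ≥ 2`, then `γ_{i+1}(H)^n ≤ γ_{i+1}(G)`.
(`lowerCentralSeries _ i` with `i ≥ 1` is the paper's `γ_{i+1}` with `i+1 ≥ 2`.) -/
theorem stmt12 {H : Type*} [Group H]
    (habel : ∀ x y : H, x ∈ commutator H → y ∈ commutator H → x * y = y * x)
    (G : Subgroup H) (hsup : G ⊔ commutator H = ⊤)
    (i : ℕ) (hi : 1 ≤ i) (n : ℕ)
    (hn : ∀ x ∈ (⊤ : Subgroup H).lowerCentralSeries i, x ^ n ∈ lcsSub G i) :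
    ∀ x ∈ (⊤ : Subgroup H).lowerCentralSeries (i + 1), x ^ n ∈ lcsSub G (i + 1) := by
  have hsub : ∀ j, 1 ≤ j → (⊤ : Subgroup H).lowerCentralSeries j ≤ commutator H := by
    intro j hj
    have := Subgroup.lowerCentralSeries_antitone (⊤ : Subgroup H) hj
    rwa [Subgroup.top_lowerCentralSeries_one] at this
  have hcommem : ∀ a h : H, ⁅a, h⁆ ∈ commutator H := by
    intro a h
    rw [commutator_def]
    exact Subgroup.commutator_mem_commutator (Subgroup.mem_top a) (Subgroup.mem_top h)
  have key : ∀ a : H, a ∈ commutator H → ∀ h : H, ∀ m : ℕ, ⁅a, h⁆ ^ m = ⁅a ^ m, h⁆ := by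
    intro a ha h m
    induction m with
    | zero => simp [commutatorElement_def]
    | succ m ih =>
      have hcom : a * ⁅a ^ m, h⁆ = ⁅a ^ m, h⁆ * a :=
        habel a ⁅a ^ m, h⁆ ha (hcommem _ _)
      have h1 : ⁅a ^ (m + 1), h⁆ = a * ⁅a ^ m, h⁆ * a⁻¹ * ⁅a, h⁆ := by
        rw [pow_succ' a m]
        simp only [commutatorElement_def]
        group
      rw [h1, hcom, pow_succ, ih]
      group
  -- the subgroup of elements of γ_{i+1}(H) with good n-th power
  set S : Subgroup H :=
    { carrier := {x | x ∈ (⊤ : Subgroup H).lowerCentralSeries (i + 1) ∧ x ^ n ∈ lcsSub G (i + 1)}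
      one_mem' := ⟨one_mem _, by simpa using (one_mem (lcsSub G (i + 1)))⟩
      mul_mem' := by
        rintro x y ⟨hx1, hx2⟩ ⟨hy1, hy2⟩
        refine ⟨mul_mem hx1 hy1, ?_⟩
        have hc : Commute x y :=
          habel x y (hsub (i + 1) (by omega) hx1) (hsub (i + 1) (by omega) hy1)
        rw [hc.mul_pow]
        exact mul_mem hx2 hy2
      inv_mem' := by
        rintro x ⟨hx1, hx2⟩
        exact ⟨inv_mem hx1, by rw [inv_pow]; exact inv_mem hx2⟩ } with hS
  have hle : (⊤ : Subgroup H).lowerCentralSeries (i + 1) ≤ S := by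
    rw [Subgroup.lowerCentralSeries_succ, Subgroup.commutator_def]
    rw [Subgroup.closure_le]
    rintro x ⟨g, hg, h, -, rfl⟩
    show ⁅g, h⁆ ∈ S
    refine ⟨?_, ?_⟩
    · rw [Subgroup.lowerCentralSeries_succ, Subgroup.commutator_def]
      exact Subgroup.subset_closure ⟨g, hg, h, Subgroup.mem_top h, rfl⟩
    have hgc : g ∈ commutator H := hsub i hi hg
    have hgn : g ^ n ∈ commutator H := pow_mem hgc n
    -- decompose h = g' * c
    have hhm : h ∈ (G : Set H) * (commutator H : Set H) := by
      rw [← Subgroup.mul_normal, hsup]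
      exact Subgroup.mem_top h
    obtain ⟨g', hg', c, hc, rfl⟩ := hhm
    have h2 : ⁅g ^ n, c⁆ = 1 := by
      rw [commutatorElement_eq_one_iff_mul_comm]
      exact habel _ _ hgn hc
    have h1 : ⁅g ^ n, g' * c⁆ = ⁅g ^ n, g'⁆ := by
      have : ⁅g ^ n, g' * c⁆ = ⁅g ^ n, g'⁆ * (g' * ⁅g ^ n, c⁆ * g'⁻¹) := by
        simp only [commutatorElement_def]
        group
      rw [this, h2]
      group
    rw [key g hgc _ n, h1]
    obtain ⟨a, ha, hae⟩ := hn g hg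
    refine ⟨⁅a, (⟨g', hg'⟩ : G)⁆, ?_, ?_⟩
    · rw [Subgroup.lowerCentralSeries_succ, Subgroup.commutator_def]
      exact Subgroup.subset_closure ⟨a, ha, ⟨g', hg'⟩, Subgroup.mem_top _, rfl⟩
    · rw [map_commutatorElement]
      rw [hae]
      rfl
  intro x hx
  exact (hle hx).2
end

section
/- Let G be a group, N ⊲ G, Q = G/N. Suppose Q is HNN-free (equivalently: for all K ≤ Q and q ∈ Q, K^q ≤ K implies K^q = K). If for every g ∈ G and every subgroup H ≤ N, H^g ≤ H implies H^g = H, then G has the same property: for every K ≤ G and g ∈ G, K^g ≤ K implies K^g = K. -/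
/-! If `K^g ≤ K`, then in `G ⧸ N` the image of `K` is conjugated into itself, hence onto itself,
and `(K ⊓ N)^g = K^g ⊓ N ≤ K ⊓ N` forces `(K ⊓ N)^g = K ⊓ N`. A subgroup `K^g ≤ K` with the same
image modulo `N` and the same intersection with `N` as `K` is all of `K`. -/

/-- The conjugate `K^g = g⁻¹ K g` of a subgroup. -/
def conjSub {G : Type*} [Group G] (g : G) (K : Subgroup G) : Subgroup G :=
  K.map (MulAut.conj g⁻¹).toMonoidHom

section conjSub

variable {G : Type*} [Group G]

lemma mem_conjSub {g x : G} {K : Subgroup G} : x ∈ conjSub g K ↔ g * x * g⁻¹ ∈ K := by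
  simp only [conjSub, Subgroup.mem_map, MulEquiv.coe_toMonoidHom, MulAut.conj_apply]
  constructor
  · rintro ⟨k, hk, rfl⟩
    simpa [mul_assoc] using hk
  · intro h
    exact ⟨g * x * g⁻¹, h, by group⟩

lemma conjSub_map {G' : Type*} [Group G'] (f : G →* G') (g : G) (K : Subgroup G) :
    (conjSub g K).map f = conjSub (f g) (K.map f) := by
  simp only [conjSub, Subgroup.map_map]
  congr 1
  ext x
  simp

lemma conjSub_inf (g : G) (H K : Subgroup G) :
    conjSub g (H ⊓ K) = conjSub g H ⊓ conjSub g K :=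
  Subgroup.map_inf_eq H K _ (MulAut.conj g⁻¹).injective

lemma conjSub_eq_of_normal (g : G) (N : Subgroup G) [N.Normal] : conjSub g N = N := by
  ext x
  rw [mem_conjSub]
  exact ⟨fun h => by simpa [mul_assoc] using ‹N.Normal›.conj_mem _ h g⁻¹,
    fun h => ‹N.Normal›.conj_mem x h g⟩

end conjSub

lemma Subgroup.eq_of_le_of_map_le_of_inf_ker_le {G G' : Type*} [Group G] [Group G']
    (f : G →* G') {A B : Subgroup G} (hAB : A ≤ B) (hmap : B.map f ≤ A.map f)
    (hker : B ⊓ f.ker ≤ A) : A = B := by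
  refine le_antisymm hAB fun b hb => ?_
  obtain ⟨a, ha, hfa⟩ := hmap (Subgroup.mem_map_of_mem f hb)
  have hab : a⁻¹ * b ∈ A :=
    hker ⟨B.mul_mem (B.inv_mem (hAB ha)) hb, by simp [hfa]⟩
  simpa using A.mul_mem ha hab

/-- Lemma 4.2 ((b) ⇒ (a)): let `N ⊲ G` and `Q = G/N`.  If `Q` is HNN-free
(`K^q ≤ K → K^q = K` for subgroups of `Q`) and `H^g ≤ H → H^g = H` for all subgroups
`H ≤ N` and `g ∈ G`, then `G` is HNN-free: `K^g ≤ K → K^g = K` for all `K ≤ G`. -/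
theorem stmt15 {G : Type*} [Group G] (N : Subgroup G) [N.Normal]
    (hQ : ∀ (K : Subgroup (G ⧸ N)) (q : G ⧸ N), conjSub q K ≤ K → conjSub q K = K)
    (hN : ∀ (g : G) (H : Subgroup G), H ≤ N → conjSub g H ≤ H → conjSub g H = H) :
    ∀ (K : Subgroup G) (g : G), conjSub g K ≤ K → conjSub g K = K := by
  intro K g hle
  have hmap : conjSub (QuotientGroup.mk' N g) (K.map (QuotientGroup.mk' N)) =
      K.map (QuotientGroup.mk' N) :=
    hQ _ _ (conjSub_map (QuotientGroup.mk' N) g K ▸ Subgroup.map_mono hle)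
  have hinf : conjSub g (K ⊓ N) = K ⊓ N := by
    refine hN g _ inf_le_right ?_
    rw [conjSub_inf, conjSub_eq_of_normal g N]
    exact inf_le_inf_right N hle
  refine Subgroup.eq_of_le_of_map_le_of_inf_ker_le (QuotientGroup.mk' N) hle ?_ ?_
  · rw [conjSub_map, hmap]
  · rw [QuotientGroup.ker_mk', ← hinf, conjSub_inf]
    exact inf_le_left
end

section
/- Let G be a group, N ⊲ G, and g ∈ G, H ≤ N with H^g ≤ H. If for every x ∈ H the subgroup ⟨x⟩^{⟨g⟩} = ⟨x^{g^k} : k ∈ ℤ⟩ is finitely generated, then H^g = H. -/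
/-- Lemma 4.2 ((c) ⇒ (b)): if `N ⊲ G`, `H ≤ N`, `g ∈ G` with `H^g ≤ H`, and for every
`x ∈ H` the subgroup `⟨x^{gᵏ} : k ∈ ℤ⟩` is finitely generated, then `H^g = H`. -/
theorem stmt16 {G : Type*} [Group G] (N : Subgroup G) [N.Normal]
    (g : G) (H : Subgroup G) (hHN : H ≤ N) (hle : conjSub g H ≤ H)
    (hfg : ∀ x ∈ H, (Subgroup.closure {y : G | ∃ k : ℤ, y = (g ^ k)⁻¹ * x * g ^ k}).FG) :
    conjSub g H = H := by
  classical
  refine le_antisymm hle fun x hx => ?_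
  -- it suffices that g * x * g⁻¹ ∈ H
  suffices h : g * x * g⁻¹ ∈ H by
    refine ⟨g * x * g⁻¹, h, ?_⟩
    simp only [MulEquiv.coe_toMonoidHom, MulAut.conj_apply]
    group
  -- positive conjugates stay in H
  have hpos : ∀ y ∈ H, ∀ k : ℕ, (g ^ k)⁻¹ * y * g ^ k ∈ H := by
    intro y hy k
    induction k with
    | zero => simpa using hy
    | succ n ih =>
      have : (g ^ (n+1))⁻¹ * y * g ^ (n+1)
          = g⁻¹ * ((g ^ n)⁻¹ * y * g ^ n) * g := by
        rw [pow_succ]; group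
      rw [this]
      have := hle ⟨(g ^ n)⁻¹ * y * g ^ n, ih, rfl⟩
      simpa [MulAut.conj_apply] using this
  set S : Set G := {y : G | ∃ k : ℤ, y = (g ^ k)⁻¹ * x * g ^ k} with hS
  set T : ℕ → Set G := fun m => {y : G | ∃ k : ℤ, -(m:ℤ) ≤ k ∧ y = (g ^ k)⁻¹ * x * g ^ k}
    with hT
  have hTmono : ∀ {m n : ℕ}, m ≤ n → T m ⊆ T n := by
    rintro m n hmn y ⟨k, hk, rfl⟩
    exact ⟨k, le_trans (by exact_mod_cast neg_le_neg (Int.ofNat_le.mpr hmn)) hk, rfl⟩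
  have claim1 : ∀ y ∈ Subgroup.closure S, ∃ m : ℕ, y ∈ Subgroup.closure (T m) := by
    intro y hy
    induction hy using Subgroup.closure_induction with
    | mem z hz =>
      obtain ⟨k, rfl⟩ := hz
      exact ⟨(-k).toNat, Subgroup.subset_closure
        ⟨k, by omega, rfl⟩⟩
    | one => exact ⟨0, one_mem _⟩
    | mul a b _ _ iha ihb =>
      obtain ⟨m1, h1⟩ := iha
      obtain ⟨m2, h2⟩ := ihb
      exact ⟨max m1 m2, mul_mem
        (Subgroup.closure_mono (hTmono (le_max_left m1 m2)) h1)
        (Subgroup.closure_mono (hTmono (le_max_right m1 m2)) h2)⟩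
    | inv a _ iha =>
      obtain ⟨m, hm⟩ := iha
      exact ⟨m, inv_mem hm⟩
  obtain ⟨F, hF⟩ := hfg x hx
  -- find uniform M
  have hchoice : ∀ t ∈ F, ∃ m : ℕ, t ∈ Subgroup.closure (T m) := fun t ht =>
    claim1 t (hF ▸ Subgroup.subset_closure ht)
  choose f hf using hchoice
  set M : ℕ := F.sup fun t => if h : t ∈ F then f t h else 0 with hM
  have hFM : ∀ t ∈ F, t ∈ Subgroup.closure (T M) := by
    intro t ht
    refine Subgroup.closure_mono (hTmono ?_) (hf t ht)
    have := Finset.le_sup (f := fun t => if h : t ∈ F then f t h else 0) ht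
    simpa [ht] using this
  have hSM : Subgroup.closure S ≤ Subgroup.closure (T M) := by
    rw [← hF]
    exact (Subgroup.closure_le _).2 fun t ht => hFM t ht
  -- the key element
  have ha : (g ^ (-(M+1:ℤ)))⁻¹ * x * g ^ (-(M+1:ℤ)) ∈ Subgroup.closure (T M) :=
    hSM (Subgroup.subset_closure ⟨-(M+1:ℤ), rfl⟩)
  -- conjugate by g^(-M)
  set φ : G →* G := (MulAut.conj (g ^ (-(M:ℤ)))).toMonoidHom with hφ
  have hφa : φ ((g ^ (-(M+1:ℤ)))⁻¹ * x * g ^ (-(M+1:ℤ))) = g * x * g⁻¹ := by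
    simp only [hφ, MulEquiv.coe_toMonoidHom, MulAut.conj_apply]
    rw [show (-(M+1:ℤ)) = -(M:ℤ) + (-1) by ring, zpow_add, zpow_neg, zpow_neg, zpow_one]
    group
  have hmem : φ ((g ^ (-(M+1:ℤ)))⁻¹ * x * g ^ (-(M+1:ℤ))) ∈ Subgroup.closure (φ '' T M) := by
    rw [← MonoidHom.map_closure]
    exact ⟨_, ha, rfl⟩
  have himg : Subgroup.closure (φ '' T M) ≤ H := by
    refine (Subgroup.closure_le _).2 ?_
    rintro y ⟨z, ⟨k, hk, rfl⟩, rfl⟩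
    have hkM : (0:ℤ) ≤ k + M := by linarith
    have : φ ((g ^ k)⁻¹ * x * g ^ k) = (g ^ (k + M))⁻¹ * x * g ^ (k + M) := by
      simp only [hφ, MulEquiv.coe_toMonoidHom, MulAut.conj_apply]
      rw [zpow_add, zpow_neg]
      group
    rw [this]
    have h2 : g ^ (k + M) = g ^ (k + M).toNat := by
      rw [← zpow_natCast, Int.toNat_of_nonneg hkM]
    rw [h2]
    exact hpos x hx _
  have := himg hmem
  rwa [hφa] at this
end

section
/- Let G be polycyclic, A ⊲ G abelian, viewed as a module over ℤ[G/A]. Then for each x ∈ G there exist monic (up to sign) polynomials α, β ∈ ℤ[s] of degrees m, n ≥ 1 such that, writing t = xA acting on A, a·α(t) = 0 and a·β(t^{-1}) = 0 for all a ∈ A; consequently ⟨a⟩^{⟨x⟩} is generated by the m+n−1 conjugates a^{x^{-(n-1)}}, …, a, …, a^{x^{m-1}}. -/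
private lemma listProd_eq_finsetProd {M : Type*} [CommMonoid M] (f : ℕ → M) (n : ℕ) :
    ((List.range n).map f).prod = ∏ i ∈ Finset.range n, f i := by
  induction n with
  | zero => simp
  | succ k ih => rw [List.prod_range_succ, Finset.prod_range_succ, ih]

private lemma key_ann {G : Type*} [Group G] (A : Subgroup G) [hN : A.Normal]
    (habel : ∀ a b : G, a ∈ A → b ∈ A → a * b = b * a) (hfg : A.FG) (y : G) :
    ∃ m : ℕ, 1 ≤ m ∧ ∃ c : ℕ → ℤ, ∀ a ∈ A,
      (((List.range m).map (fun (j : ℕ) => ((y ^ (j : ℤ))⁻¹ * a * y ^ (j : ℤ)) ^ (c j))).prod) *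
        ((y ^ (m : ℤ))⁻¹ * a * y ^ (m : ℤ)) ^ (1 : ℤ) = 1 := by
  letI : CommGroup ↥A :=
    { (inferInstance : Group ↥A) with
      mul_comm := fun a b => Subtype.ext (habel a b a.2 b.2) }
  haveI hfg' : AddGroup.FG (Additive ↥A) :=
    GroupFG.iff_add_fg.mp ((Group.fg_iff_subgroup_fg A).mpr hfg)
  haveI : Module.Finite ℤ (Additive ↥A) := Module.Finite.iff_addGroup_fg.mpr hfg'
  have hconj : ∀ a : G, a ∈ A → y⁻¹ * a * y ∈ A := fun a ha => hN.conj_mem' a ha y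
  let f : ↥A →* ↥A := MonoidHom.mk' (fun a => ⟨y⁻¹ * a * y, hconj a a.2⟩)
    (fun a b => by ext; simp only [Subgroup.coe_mul]; group)
  let φ : Module.End ℤ (Additive ↥A) := (MonoidHom.toAdditive f).toIntLinearMap
  have hφ : ∀ (j : ℕ) (v : Additive ↥A),
      ((Additive.toMul ((φ ^ j) v) : ↥A) : G)
        = (y ^ (j : ℤ))⁻¹ * ((Additive.toMul v : ↥A) : G) * y ^ (j : ℤ) := by
    intro j
    induction j with
    | zero => intro v; simp
    | succ k ih =>
      intro v
      rw [pow_succ, Module.End.mul_apply, ih (φ v)]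
      have hc : ((Additive.toMul (φ v) : ↥A) : G) = y⁻¹ * ((Additive.toMul v : ↥A) : G) * y := rfl
      rw [hc, show ((k + 1 : ℕ) : ℤ) = (k : ℤ) + 1 by push_cast; ring, zpow_add, zpow_one]
      group
  obtain ⟨p, hpm, hp0⟩ := Algebra.IsIntegral.isIntegral (R := ℤ) φ
  set P := p * Polynomial.X with hPdef
  have hPm : P.Monic := hpm.mul Polynomial.monic_X
  have hdeg : 1 ≤ P.natDegree := by
    rw [hPdef, hpm.natDegree_mul Polynomial.monic_X, Polynomial.natDegree_X]; omega
  have hPa : Polynomial.aeval φ P = 0 := by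
    have h : Polynomial.aeval φ p = 0 := by rwa [Polynomial.aeval_def]
    rw [hPdef, map_mul, h, zero_mul]
  refine ⟨P.natDegree, hdeg, fun j => P.coeff j, fun a ha => ?_⟩
  set v : Additive ↥A := Additive.ofMul (⟨a, ha⟩ : ↥A) with hv
  have h1 : ∑ i ∈ Finset.range (P.natDegree + 1), P.coeff i • ((φ ^ i) v) = 0 := by
    have h0 : (∑ i ∈ Finset.range (P.natDegree + 1), P.coeff i • φ ^ i) v
        = (0 : Module.End ℤ (Additive ↥A)) v := by
      rw [← Polynomial.aeval_eq_sum_range, hPa]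
    simpa using h0
  have h2 : (∏ i ∈ Finset.range (P.natDegree + 1),
      (Additive.toMul ((φ ^ i) v)) ^ (P.coeff i)) = (1 : ↥A) := by
    have h := congrArg Additive.toMul h1
    simpa [toMul_sum, toMul_zsmul] using h
  rw [Finset.prod_range_succ, hPm.coeff_natDegree] at h2
  have hmain : (((List.range P.natDegree).map
        (fun i => (Additive.toMul ((φ ^ i) v)) ^ (P.coeff i))).prod) *
      (Additive.toMul ((φ ^ P.natDegree) v)) ^ (1 : ℤ) = (1 : ↥A) := by
    rw [listProd_eq_finsetProd]; exact h2
  have hφ' : ∀ j : ℕ, ((Additive.toMul ((φ ^ j) v) : ↥A) : G)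
      = (y ^ (j : ℤ))⁻¹ * a * y ^ (j : ℤ) := fun j => hφ j v
  have hfun : ∀ i : ℕ, (((Additive.toMul ((φ ^ i) v)) ^ (P.coeff i) : ↥A) : G)
      = ((y ^ (i : ℤ))⁻¹ * a * y ^ (i : ℤ)) ^ (P.coeff i) := by
    intro i
    rw [SubgroupClass.coe_zpow, hφ' i]
  have hmaps : (List.range P.natDegree).map
        (fun (j : ℕ) => ((y ^ (j : ℤ))⁻¹ * a * y ^ (j : ℤ)) ^ (P.coeff j))
      = (List.range P.natDegree).map
        (fun (i : ℕ) => (((Additive.toMul ((φ ^ i) v)) ^ (P.coeff i) : ↥A) : G)) :=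
    List.map_congr_left fun i _ => (hfun i).symm
  have e1 : ((List.range P.natDegree).map
        (fun i => (((Additive.toMul ((φ ^ i) v)) ^ (P.coeff i) : ↥A) : G))).prod
      = ((((List.range P.natDegree).map
          (fun i => ((Additive.toMul ((φ ^ i) v)) ^ (P.coeff i) : ↥A))).prod : ↥A) : G) := by
    rw [SubmonoidClass.coe_list_prod, List.map_map]
    rfl
  rw [hmaps, e1, ← hφ' P.natDegree, ← SubgroupClass.coe_zpow, ← Subgroup.coe_mul, hmain,
    Subgroup.coe_one]

private lemma closure_lemma {G : Type*} [Group G] {A : Subgroup G} [hN : A.Normal] {x : G}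
    {m n : ℕ} (hm : 1 ≤ m) (hn : 1 ≤ n) {c d : ℕ → ℤ}
    (hc : ∀ a ∈ A,
      (((List.range m).map (fun (j : ℕ) => ((x ^ (j : ℤ))⁻¹ * a * x ^ (j : ℤ)) ^ (c j))).prod) *
        ((x ^ (m : ℤ))⁻¹ * a * x ^ (m : ℤ)) ^ (1 : ℤ) = 1)
    (hd : ∀ a ∈ A,
      (((List.range n).map (fun (j : ℕ) => (x ^ (j : ℤ) * a * (x ^ (j : ℤ))⁻¹) ^ (d j))).prod) *
        (x ^ (n : ℤ) * a * (x ^ (n : ℤ))⁻¹) ^ (1 : ℤ) = 1)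
    {a : G} (ha : a ∈ A) :
    Subgroup.closure {y : G | ∃ k : ℤ, y = (x ^ k)⁻¹ * a * x ^ k} =
      Subgroup.closure
        ((fun k : ℤ => (x ^ k)⁻¹ * a * x ^ k) '' Set.Icc (-(n : ℤ) + 1) ((m : ℤ) - 1)) := by
  set T : ℤ → G := fun k => (x ^ k)⁻¹ * a * x ^ k with hT
  set H := Subgroup.closure (T '' Set.Icc (-(n : ℤ) + 1) ((m : ℤ) - 1)) with hH
  have hTA : ∀ k : ℤ, T k ∈ A := fun k => hN.conj_mem' a ha (x ^ k)
  have hconjT : ∀ k j : ℤ, (x ^ j)⁻¹ * T k * x ^ j = T (k + j) := by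
    intro k j; simp only [hT]; rw [zpow_add]; group
  have hconjT' : ∀ k j : ℤ, x ^ j * T k * (x ^ j)⁻¹ = T (k - j) := by
    intro k j; simp only [hT]; rw [sub_eq_add_neg, zpow_add, zpow_neg]; group
  have hupmem : ∀ k : ℤ, (∀ j : ℕ, j < m → T (k + j) ∈ H) → T (k + m) ∈ H := by
    intro k hjH
    have h := hc (T k) (hTA k)
    simp only [hconjT, zpow_one] at h
    have hprod : ((List.range m).map (fun j : ℕ => T (k + j) ^ (c j))).prod ∈ H := by
      apply list_prod_mem
      intro z hz
      obtain ⟨j, hj, rfl⟩ := List.mem_map.mp hz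
      exact zpow_mem (hjH j (List.mem_range.mp hj)) _
    have : T (k + m) = (((List.range m).map (fun j : ℕ => T (k + j) ^ (c j))).prod)⁻¹ :=
      eq_inv_of_mul_eq_one_right h
    rw [this]
    exact inv_mem hprod
  have hdownmem : ∀ k : ℤ, (∀ j : ℕ, j < n → T (k - j) ∈ H) → T (k - n) ∈ H := by
    intro k hjH
    have h := hd (T k) (hTA k)
    simp only [hconjT', zpow_one] at h
    have hprod : ((List.range n).map (fun j : ℕ => T (k - j) ^ (d j))).prod ∈ H := by
      apply list_prod_mem
      intro z hz
      obtain ⟨j, hj, rfl⟩ := List.mem_map.mp hz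
      exact zpow_mem (hjH j (List.mem_range.mp hj)) _
    have : T (k - n) = (((List.range n).map (fun j : ℕ => T (k - j) ^ (d j))).prod)⁻¹ :=
      eq_inv_of_mul_eq_one_right h
    rw [this]
    exact inv_mem hprod
  have hbase : ∀ k : ℤ, -(n : ℤ) + 1 ≤ k → k ≤ (m : ℤ) - 1 → T k ∈ H :=
    fun k h1 h2 => Subgroup.subset_closure ⟨k, ⟨h1, h2⟩, rfl⟩
  have hup : ∀ i : ℕ, ∀ k : ℤ, -(n : ℤ) + 1 ≤ k → k ≤ (m : ℤ) - 1 + i → T k ∈ H := by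
    intro i
    induction i with
    | zero => intro k h1 h2; exact hbase k h1 (by omega)
    | succ i ih =>
      intro k h1 h2
      by_cases hk : k ≤ (m : ℤ) - 1 + i
      · exact ih k h1 hk
      · rw [show k = (i : ℤ) + m by omega]
        apply hupmem
        intro j hj
        exact ih ((i : ℤ) + j) (by omega) (by omega)
  have hdown : ∀ i : ℕ, ∀ k : ℤ, -(n : ℤ) + 1 - i ≤ k → k ≤ (m : ℤ) - 1 → T k ∈ H := by
    intro i
    induction i with
    | zero => intro k h1 h2; exact hbase k (by omega) h2
    | succ i ih =>
      intro k h1 h2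
      by_cases hk : -(n : ℤ) + 1 - i ≤ k
      · exact ih k hk h2
      · rw [show k = (-(i : ℤ)) - n by omega]
        apply hdownmem
        intro j hj
        exact ih ((-(i : ℤ)) - j) (by omega) (by omega)
  have hmain : ∀ k : ℤ, T k ∈ H := by
    intro k
    rcases le_or_gt k ((m : ℤ) - 1) with h | h
    · rcases le_or_gt (-(n : ℤ) + 1) k with h2 | h2
      · exact hbase k h2 h
      · exact hdown ((-(n : ℤ) + 1 - k).toNat) k (by omega) h
    · exact hup ((k - ((m : ℤ) - 1)).toNat) k (by omega) (by omega)
  apply le_antisymm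
  · rw [Subgroup.closure_le]
    rintro z ⟨k, rfl⟩
    exact hmain k
  · apply Subgroup.closure_mono
    rintro z ⟨k, _, rfl⟩
    exact ⟨k, rfl⟩

/-- Lemma 4.3: let `G` be polycyclic, `A ⊲ G` abelian, and `x ∈ G`.  Writing the action of
`t = xA` on `A` by conjugation (`a·t = x⁻¹ a x`), there are polynomials
`α(t) = c₀ + c₁t + … + c_{m-1}t^{m-1} ± t^m` and `β(t) = d₀ + … + d_{n-1}t^{n-1} ± t^n`
with `m, n ≥ 1` annihilating every `a ∈ A` (at `t` and `t⁻¹` respectively); consequently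
`⟨a⟩^⟨x⟩` is generated by the `m + n - 1` conjugates `a^{x^{-(n-1)}}, …, a, …, a^{x^{m-1}}`. -/
theorem stmt17 {G : Type*} [Group G] (hG : IsPolycyclic G)
    (A : Subgroup G) [A.Normal] (habel : ∀ a b : G, a ∈ A → b ∈ A → a * b = b * a)
    (x : G) :
    ∃ m n : ℕ, 1 ≤ m ∧ 1 ≤ n ∧ ∃ (c d : ℕ → ℤ) (ε δ : ℤ),
      (ε = 1 ∨ ε = -1) ∧ (δ = 1 ∨ δ = -1) ∧
      (∀ a ∈ A,
        (((List.range m).map (fun (j : ℕ) => ((x ^ (j : ℤ))⁻¹ * a * x ^ (j : ℤ)) ^ (c j))).prod) *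
          ((x ^ (m : ℤ))⁻¹ * a * x ^ (m : ℤ)) ^ ε = 1) ∧
      (∀ a ∈ A,
        (((List.range n).map (fun (j : ℕ) => (x ^ (j : ℤ) * a * (x ^ (j : ℤ))⁻¹) ^ (d j))).prod) *
          (x ^ (n : ℤ) * a * (x ^ (n : ℤ))⁻¹) ^ δ = 1) ∧
      (∀ a ∈ A,
        Subgroup.closure {y : G | ∃ k : ℤ, y = (x ^ k)⁻¹ * a * x ^ k} =
          Subgroup.closure
            ((fun k : ℤ => (x ^ k)⁻¹ * a * x ^ k) '' Set.Icc (-(n : ℤ) + 1) ((m : ℤ) - 1))) := by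
  obtain ⟨m, hm, c, hc⟩ := key_ann A habel (hG.2 A) x
  obtain ⟨n, hn, d, hd0⟩ := key_ann A habel (hG.2 A) x⁻¹
  have hd : ∀ a ∈ A,
      (((List.range n).map (fun (j : ℕ) => (x ^ (j : ℤ) * a * (x ^ (j : ℤ))⁻¹) ^ (d j))).prod) *
        (x ^ (n : ℤ) * a * (x ^ (n : ℤ))⁻¹) ^ (1 : ℤ) = 1 := by
    intro a ha
    have h := hd0 a ha
    simpa only [inv_zpow, inv_inv] using h
  exact ⟨m, n, hm, hn, c, d, 1, 1, Or.inl rfl, Or.inl rfl, hc, hd,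
    fun a ha => closure_lemma hm hn hc hd ha⟩
end

section
/- Let N be a finitely generated torsion-free nilpotent group of class c, α ∈ Aut(N) such that the automorphism induced on N/N' satisfies (tα-induced map)^b acting trivially on N/N' for b a positive integer (i.e., x^{t^b} N' = x N' for all x, where t acts by α). Then K = N ⋊ ⟨t^b⟩ is a finitely generated torsion-free nilpotent group. -/
open Subgroup
open scoped commutatorElement

local notation "lowerCentralSeries " G:max n:max => Subgroup.lowerCentralSeries (⊤ : Subgroup G) n

/-- The pre-2025 Mathlib definition `Monoid.IsTorsionFree` (removed since). -/
def Monoid.IsTorsionFree (G : Type*) [Monoid G] : Prop :=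
  ∀ g : G, g ≠ 1 → ¬IsOfFinOrder g

private lemma lcsSucc {G : Type*} [Group G] (n : ℕ) :
    lowerCentralSeries G (n + 1) = ⁅lowerCentralSeries G n, ⊤⁆ := rfl

private lemma auxMapLcs {G H : Type*} [Group G] [Group H] (f : G →* H)
    (hf : Function.Surjective f) (n : ℕ) :
    Subgroup.map f (lowerCentralSeries G n) = lowerCentralSeries H n := by
  induction n with
  | zero => simpa using Subgroup.map_top_of_surjective f hf
  | succ n ih =>
      rw [lcsSucc, lcsSucc, Subgroup.map_commutator, ih,
        Subgroup.map_top_of_surjective f hf]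

private lemma auxLcsComm : ∀ (j : ℕ) {G : Type*} [Group G] (i : ℕ),
    ⁅lowerCentralSeries G i, lowerCentralSeries G j⁆ ≤ lowerCentralSeries G (i + j + 1) := by
  intro j
  induction j with
  | zero =>
      intro G _ i
      simpa [lcsSucc] using le_refl (⁅lowerCentralSeries G i, (⊤ : Subgroup G)⁆)
  | succ j ih =>
      intro G _ i
      set H := lowerCentralSeries G (i + (j+1) + 1) with hH
      let π := QuotientGroup.mk' H
      have hπ : Function.Surjective π := QuotientGroup.mk'_surjective H
      set Q := G ⧸ H
      have hbot : lowerCentralSeries Q (i + (j+1) + 1) = ⊥ := by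
        rw [← auxMapLcs π hπ, Subgroup.map_eq_bot_iff, QuotientGroup.ker_mk']
      have key : ⁅lowerCentralSeries Q i, lowerCentralSeries Q (j+1)⁆ = ⊥ := by
        rw [lcsSucc, Subgroup.commutator_comm]
        apply Subgroup.commutator_commutator_eq_bot_of_rotate
        · rw [Subgroup.commutator_comm (⊤ : Subgroup Q), ← lcsSucc]
          rw [eq_bot_iff, ← hbot]
          have := ih (G := Q) (i + 1)
          calc ⁅lowerCentralSeries Q (i+1), lowerCentralSeries Q j⁆
              ≤ lowerCentralSeries Q (i + 1 + j + 1) := ih (i+1)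
            _ = lowerCentralSeries Q (i + (j+1) + 1) := by ring_nf
        · rw [eq_bot_iff, ← hbot]
          calc ⁅⁅lowerCentralSeries Q i, lowerCentralSeries Q j⁆, (⊤ : Subgroup Q)⁆
              ≤ ⁅lowerCentralSeries Q (i + j + 1), (⊤ : Subgroup Q)⁆ :=
                Subgroup.commutator_mono (ih i) le_rfl
            _ = lowerCentralSeries Q (i + j + 1 + 1) := (lcsSucc _).symm
            _ = lowerCentralSeries Q (i + (j+1) + 1) := by ring_nf
      have : Subgroup.map π ⁅lowerCentralSeries G i, lowerCentralSeries G (j+1)⁆ = ⊥ := by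
        rw [Subgroup.map_commutator, auxMapLcs π hπ, auxMapLcs π hπ, key]
      rw [Subgroup.map_eq_bot_iff, QuotientGroup.ker_mk'] at this
      exact this

private lemma auxCalc1 {Q : Type*} [Group Q] (a x z : Q) (ha : ∀ q, a * q = q * a) :
    ⁅a * x, z⁆ = ⁅x, z⁆ := by
  have h1 : a * x * z * (a * x)⁻¹ * z⁻¹ = a * (x * z * x⁻¹) * a⁻¹ * z⁻¹ := by group
  rw [commutatorElement_def, commutatorElement_def, h1, ha (x * z * x⁻¹),
    mul_inv_cancel_right]

private lemma auxCalc2 {Q : Type*} [Group Q] (x y b : Q) (hxb : x * b = b * x)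
    (hbc : b * ⁅x, y⁆ = ⁅x, y⁆ * b) : ⁅x, b * y⁆ = ⁅x, y⁆ := by
  have h1 : x * (b * y) * x⁻¹ * (b * y)⁻¹ = x * b * (y * x⁻¹ * y⁻¹) * b⁻¹ := by group
  have h2 : b * x * (y * x⁻¹ * y⁻¹) * b⁻¹ = b * ⁅x, y⁆ * b⁻¹ := by
    rw [commutatorElement_def]; group
  rw [commutatorElement_def, h1, hxb, h2, hbc, mul_inv_cancel_right]

/-- key lemma: automorphism trivial on abelianization is trivial on all lower
central factors -/
private lemma auxKey {N : Type*} [Group N] (β : MulAut N)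
    (h : ∀ x : N, β x * x⁻¹ ∈ lowerCentralSeries N 1) :
    ∀ i : ℕ, ∀ x ∈ lowerCentralSeries N i, β x * x⁻¹ ∈ lowerCentralSeries N (i + 1) := by
  intro i
  induction i with
  | zero => intro x _; exact h x
  | succ i ih =>
      set H := lowerCentralSeries N (i + 2) with hH
      let π := QuotientGroup.mk' H
      have hπ : Function.Surjective π := QuotientGroup.mk'_surjective H
      have hcentral : ∀ g ∈ Subgroup.map π (lowerCentralSeries N (i + 1)), ∀ q : N ⧸ H,
          g * q = q * g := by
        intro g hg q
        have hb : ⁅Subgroup.map π (lowerCentralSeries N (i+1)), (⊤ : Subgroup (N ⧸ H))⁆ = ⊥ := by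
          rw [← Subgroup.map_top_of_surjective π hπ, ← Subgroup.map_commutator,
            ← lcsSucc, Subgroup.map_eq_bot_iff, QuotientGroup.ker_mk']
        have : ⁅g, q⁆ ∈ (⊥ : Subgroup (N ⧸ H)) := by
          rw [← hb]; exact Subgroup.commutator_mem_commutator hg (Subgroup.mem_top q)
        rw [Subgroup.mem_bot, commutatorElement_eq_one_iff_mul_comm] at this
        exact this
      have hgen : lowerCentralSeries N (i + 1) ≤
          MonoidHom.eqLocus (π.comp β.toMonoidHom) π := by
        rw [lcsSucc, Subgroup.commutator_le]
        intro x hx y _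
        show π (β ⁅x, y⁆) = π ⁅x, y⁆
        have hβ : β ⁅x, y⁆ = ⁅β x, β y⁆ := map_commutatorElement β.toMonoidHom x y
        -- a := π (β x * x⁻¹), central
        have hax : β x * x⁻¹ ∈ lowerCentralSeries N (i + 1) := ih x hx
        have hby : β y * y⁻¹ ∈ lowerCentralSeries N 1 := h y
        have hfa : π (β x) = π (β x * x⁻¹) * π x := by
          rw [← map_mul]; group
        have hfb : π (β y) = π (β y * y⁻¹) * π y := by
          rw [← map_mul]; group
        have ha : ∀ q, π (β x * x⁻¹) * q = q * π (β x * x⁻¹) :=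
          hcentral _ (Subgroup.mem_map_of_mem π hax) 
        -- x̄ commutes with b̄ since ⁅lcs i, lcs 1⁆ ≤ lcs (i+2)
        have hxb : π x * π (β y * y⁻¹) = π (β y * y⁻¹) * π x := by
          have : ⁅π x, π (β y * y⁻¹)⁆ ∈ (⊥ : Subgroup (N ⧸ H)) := by
            have hle : ⁅lowerCentralSeries (N ⧸ H) i, lowerCentralSeries (N ⧸ H) 1⁆ ≤
                lowerCentralSeries (N ⧸ H) (i + 2) := by
              have := auxLcsComm 1 (G := N ⧸ H) i
              simpa using this
            have hbot2 : lowerCentralSeries (N ⧸ H) (i + 2) = ⊥ := by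
              rw [← auxMapLcs π hπ, Subgroup.map_eq_bot_iff, QuotientGroup.ker_mk']
            rw [← hbot2]
            refine hle (Subgroup.commutator_mem_commutator ?_ ?_)
            · rw [← auxMapLcs π hπ]; exact Subgroup.mem_map_of_mem π hx
            · rw [← auxMapLcs π hπ]; exact Subgroup.mem_map_of_mem π hby
          rw [Subgroup.mem_bot, commutatorElement_eq_one_iff_mul_comm] at this
          exact this
        -- b̄ commutes with ⁅x̄, ȳ⁆ since the latter is central
        have hbc : π (β y * y⁻¹) * ⁅π x, π y⁆ = ⁅π x, π y⁆ * π (β y * y⁻¹) := by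
          have hcm : ⁅π x, π y⁆ ∈ Subgroup.map π (lowerCentralSeries N (i + 1)) := by
            rw [← map_commutatorElement]
            refine Subgroup.mem_map_of_mem π ?_
            rw [lcsSucc]
            exact Subgroup.commutator_mem_commutator hx (Subgroup.mem_top y)
          exact (hcentral _ hcm _).symm
        rw [hβ, map_commutatorElement, map_commutatorElement, hfa, hfb,
          auxCalc1 _ _ _ ha, auxCalc2 (π x) (π y) (π (β y * y⁻¹)) hxb hbc]
      intro z hz
      have := hgen hz
      have h1 : π (β z) = π z := this
      have : π (β z * z⁻¹) = 1 := by rw [map_mul, map_inv, h1, mul_inv_cancel]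
      have : β z * z⁻¹ ∈ MonoidHom.ker π := this
      rwa [QuotientGroup.ker_mk'] at this

/-- extension of the key lemma to all integer powers of β -/
private lemma auxKeyZ {N : Type*} [Group N] (β : MulAut N)
    (h : ∀ x : N, β x * x⁻¹ ∈ lowerCentralSeries N 1) (i : ℕ) :
    ∀ z : ℤ, ∀ x ∈ lowerCentralSeries N i, (β ^ z) x * x⁻¹ ∈ lowerCentralSeries N (i + 1) := by
  have hpres : ∀ (γ : MulAut N), ∀ x ∈ lowerCentralSeries N i, γ x ∈ lowerCentralSeries N i :=
    fun γ x hx => lowerCentralSeries.map γ.toMonoidHom i (Subgroup.mem_map_of_mem _ hx)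
  have hinv : ∀ x ∈ lowerCentralSeries N i, β⁻¹ x * x⁻¹ ∈ lowerCentralSeries N (i + 1) := by
    intro x hx
    have hy : β⁻¹ x ∈ lowerCentralSeries N i := hpres β⁻¹ x hx
    have := auxKey β h i (β⁻¹ x) hy
    rw [MulAut.apply_inv_self] at this
    have := (lowerCentralSeries N (i+1)).inv_mem this
    simpa using this
  intro z
  induction z using Int.induction_on with
  | zero => intro x hx; simpa using (lowerCentralSeries N (i+1)).one_mem
  | succ k ihk =>
      intro x hx
      have hk : (β ^ (k : ℤ)) x ∈ lowerCentralSeries N i := by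
        have h1 := ihk x hx
        have : (β ^ (k : ℤ)) x = ((β ^ (k : ℤ)) x * x⁻¹) * x := by group
        rw [this]
        exact (lowerCentralSeries N i).mul_mem
          (Subgroup.lowerCentralSeries_antitone ⊤ (Nat.le_succ i) h1) hx
      have h2 : (β ^ ((k : ℤ) + 1)) x = β ((β ^ (k : ℤ)) x) := by
        rw [show (k : ℤ) + 1 = 1 + (k : ℤ) by ring, zpow_one_add, MulAut.mul_apply]
      have h3 : β ((β ^ (k : ℤ)) x) * ((β ^ (k : ℤ)) x)⁻¹ ∈ lowerCentralSeries N (i + 1) :=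
        auxKey β h i _ hk
      have h4 := ihk x hx
      have : (β ^ ((k : ℤ) + 1)) x * x⁻¹ =
          (β ((β ^ (k : ℤ)) x) * ((β ^ (k : ℤ)) x)⁻¹) * ((β ^ (k : ℤ)) x * x⁻¹) := by
        rw [h2]; group
      rw [this]
      exact (lowerCentralSeries N (i+1)).mul_mem h3 h4
  | pred k ihk =>
      intro x hx
      have hk : (β ^ (-(k : ℤ))) x ∈ lowerCentralSeries N i := by
        have h1 := ihk x hx
        have : (β ^ (-(k : ℤ))) x = ((β ^ (-(k : ℤ))) x * x⁻¹) * x := by group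
        rw [this]
        exact (lowerCentralSeries N i).mul_mem
          (Subgroup.lowerCentralSeries_antitone ⊤ (Nat.le_succ i) h1) hx
      have h2 : (β ^ (-(k : ℤ) - 1)) x = β⁻¹ ((β ^ (-(k : ℤ))) x) := by
        rw [show -(k : ℤ) - 1 = -1 + -(k : ℤ) by ring, zpow_add, zpow_neg_one, MulAut.mul_apply]
      have h3 : β⁻¹ ((β ^ (-(k : ℤ))) x) * ((β ^ (-(k : ℤ))) x)⁻¹ ∈
          lowerCentralSeries N (i + 1) := hinv _ hk
      have h4 := ihk x hx
      have : (β ^ (-(k : ℤ) - 1)) x * x⁻¹ =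
          (β⁻¹ ((β ^ (-(k : ℤ))) x) * ((β ^ (-(k : ℤ))) x)⁻¹) * ((β ^ (-(k : ℤ))) x * x⁻¹) := by
        rw [h2]; group
      rw [this]
      exact (lowerCentralSeries N (i+1)).mul_mem h3 h4

open SemidirectProduct in
/-- Let `N` be a finitely generated torsion-free nilpotent group (of class `c`) and
`α ∈ Aut(N)` such that `α^b` induces the identity on `N/N'` for some `b ≥ 1`.  Then
`K = N ⋊ ⟨t^b⟩` (i.e. `N ⋊ ℤ` with the generator acting by `α^b`) is a finitely
generated torsion-free nilpotent group. -/
theorem stmt19 {N : Type*} [Group N] (hfg : Group.FG N) (htf : Monoid.IsTorsionFree N)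
    [Group.IsNilpotent N] (c : ℕ) (hc : Group.nilpotencyClass N = c)
    (α : MulAut N) (b : ℕ) (hb : 0 < b)
    (h : ∀ x : N, (α ^ b) x * x⁻¹ ∈ commutator N) :
    Group.FG (N ⋊[zpowersHom (MulAut N) (α ^ b)] Multiplicative ℤ) ∧
      Monoid.IsTorsionFree (N ⋊[zpowersHom (MulAut N) (α ^ b)] Multiplicative ℤ) ∧
      Group.IsNilpotent (N ⋊[zpowersHom (MulAut N) (α ^ b)] Multiplicative ℤ) := by
  have hβ : ∀ x : N, (α ^ b) x * x⁻¹ ∈ lowerCentralSeries N 1 := by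
    intro x; rw [Subgroup.lowerCentralSeries_one]; exact h x
  refine ⟨?_, ?_, ?_⟩
  · -- finitely generated
    obtain ⟨S, hScl, hSfin⟩ := Group.fg_iff.mp hfg
    refine Group.fg_iff.mpr ⟨(inl '' S) ∪ {inr (Multiplicative.ofAdd 1)}, ?_,
      (hSfin.image _).union (Set.finite_singleton _)⟩
    rw [eq_top_iff]
    intro g _
    rw [← inl_left_mul_inr_right g]
    refine Subgroup.mul_mem _ ?_ ?_
    · have h1 : (inl g.left : N ⋊[zpowersHom (MulAut N) (α ^ b)] Multiplicative ℤ) ∈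
          Subgroup.map inl (Subgroup.closure S) :=
        Subgroup.mem_map_of_mem inl (hScl ▸ Subgroup.mem_top g.left)
      rw [MonoidHom.map_closure] at h1
      exact Subgroup.closure_mono Set.subset_union_left h1
    · have h2 : (inr g.right : N ⋊[zpowersHom (MulAut N) (α ^ b)] Multiplicative ℤ)
          = (inr (Multiplicative.ofAdd 1)) ^ (g.right.toAdd) := by
        rw [← map_zpow]
        congr 1
        apply Multiplicative.toAdd.injective
        rw [toAdd_zpow]
        simp
      rw [h2]
      exact Subgroup.zpow_mem _
        (Subgroup.subset_closure (Set.mem_union_right _ (Set.mem_singleton _))) _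
  · -- torsion free
    intro g hg hfin
    have hr : IsOfFinOrder (rightHom g) := rightHom.isOfFinOrder hfin
    have hr1 : rightHom g = 1 := by
      obtain ⟨m, hm, hpow⟩ := isOfFinOrder_iff_pow_eq_one.mp hr
      have : ((rightHom g) ^ m).toAdd = (0 : ℤ) := by rw [hpow]; rfl
      rw [toAdd_pow] at this
      rcases smul_eq_zero.mp this with h' | h'
      · exact absurd h' (by exact_mod_cast hm.ne')
      · apply Multiplicative.toAdd.injective; simpa using h'
    have hker : g ∈ (inl : N →* N ⋊[zpowersHom (MulAut N) (α ^ b)] Multiplicative ℤ).range := by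
      rw [range_inl_eq_ker_rightHom]; exact hr1
    obtain ⟨m0, rfl⟩ := hker
    obtain ⟨n, hn, hpow⟩ := isOfFinOrder_iff_pow_eq_one.mp hfin
    have hm0 : m0 ^ n = 1 := by
      have heq : (inl (m0 ^ n) : N ⋊[zpowersHom (MulAut N) (α ^ b)] Multiplicative ℤ)
          = inl 1 := by
        rw [map_one, map_pow (inl : N →* N ⋊[zpowersHom (MulAut N) (α ^ b)] Multiplicative ℤ) m0 n]
        exact hpow
      exact inl_injective heq
    have hm0ne : m0 ≠ 1 := fun h' => hg (by rw [h', map_one])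
    exact htf m0 hm0ne (isOfFinOrder_iff_pow_eq_one.mpr ⟨n, hn, hm0⟩)
  · -- nilpotent
    have key : ∀ i : ℕ,
        lowerCentralSeries (N ⋊[zpowersHom (MulAut N) (α ^ b)] Multiplicative ℤ) (i + 1) ≤
        Subgroup.map (inl : N →* N ⋊[zpowersHom (MulAut N) (α ^ b)] Multiplicative ℤ)
          (lowerCentralSeries N i) := by
      intro i
      induction i with
      | zero =>
          rw [lcsSucc 0]
          rw [Subgroup.commutator_le]
          intro g1 _ g2 _
          have hrange : Subgroup.map
              (inl : N →* N ⋊[zpowersHom (MulAut N) (α ^ b)] Multiplicative ℤ)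
              (⊤ : Subgroup N) = MonoidHom.range inl := by
            rw [MonoidHom.range_eq_map]
          rw [Subgroup.lowerCentralSeries_zero, hrange, range_inl_eq_ker_rightHom]
          show rightHom ⁅g1, g2⁆ = 1
          rw [map_commutatorElement]
          exact commutatorElement_eq_one_iff_mul_comm.mpr (mul_comm _ _)
      | succ i ih =>
          rw [lcsSucc (i + 1)]
          refine le_trans (Subgroup.commutator_mono ih le_rfl) ?_
          rw [Subgroup.commutator_le]
          rintro g1 hg1 g2 _
          obtain ⟨x, hx, rfl⟩ := hg1
          have hsplit : ∀ a u v : N ⋊[zpowersHom (MulAut N) (α ^ b)] Multiplicative ℤ,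
              ⁅a, u * v⁆ = ⁅a, u⁆ * (u * ⁅a, v⁆ * u⁻¹) := by
            intro a u v
            simp only [commutatorElement_def]
            group
          rw [← inl_left_mul_inr_right g2, hsplit]
          refine Subgroup.mul_mem _ ?_ ?_
          · rw [← map_commutatorElement]
            refine Subgroup.mem_map_of_mem inl ?_
            rw [lcsSucc i]
            exact Subgroup.commutator_mem_commutator hx (Subgroup.mem_top _)
          · have hc2 : ⁅(inl x : N ⋊[zpowersHom (MulAut N) (α ^ b)] Multiplicative ℤ),
                (inr g2.right : N ⋊[zpowersHom (MulAut N) (α ^ b)] Multiplicative ℤ)⁆ =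
                inl (x * ((zpowersHom (MulAut N) (α ^ b) g2.right) x)⁻¹) := by
              ext <;> simp [commutatorElement_def]
            have hmem : x * ((zpowersHom (MulAut N) (α ^ b) g2.right) x)⁻¹ ∈
                lowerCentralSeries N (i + 1) := by
              have h1 := auxKeyZ (α ^ b) hβ i g2.right.toAdd x hx
              rw [zpowersHom_apply]
              have h2 := (lowerCentralSeries N (i + 1)).inv_mem h1
              simpa using h2
            rw [hc2]
            have hconj : (inl g2.left : N ⋊[zpowersHom (MulAut N) (α ^ b)] Multiplicative ℤ) *
                inl (x * ((zpowersHom (MulAut N) (α ^ b) g2.right) x)⁻¹) * (inl g2.left)⁻¹ =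
                inl (g2.left * (x * ((zpowersHom (MulAut N) (α ^ b) g2.right) x)⁻¹) *
                  g2.left⁻¹) := by
              ext <;> simp [mul_assoc]
            rw [hconj]
            exact Subgroup.mem_map_of_mem inl
              ((lowerCentralSeries_normal ⊤ (i + 1)).conj_mem _ hmem g2.left)
    rw [Subgroup.nilpotent_iff_lowerCentralSeries]
    refine ⟨Group.nilpotencyClass N + 1, ?_⟩
    rw [eq_bot_iff]
    refine le_trans (key _) ?_
    rw [Subgroup.lowerCentralSeries_nilpotencyClass, Subgroup.map_bot]
end
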